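/- arXiv:2506.10478 — 8 statements merged into one kernel-verified Lean document; each statement's English description precedes it below -/
import Mathlib

section
/- For every integer n ≥ 1, k_4(T(n,4)) − k_4(T(n−1,4)) = k_3(T(⌊3n/4⌋,3)). -/
open Finset SimpleGraph

/-- `k_t(G)`: the number of `t`-cliques of `G`. -/
noncomputable def cliqueCount {V : Type*} (G : SimpleGraph V) (t : ℕ) : ℕ :=
  Nat.card {s : Finset V // G.IsNClique t s}

lemma clique_card (n r : ℕ) (hr : 0 < r) :
    ((turanGraph n r).cliqueFinset r).card
      = ∏ i : Fin r, (univ.filter (fun v : Fin n => (v : ℕ) % r = (i : ℕ))).card := by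
  classical
  rw [← Fintype.card_piFinset]
  refine (Finset.card_bij (fun f _ => Finset.image f univ) ?_ ?_ ?_).symm
  · intro f hf
    simp only [Fintype.mem_piFinset, Finset.mem_filter, Finset.mem_univ, true_and] at hf
    have hinj : Function.Injective f := by
      intro i j hij
      exact Fin.ext (by rw [← hf i, ← hf j, hij])
    rw [mem_cliqueFinset_iff, isNClique_iff]
    constructor
    · intro x hx y hy hxy
      obtain ⟨i, -, rfl⟩ := mem_image.mp (mem_coe.mp hx)
      obtain ⟨j, -, rfl⟩ := mem_image.mp (mem_coe.mp hy)
      show (f i : ℕ) % r ≠ (f j : ℕ) % r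
      rw [hf i, hf j]
      intro h
      exact hxy (by rw [Fin.ext h])
    · rw [card_image_of_injective _ hinj, card_univ, Fintype.card_fin]
  · intro f hf g hg h
    simp only [Fintype.mem_piFinset, Finset.mem_filter, Finset.mem_univ, true_and] at hf hg
    funext i
    have h' : Finset.image f univ = Finset.image g univ := h
    have : f i ∈ Finset.image g univ := h' ▸ mem_image_of_mem f (mem_univ i)
    obtain ⟨j, _, hj⟩ := mem_image.mp this
    have : (j : ℕ) = (i : ℕ) := by rw [← hg j, hj, hf i]
    rw [← hj, Fin.ext this]
  · intro s hs
    rw [mem_cliqueFinset_iff, isNClique_iff] at hs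
    obtain ⟨hclique, hcard⟩ := hs
    have hinj : Set.InjOn (fun v : Fin n => (v : ℕ) % r) s := by
      intro x hx y hy hxy
      by_contra hne
      exact (hclique hx hy hne) hxy
    have himg : Finset.image (fun v : Fin n => (v : ℕ) % r) s = Finset.range r := by
      apply Finset.eq_of_subset_of_card_le
      · intro x hx
        obtain ⟨v, _, rfl⟩ := mem_image.mp hx
        exact mem_range.mpr (Nat.mod_lt _ hr)
      · rw [Finset.card_range, Finset.card_image_of_injOn hinj, hcard]
    have hex : ∀ i : Fin r, ∃ v ∈ s, (v : ℕ) % r = (i : ℕ) := by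
      intro i
      have : (i : ℕ) ∈ Finset.image (fun v : Fin n => (v : ℕ) % r) s :=
        himg ▸ mem_range.mpr i.isLt
      exact mem_image.mp this
    choose f hfs hfr using hex
    have hfinj : Function.Injective f := fun i j hij =>
      Fin.ext (by rw [← hfr i, ← hfr j, hij])
    refine ⟨f, ?_, ?_⟩
    · simp only [Fintype.mem_piFinset, Finset.mem_filter, Finset.mem_univ, true_and]
      exact hfr
    · apply Finset.eq_of_subset_of_card_le
      · intro x hx
        obtain ⟨i, _, rfl⟩ := mem_image.mp hx
        exact hfs i
      · rw [hcard, card_image_of_injective _ hfinj, card_univ, Fintype.card_fin]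

lemma range_count4 (i : ℕ) (hi : i < 4) :
    ∀ n, ((range n).filter (fun v => v % 4 = i)).card = (n + 3 - i) / 4 := by
  intro n
  induction n with
  | zero => simp; omega
  | succ n ih =>
    rw [Finset.range_add_one, Finset.filter_insert]
    split_ifs with h
    · rw [Finset.card_insert_of_notMem (by simp), ih]; omega
    · rw [ih]; omega

lemma range_count3 (i : ℕ) (hi : i < 3) :
    ∀ n, ((range n).filter (fun v => v % 3 = i)).card = (n + 2 - i) / 3 := by
  intro n
  induction n with
  | zero => simp; omega
  | succ n ih =>
    rw [Finset.range_add_one, Finset.filter_insert]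
    split_ifs with h
    · rw [Finset.card_insert_of_notMem (by simp), ih]; omega
    · rw [ih]; omega

lemma fin_filter_card (n r i : ℕ) :
    (univ.filter (fun v : Fin n => (v : ℕ) % r = i)).card
      = ((range n).filter (fun v => v % r = i)).card := by
  refine Finset.card_bij (fun v _ => (v : ℕ)) ?_ ?_ ?_
  · intro v hv
    simp only [mem_filter, mem_univ, true_and] at hv
    simp [v.isLt, hv]
  · intro a _ b _ h; exact Fin.ext h
  · intro b hb
    simp only [mem_filter, mem_range] at hb
    exact ⟨⟨b, hb.1⟩, by simp [hb.2], rfl⟩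

lemma cliqueCount_eq {V : Type*} [Fintype V] [DecidableEq V] (G : SimpleGraph V)
    [DecidableRel G.Adj] (t : ℕ) :
    cliqueCount G t = (G.cliqueFinset t).card := by
  rw [cliqueCount, Nat.card_eq_fintype_card, Fintype.card_subtype]
  rfl

lemma e4 (m : ℕ) : cliqueCount (turanGraph m 4) 4
    = ((m+3-0)/4) * ((m+3-1)/4) * ((m+3-2)/4) * ((m+3-3)/4) := by
  rw [cliqueCount_eq, clique_card m 4 (by norm_num),
    ← Finset.prod_range fun i => (univ.filter (fun v : Fin m => (v : ℕ) % 4 = i)).card]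
  rw [Finset.prod_range_succ, Finset.prod_range_succ, Finset.prod_range_succ,
    Finset.prod_range_one, fin_filter_card, fin_filter_card, fin_filter_card, fin_filter_card,
    range_count4 0 (by norm_num), range_count4 1 (by norm_num), range_count4 2 (by norm_num),
    range_count4 3 (by norm_num)]

lemma e3 (m : ℕ) : cliqueCount (turanGraph m 3) 3
    = ((m+2-0)/3) * ((m+2-1)/3) * ((m+2-2)/3) := by
  rw [cliqueCount_eq, clique_card m 3 (by norm_num),
    ← Finset.prod_range fun i => (univ.filter (fun v : Fin m => (v : ℕ) % 3 = i)).card]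
  rw [Finset.prod_range_succ, Finset.prod_range_succ,
    Finset.prod_range_one, fin_filter_card, fin_filter_card, fin_filter_card,
    range_count3 0 (by norm_num), range_count3 1 (by norm_num), range_count3 2 (by norm_num)]

theorem stmt4 (n : ℕ) (hn : 1 ≤ n) :
    (cliqueCount (SimpleGraph.turanGraph n 4) 4 : ℤ) -
        (cliqueCount (SimpleGraph.turanGraph (n - 1) 4) 4 : ℤ) =
      (cliqueCount (SimpleGraph.turanGraph (3 * n / 4) 3) 3 : ℤ) := by
  rw [e4, e4, e3]
  have hm : n % 4 = 0 ∨ n % 4 = 1 ∨ n % 4 = 2 ∨ n % 4 = 3 := by omega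
  obtain ⟨q, hq⟩ : ∃ q, n = 4 * q + n % 4 := ⟨n / 4, by omega⟩
  rcases hm with h | h | h | h <;> rw [h] at hq <;> subst hq
  ·
    obtain ⟨p, rfl⟩ : ∃ p, q = p + 1 := ⟨q - 1, by omega⟩
    rw [show (4*(p+1)+0+3-0)/4 = p+1 from by omega,
      show (4*(p+1)+0+3-1)/4 = p+1 from by omega,
      show (4*(p+1)+0+3-2)/4 = p+1 from by omega,
      show (4*(p+1)+0+3-3)/4 = p+1 from by omega,
      show (4*(p+1)+0-1+3-0)/4 = p+1 from by omega,
      show (4*(p+1)+0-1+3-1)/4 = p+1 from by omega,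
      show (4*(p+1)+0-1+3-2)/4 = p+1 from by omega,
      show (4*(p+1)+0-1+3-3)/4 = p from by omega,
      show (3*(4*(p+1)+0)/4+2-0)/3 = p+1 from by omega,
      show (3*(4*(p+1)+0)/4+2-1)/3 = p+1 from by omega,
      show (3*(4*(p+1)+0)/4+2-2)/3 = p+1 from by omega]
    push_cast
    ring
  ·
    rw [show (4*q+1+3-0)/4 = q+1 from by omega,
      show (4*q+1+3-1)/4 = q from by omega,
      show (4*q+1+3-2)/4 = q from by omega,
      show (4*q+1+3-3)/4 = q from by omega,
      show (4*q+1-1+3-0)/4 = q from by omega,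
      show (4*q+1-1+3-1)/4 = q from by omega,
      show (4*q+1-1+3-2)/4 = q from by omega,
      show (4*q+1-1+3-3)/4 = q from by omega,
      show (3*(4*q+1)/4+2-0)/3 = q from by omega,
      show (3*(4*q+1)/4+2-1)/3 = q from by omega,
      show (3*(4*q+1)/4+2-2)/3 = q from by omega]
    push_cast
    ring
  ·
    rw [show (4*q+2+3-0)/4 = q+1 from by omega,
      show (4*q+2+3-1)/4 = q+1 from by omega,
      show (4*q+2+3-2)/4 = q from by omega,
      show (4*q+2+3-3)/4 = q from by omega,
      show (4*q+2-1+3-0)/4 = q+1 from by omega,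
      show (4*q+2-1+3-1)/4 = q from by omega,
      show (4*q+2-1+3-2)/4 = q from by omega,
      show (4*q+2-1+3-3)/4 = q from by omega,
      show (3*(4*q+2)/4+2-0)/3 = q+1 from by omega,
      show (3*(4*q+2)/4+2-1)/3 = q from by omega,
      show (3*(4*q+2)/4+2-2)/3 = q from by omega]
    push_cast
    ring
  ·
    rw [show (4*q+3+3-0)/4 = q+1 from by omega,
      show (4*q+3+3-1)/4 = q+1 from by omega,
      show (4*q+3+3-2)/4 = q+1 from by omega,
      show (4*q+3+3-3)/4 = q from by omega,
      show (4*q+3-1+3-0)/4 = q+1 from by omega,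
      show (4*q+3-1+3-1)/4 = q+1 from by omega,
      show (4*q+3-1+3-2)/4 = q from by omega,
      show (4*q+3-1+3-3)/4 = q from by omega,
      show (3*(4*q+3)/4+2-0)/3 = q+1 from by omega,
      show (3*(4*q+3)/4+2-1)/3 = q+1 from by omega,
      show (3*(4*q+3)/4+2-2)/3 = q from by omega]
    push_cast
    ring
end

section
/- Let G be a simple graph on n vertices and let C be a clique of G of size c. Then CC_4(G) ≤ CC_4(G ∖ C) + 1 + (n−c) + C(n−c,2) + C(n−c,3), where G ∖ C is the subgraph of G obtained by deleting the vertices of C and C(x,2), C(x,3) denote binomial coefficients. -/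
open Finset SimpleGraph

def IsCliqueCover {V : Type*} (G : SimpleGraph V) (t : ℕ) (𝒞 : Finset (Finset V)) : Prop :=
  (∀ K ∈ 𝒞, G.IsClique (K : Set V)) ∧
    ∀ T : Finset V, G.IsNClique t T → ∃ K ∈ 𝒞, T ⊆ K

noncomputable def coverNumber {V : Type*} (G : SimpleGraph V) (t : ℕ) : ℕ :=
  sInf {k | ∃ 𝒞 : Finset (Finset V), IsCliqueCover G t 𝒞 ∧ 𝒞.card = k}

theorem stmt5 {V : Type*} [Fintype V] [DecidableEq V] (G : SimpleGraph V)
    (C : Finset V) (c : ℕ) (hcard : C.card = c) (hC : G.IsClique (C : Set V)) :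
    coverNumber G 4 ≤
      coverNumber (G.induce ((Finset.univ \ C : Finset V) : Set V)) 4 + 1 +
        (Fintype.card V - c) + Nat.choose (Fintype.card V - c) 2 +
        Nat.choose (Fintype.card V - c) 3 := by
  classical
  set W : Finset V := Finset.univ \ C with hW
  set s : Set V := (W : Set V) with hs
  -- the set defining the cover number of the induced graph is nonempty
  have hne : {k | ∃ 𝒞 : Finset (Finset ↥s), IsCliqueCover (G.induce s) 4 𝒞 ∧ 𝒞.card = k}.Nonempty := by
    refine ⟨_, Finset.univ.filter (fun K => (G.induce s).IsClique (K : Set ↥s)), ⟨?_, ?_⟩, rfl⟩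
    · intro K hK; exact (Finset.mem_filter.mp hK).2
    · intro T hT
      exact ⟨T, Finset.mem_filter.mpr ⟨Finset.mem_univ _, hT.1⟩, subset_rfl⟩
  have hsinf : coverNumber (G.induce s) 4 ∈
      {k | ∃ 𝒞 : Finset (Finset ↥s), IsCliqueCover (G.induce s) 4 𝒞 ∧ 𝒞.card = k} :=
    Nat.sInf_mem hne
  obtain ⟨𝒞', h𝒞', hcard'⟩ := hsinf
  set f : Finset V → Finset V := fun S =>
    if G.IsClique (S : Set V) then S ∪ C.filter (fun v => ∀ x ∈ S, G.Adj v x) else ∅ with hf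
  set D : Finset (Finset V) :=
    ((W.powersetCard 1 ∪ W.powersetCard 2) ∪ W.powersetCard 3).image f with hD
  set 𝒞 : Finset (Finset V) :=
    (𝒞'.image (fun K => K.image Subtype.val) ∪ {C}) ∪ D with h𝒞
  -- all members of 𝒞 are cliques
  have hclique : ∀ K ∈ 𝒞, G.IsClique (K : Set V) := by
    intro K hK
    rw [h𝒞, Finset.mem_union, Finset.mem_union] at hK
    rcases hK with (hK | hK) | hK
    · obtain ⟨K', hK', rfl⟩ := Finset.mem_image.mp hK
      intro a ha b hb hab
      simp only [Finset.coe_image, Set.mem_image, Finset.mem_coe] at ha hb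
      obtain ⟨a', ha', rfl⟩ := ha
      obtain ⟨b', hb', rfl⟩ := hb
      have hne' : a' ≠ b' := fun h => hab (by rw [h])
      exact (h𝒞'.1 K' hK') (Finset.mem_coe.mpr ha') (Finset.mem_coe.mpr hb') hne'
    · rw [Finset.mem_singleton.mp hK]; exact hC
    · obtain ⟨S, hS, rfl⟩ := Finset.mem_image.mp hK
      by_cases hSc : G.IsClique (S : Set V)
      · simp only [hf, if_pos hSc]
        intro a ha b hb hab
        simp only [Finset.coe_union, Set.mem_union, Finset.mem_coe,
          Finset.mem_filter] at ha hb
        rcases ha with ha | ha <;> rcases hb with hb | hb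
        · exact hSc (Finset.mem_coe.mpr ha) (Finset.mem_coe.mpr hb) hab
        · exact (hb.2 a ha).symm
        · exact ha.2 b hb
        · exact hC (Finset.mem_coe.mpr ha.1) (Finset.mem_coe.mpr hb.1) hab
      · simp only [hf, if_neg hSc]
        simp
  -- 𝒞 covers all 4-cliques
  have hcover : ∀ T : Finset V, G.IsNClique 4 T → ∃ K ∈ 𝒞, T ⊆ K := by
    intro T hT
    by_cases hTC : T ⊆ C
    · refine ⟨C, ?_, hTC⟩
      rw [h𝒞]
      exact Finset.mem_union_left _ (Finset.mem_union_right _ (Finset.mem_singleton_self C))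
    by_cases hTW : T ⊆ W
    · -- T lives in the induced graph
      have hmem : ∀ x : {a // a ∈ T}, (x : V) ∈ s := fun x => Finset.mem_coe.mpr (hTW x.2)
      set T' : Finset ↥s := T.attach.map
        ⟨fun x => ⟨x.1, hmem x⟩, fun a b h => by injection h with h'; exact Subtype.ext h'⟩ with hT'
      have hT'card : T'.card = 4 := by
        rw [hT', Finset.card_map, Finset.card_attach, hT.2]
      have hT'clique : (G.induce s).IsClique (T' : Set ↥s) := by
        intro a ha b hb hab
        simp only [hT', Finset.coe_map, Set.mem_image, Finset.mem_coe,
          Function.Embedding.coeFn_mk] at ha hb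
        obtain ⟨⟨a', ha'⟩, -, rfl⟩ := ha
        obtain ⟨⟨b', hb'⟩, -, rfl⟩ := hb
        have hne' : a' ≠ b' := fun h => hab (Subtype.ext h)
        exact hT.1 (Finset.mem_coe.mpr ha') (Finset.mem_coe.mpr hb') hne'
      obtain ⟨K', hK', hTK'⟩ := h𝒞'.2 T' ⟨hT'clique, hT'card⟩
      refine ⟨K'.image Subtype.val, ?_, ?_⟩
      · rw [h𝒞]
        exact Finset.mem_union_left _ (Finset.mem_union_left _
          (Finset.mem_image.mpr ⟨K', hK', rfl⟩))
      · intro x hx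
        have hx' : (⟨x, Finset.mem_coe.mpr (hTW hx)⟩ : ↥s) ∈ T' := by
          rw [hT', Finset.mem_map]
          exact ⟨⟨x, hx⟩, Finset.mem_attach _ _, rfl⟩
        exact Finset.mem_image.mpr ⟨_, hTK' hx', rfl⟩
    · -- mixed case
      set S : Finset V := T \ C with hS
      have hSW : S ⊆ W := by
        intro x hx
        rw [hW, Finset.mem_sdiff]
        exact ⟨Finset.mem_univ _, (Finset.mem_sdiff.mp hx).2⟩
      have hSne : S.Nonempty := by
        obtain ⟨x, hx, hxC⟩ := Finset.not_subset.mp hTC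
        exact ⟨x, Finset.mem_sdiff.mpr ⟨hx, hxC⟩⟩
      have hTCne : (T ∩ C).Nonempty := by
        obtain ⟨x, hx, hxW⟩ := Finset.not_subset.mp hTW
        have hxC : x ∈ C := by
          by_contra h
          exact hxW (by rw [hW, Finset.mem_sdiff]; exact ⟨Finset.mem_univ _, h⟩)
        exact ⟨x, Finset.mem_inter.mpr ⟨hx, hxC⟩⟩
      have hcards : S.card + (T ∩ C).card = T.card := Finset.card_sdiff_add_card_inter T C
      have hScard : S.card = 1 ∨ S.card = 2 ∨ S.card = 3 := by
        have h1 : 1 ≤ S.card := Finset.card_pos.mpr hSne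
        have h2 : 1 ≤ (T ∩ C).card := Finset.card_pos.mpr hTCne
        rw [hT.2] at hcards
        omega
      have hSmem : S ∈ (W.powersetCard 1 ∪ W.powersetCard 2) ∪ W.powersetCard 3 := by
        rcases hScard with h | h | h
        · exact Finset.mem_union_left _ (Finset.mem_union_left _
            (Finset.mem_powersetCard.mpr ⟨hSW, h⟩))
        · exact Finset.mem_union_left _ (Finset.mem_union_right _
            (Finset.mem_powersetCard.mpr ⟨hSW, h⟩))
        · exact Finset.mem_union_right _ (Finset.mem_powersetCard.mpr ⟨hSW, h⟩)
      have hScl : G.IsClique (S : Set V) :=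
        hT.1.subset (Finset.coe_subset.mpr (Finset.sdiff_subset))
      refine ⟨f S, ?_, ?_⟩
      · rw [h𝒞]
        exact Finset.mem_union_right _ (Finset.mem_image.mpr ⟨S, hSmem, rfl⟩)
      · intro x hx
        have : f S = S ∪ C.filter (fun v => ∀ y ∈ S, G.Adj v y) := by
          rw [hf]; simp only [if_pos hScl]
        rw [this]
        by_cases hxC : x ∈ C
        · refine Finset.mem_union_right _ (Finset.mem_filter.mpr ⟨hxC, ?_⟩)
          intro y hy
          have hyT : y ∈ T := Finset.sdiff_subset hy
          have hxy : x ≠ y := fun h => (Finset.mem_sdiff.mp hy).2 (h ▸ hxC)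
          exact hT.1 (Finset.mem_coe.mpr hx) (Finset.mem_coe.mpr hyT) hxy
        · exact Finset.mem_union_left _ (Finset.mem_sdiff.mpr ⟨hx, hxC⟩)
  have hle : coverNumber G 4 ≤ 𝒞.card := Nat.sInf_le ⟨𝒞, ⟨hclique, hcover⟩, rfl⟩
  have hWcard : W.card = Fintype.card V - c := by
    rw [hW, Finset.card_univ_diff, hcard]
  have hDcard : D.card ≤ W.card + W.card.choose 2 + W.card.choose 3 := by
    calc D.card ≤ ((W.powersetCard 1 ∪ W.powersetCard 2) ∪ W.powersetCard 3).card :=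
          Finset.card_image_le
      _ ≤ (W.powersetCard 1 ∪ W.powersetCard 2).card + (W.powersetCard 3).card :=
          Finset.card_union_le _ _
      _ ≤ (W.powersetCard 1).card + (W.powersetCard 2).card + (W.powersetCard 3).card := by
          have := Finset.card_union_le (W.powersetCard 1) (W.powersetCard 2)
          omega
      _ = W.card + W.card.choose 2 + W.card.choose 3 := by
          rw [Finset.card_powersetCard, Finset.card_powersetCard, Finset.card_powersetCard,
            Nat.choose_one_right]
  have h𝒞card : 𝒞.card ≤ 𝒞'.card + 1 + W.card + W.card.choose 2 + W.card.choose 3 := by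
    have h1 := Finset.card_union_le (𝒞'.image (fun K => K.image Subtype.val) ∪ {C}) D
    have h2 := Finset.card_union_le (𝒞'.image (fun K => K.image (Subtype.val : ↥s → V))) {C}
    have h3 : (𝒞'.image (fun K => K.image (Subtype.val : ↥s → V))).card ≤ 𝒞'.card :=
      Finset.card_image_le
    rw [h𝒞]
    simp only [Finset.card_singleton] at h2
    omega
  rw [hcard'] at h𝒞card
  rw [← hWcard]
  omega
end

section
/- Let G be a simple graph and v a vertex of G. Let G' = G ∖ {v} be the graph obtained by deleting v, and let H = G[N(v)] be the subgraph of G induced by the neighborhood of v. Then CC_4(G) ≤ CC_4(G') + CC_3(H). -/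
open Finset SimpleGraph

lemma cover_exists {V : Type*} [Fintype V] [DecidableEq V] (G : SimpleGraph V) (t : ℕ) :
    ∃ 𝒞 : Finset (Finset V), IsCliqueCover G t 𝒞 := by
  classical
  refine ⟨Finset.univ.filter (fun K => G.IsClique (K : Set V)), ?_, ?_⟩
  · intro K hK
    exact (Finset.mem_filter.mp hK).2
  · intro T hT
    exact ⟨T, Finset.mem_filter.mpr ⟨Finset.mem_univ _, hT.1⟩, le_refl _⟩

lemma coverNumber_mem {V : Type*} [Fintype V] [DecidableEq V] (G : SimpleGraph V) (t : ℕ) :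
    ∃ 𝒞 : Finset (Finset V), IsCliqueCover G t 𝒞 ∧ 𝒞.card = coverNumber G t := by
  have hne : {k | ∃ 𝒞 : Finset (Finset V), IsCliqueCover G t 𝒞 ∧ 𝒞.card = k}.Nonempty := by
    obtain ⟨𝒞, h⟩ := cover_exists G t
    exact ⟨𝒞.card, 𝒞, h, rfl⟩
  exact Nat.sInf_mem hne

theorem stmt6 {V : Type*} [Fintype V] [DecidableEq V] (G : SimpleGraph V) (v : V) :
    coverNumber G 4 ≤
      coverNumber (G.induce ((Finset.univ \ {v} : Finset V) : Set V)) 4 +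
        coverNumber (G.induce (G.neighborSet v)) 3 := by
  classical
  obtain ⟨𝒞', h𝒞', hc𝒞'⟩ :=
    coverNumber_mem (G.induce ((Finset.univ \ {v} : Finset V) : Set V)) 4
  obtain ⟨𝒟, h𝒟, hc𝒟⟩ := coverNumber_mem (G.induce (G.neighborSet v)) 3
  set 𝒞 : Finset (Finset V) :=
    (𝒞'.image (fun K => K.image Subtype.val)) ∪
      (𝒟.image (fun D => insert v (D.image Subtype.val))) with h𝒞def
  have hcover : IsCliqueCover G 4 𝒞 := by
    constructor
    · intro K hK
      rcases Finset.mem_union.mp hK with hK | hK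
      · obtain ⟨K', hK', rfl⟩ := Finset.mem_image.mp hK
        intro a ha b hb hab
        simp only [Finset.coe_image, Set.mem_image, Finset.mem_coe] at ha hb
        obtain ⟨x, hx, rfl⟩ := ha
        obtain ⟨y, hy, rfl⟩ := hb
        have hxy : x ≠ y := fun h => hab (by rw [h])
        exact (h𝒞'.1 K' hK' hx hy hxy)
      · obtain ⟨D, hD, rfl⟩ := Finset.mem_image.mp hK
        intro a ha b hb hab
        simp only [Finset.coe_insert, Set.mem_insert_iff, Finset.coe_image,
          Set.mem_image, Finset.mem_coe] at ha hb
        rcases ha with rfl | ⟨x, hx, rfl⟩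
        · rcases hb with rfl | ⟨y, hy, rfl⟩
          · exact absurd rfl hab
          · exact y.2
        · rcases hb with rfl | ⟨y, hy, rfl⟩
          · exact (G.adj_symm x.2)
          · have hxy : x ≠ y := fun h => hab (by rw [h])
            exact (h𝒟.1 D hD hx hy hxy)
    · intro T hT
      by_cases hv : v ∈ T
      · -- use 𝒟
        set T' := T.erase v with hT'def
        have hsub : ∀ u ∈ T', u ∈ G.neighborSet v := by
          intro u hu
          have huT := Finset.mem_of_mem_erase hu
          have hune : u ≠ v := Finset.ne_of_mem_erase hu
          exact hT.1 (Finset.mem_coe.mpr hv) (Finset.mem_coe.mpr huT)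
            (fun h => hune h.symm)
        set T'' : Finset (G.neighborSet v) := T'.subtype (· ∈ G.neighborSet v) with hT''def
        have himg : T''.image Subtype.val = T' := by
          ext u
          simp only [Finset.mem_image]
          constructor
          · rintro ⟨x, hx, rfl⟩; exact Finset.mem_subtype.mp hx
          · intro hu; exact ⟨⟨u, hsub u hu⟩, Finset.mem_subtype.mpr hu, rfl⟩
        have hT''clique : (G.induce (G.neighborSet v)).IsNClique 3 T'' := by
          constructor
          · intro a ha b hb hab
            have ha' : (a : V) ∈ T' := by
              rw [← himg]; exact Finset.mem_image_of_mem _ ha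
            have hb' : (b : V) ∈ T' := by
              rw [← himg]; exact Finset.mem_image_of_mem _ hb
            have : (a : V) ≠ (b : V) := fun h => hab (Subtype.ext h)
            exact hT.1 (Finset.mem_coe.mpr (Finset.mem_of_mem_erase ha'))
              (Finset.mem_coe.mpr (Finset.mem_of_mem_erase hb')) this
          · have : T''.card = T'.card := by
              rw [← himg]
              exact (Finset.card_image_of_injective _ Subtype.val_injective).symm
            rw [this, hT'def, Finset.card_erase_of_mem hv, hT.2]
        obtain ⟨D, hD, hTD⟩ := h𝒟.2 T'' hT''clique
        refine ⟨insert v (D.image Subtype.val), ?_, ?_⟩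
        · exact Finset.mem_union_right _ (Finset.mem_image_of_mem _ hD)
        · intro u hu
          by_cases huv : u = v
          · rw [huv]; exact Finset.mem_insert_self _ _
          · have hu' : u ∈ T' := Finset.mem_erase.mpr ⟨huv, hu⟩
            rw [← himg] at hu'
            obtain ⟨x, hx, rfl⟩ := Finset.mem_image.mp hu'
            exact Finset.mem_insert_of_mem (Finset.mem_image_of_mem _ (hTD hx))
      · -- use 𝒞'
        have hsub : ∀ u ∈ T, u ∈ ((Finset.univ \ {v} : Finset V) : Set V) := by
          intro u hu
          simp only [Finset.coe_sdiff, Finset.coe_univ, Finset.coe_singleton,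
            Set.mem_diff, Set.mem_univ, Set.mem_singleton_iff, true_and]
          exact fun h => hv (h ▸ hu)
        set T'' : Finset ((Finset.univ \ {v} : Finset V) : Set V) :=
          T.subtype (· ∈ ((Finset.univ \ {v} : Finset V) : Set V)) with hT''def
        have himg : T''.image Subtype.val = T := by
          ext u
          simp only [Finset.mem_image]
          constructor
          · rintro ⟨x, hx, rfl⟩; exact Finset.mem_subtype.mp hx
          · intro hu; exact ⟨⟨u, hsub u hu⟩, Finset.mem_subtype.mpr hu, rfl⟩
        have hT''clique : (G.induce ((Finset.univ \ {v} : Finset V) : Set V)).IsNClique 4 T'' := by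
          constructor
          · intro a ha b hb hab
            have ha' : (a : V) ∈ T := by
              rw [← himg]; exact Finset.mem_image_of_mem _ ha
            have hb' : (b : V) ∈ T := by
              rw [← himg]; exact Finset.mem_image_of_mem _ hb
            have : (a : V) ≠ (b : V) := fun h => hab (Subtype.ext h)
            exact hT.1 (Finset.mem_coe.mpr ha') (Finset.mem_coe.mpr hb') this
          · have : T''.card = T.card := by
              rw [← himg]
              exact (Finset.card_image_of_injective _ Subtype.val_injective).symm
            rw [this, hT.2]
        obtain ⟨K, hK, hTK⟩ := h𝒞'.2 T'' hT''clique
        refine ⟨K.image Subtype.val, Finset.mem_union_left _ (Finset.mem_image_of_mem _ hK), ?_⟩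
        intro u hu
        rw [← himg] at hu
        obtain ⟨x, hx, rfl⟩ := Finset.mem_image.mp hu
        exact Finset.mem_image_of_mem _ (hTK hx)
  have hle : coverNumber G 4 ≤ 𝒞.card :=
    Nat.sInf_le ⟨𝒞, hcover, rfl⟩
  calc coverNumber G 4 ≤ 𝒞.card := hle
    _ ≤ (𝒞'.image (fun K => K.image Subtype.val)).card +
        (𝒟.image (fun D => insert v (D.image Subtype.val))).card := Finset.card_union_le _ _
    _ ≤ 𝒞'.card + 𝒟.card := Nat.add_le_add (Finset.card_image_le) (Finset.card_image_le)
    _ = _ := by rw [hc𝒞', hc𝒟]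
end

section
/- Let H be a K_5-free simple graph and let {A_1, …, A_p} be a greedy partition of H of size p. Let A = (|A_1|, …, |A_p|) be the corresponding (|V(H)|, p)-greedy sequence. Then CC_3(H) ≤ f(A). -/
open Finset SimpleGraph

/-- A greedy partition of `H` of size `p`: an ordered partition `A 1, …, A p` of the vertex
set into cliques such that each `A i` is a clique of maximum size in the subgraph induced on
the vertices not belonging to `A 1, …, A (i-1)`. -/
def IsGreedyPartition {V : Type*} [Fintype V] [DecidableEq V] (H : SimpleGraph V)
    (p : ℕ) (A : ℕ → Finset V) : Prop :=
  (∀ i ∈ Finset.Icc 1 p, ∀ j ∈ Finset.Icc 1 p, i ≠ j → Disjoint (A i) (A j)) ∧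
  ((Finset.Icc 1 p).biUnion A = Finset.univ) ∧
  (∀ i ∈ Finset.Icc 1 p, H.IsClique (A i : Set V)) ∧
  (∀ i ∈ Finset.Icc 1 p, ∀ s : Finset V, H.IsClique (s : Set V) →
    (∀ v ∈ s, ∀ j ∈ Finset.Icc 1 p, j < i → v ∉ A j) → s.card ≤ (A i).card)

/-- An `(m, p)`-greedy sequence: a nonincreasing sequence `a 1, …, a p` with entries in
`{1, 2, 3, 4}` summing to `m` (values of `a` outside `[1, p]` are irrelevant). -/
def IsGreedySeq (m p : ℕ) (a : ℕ → ℕ) : Prop :=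
  (∀ i ∈ Finset.Icc 1 p, 1 ≤ a i ∧ a i ≤ 4) ∧
  (∀ i j : ℕ, 1 ≤ i → i ≤ j → j ≤ p → a j ≤ a i) ∧
  ∑ i ∈ Finset.Icc 1 p, a i = m

/-- `a = #{i : a_i = 4}`. -/
def seqA (p : ℕ) (a : ℕ → ℕ) : ℕ := ((Finset.Icc 1 p).filter fun i => a i = 4).card

/-- `b = #{i : a_i ≥ 3}`. -/
def seqB (p : ℕ) (a : ℕ → ℕ) : ℕ := ((Finset.Icc 1 p).filter fun i => 3 ≤ a i).card

/-- `c = #{i : a_i ≥ 2}`. -/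
def seqC (p : ℕ) (a : ℕ → ℕ) : ℕ := ((Finset.Icc 1 p).filter fun i => 2 ≤ a i).card

/-- `S₁(A) = b`. -/
def S1 (p : ℕ) (a : ℕ → ℕ) : ℤ := (seqB p a : ℤ)

/-- `S₂(A) = mb + a² − ab − b² + bc − a − 3b`. -/
def S2 (m p : ℕ) (a : ℕ → ℕ) : ℤ :=
  (m : ℤ) * (seqB p a : ℤ) + (seqA p a : ℤ) ^ 2 - (seqA p a : ℤ) * (seqB p a : ℤ)
    - (seqB p a : ℤ) ^ 2 + (seqB p a : ℤ) * (seqC p a : ℤ) - (seqA p a : ℤ) - 3 * (seqB p a : ℤ)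

/-- `S₃(A)` as in the definition of the value of a greedy sequence. -/
def S3 (p : ℕ) (a : ℕ → ℕ) : ℤ :=
  (∑ k ∈ Finset.Icc 3 (seqB p a),
      (a k : ℤ) * ∑ j ∈ Finset.Icc 2 (k - 1), ((a j : ℤ) - 1) * ((j : ℤ) - 1)) +
  (∑ k ∈ Finset.Icc (seqB p a + 1) (seqC p a), (a k : ℤ) *
      ((∑ j ∈ Finset.Icc 2 (seqB p a), ((a j : ℤ) - 1) * ((j : ℤ) - 1)) +
        ∑ j ∈ Finset.Icc (seqB p a + 1) (k - 1), ((a j : ℤ) - 1) * (seqB p a : ℤ))) +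
  (∑ _k ∈ Finset.Icc (seqC p a + 1) p,
      ((∑ j ∈ Finset.Icc 2 (seqB p a), ((a j : ℤ) - 1) * ((j : ℤ) - 1)) +
        ∑ j ∈ Finset.Icc (seqB p a + 1) (seqC p a), ((a j : ℤ) - 1) * (seqB p a : ℤ)))

/-- The value `f(A) = S₁(A) + S₂(A) + S₃(A)` of a greedy sequence. -/
def fval (m p : ℕ) (a : ℕ → ℕ) : ℤ := S1 p a + S2 m p a + S3 p a

lemma myGauss1 (n : ℕ) : 2 * ∑ i ∈ Finset.Icc 1 n, (i : ℤ) = n * (n + 1) := by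
  induction n with
  | zero => simp
  | succ n ih =>
    rw [Finset.sum_Icc_succ_top (by omega)]
    push_cast
    push_cast at ih
    linarith

lemma myGauss2 (n : ℕ) : 2 * ∑ i ∈ Finset.Icc 1 n, ((i : ℤ) - 1) = n * (n - 1) := by
  have h2 : ∑ i ∈ Finset.Icc 1 n, ((i:ℤ) - 1) = (∑ i ∈ Finset.Icc 1 n, (i:ℤ)) - n := by
    rw [Finset.sum_sub_distrib]
    simp [Nat.card_Icc]
  have h1 := myGauss1 n
  rw [h2]; push_cast; linarith

lemma myFilterIcc {p : ℕ} {P : ℕ → Prop} [DecidablePred P]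
    (h : ∀ i j, 1 ≤ i → i ≤ j → j ≤ p → P j → P i) :
    (Finset.Icc 1 p).filter P = Finset.Icc 1 ((Finset.Icc 1 p).filter P).card := by
  ext i
  constructor
  · intro hi
    rw [Finset.mem_filter, Finset.mem_Icc] at hi
    rw [Finset.mem_Icc]
    refine ⟨hi.1.1, ?_⟩
    have hsub : Finset.Icc 1 i ⊆ (Finset.Icc 1 p).filter P := by
      intro j hj
      rw [Finset.mem_Icc] at hj
      rw [Finset.mem_filter, Finset.mem_Icc]
      exact ⟨⟨hj.1, hj.2.trans hi.1.2⟩, h j i hj.1 hj.2 hi.1.2 hi.2⟩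
    have := Finset.card_le_card hsub
    rwa [Nat.card_Icc, Nat.add_sub_cancel] at this
  · intro hi
    rw [Finset.mem_Icc] at hi
    have hip : i ≤ p := by
      have h1 := Finset.card_filter_le (Finset.Icc 1 p) P
      rw [Nat.card_Icc, Nat.add_sub_cancel] at h1
      omega
    rw [Finset.mem_filter, Finset.mem_Icc]
    refine ⟨⟨hi.1, hip⟩, ?_⟩
    by_contra hPi
    have hsub : (Finset.Icc 1 p).filter P ⊆ Finset.Icc 1 (i-1) := by
      intro j hj
      rw [Finset.mem_filter, Finset.mem_Icc] at hj
      rw [Finset.mem_Icc]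
      rcases lt_or_ge j i with hlt | hge
      · exact ⟨hj.1.1, by omega⟩
      · exact absurd (h i j hi.1 hge hj.1.2 hj.2) hPi
    have := Finset.card_le_card hsub
    rw [Nat.card_Icc] at this
    omega

set_option maxHeartbeats 4000000 in
theorem stmt9 {V : Type*} [Fintype V] [DecidableEq V] (H : SimpleGraph V)
    (hH : H.CliqueFree 5) (p : ℕ) (A : ℕ → Finset V) (hA : IsGreedyPartition H p A) :
    (coverNumber H 3 : ℤ) ≤ fval (Fintype.card V) p (fun i => (A i).card) := by
  classical
  obtain ⟨hdisj, hunion, hclq, hmax⟩ := hA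
  set a : ℕ → ℕ := fun i => (A i).card with hadef
  set α := seqA p a with hαdef
  set β := seqB p a with hβdef
  set γ := seqC p a with hγdef
  -- basic clique facts
  have hclq' : ∀ i, 1 ≤ i → i ≤ p → H.IsClique (A i : Set V) := by
    intro i h1 h2; exact hclq i (Finset.mem_Icc.mpr ⟨h1, h2⟩)
  -- bound: every part has size ≤ 4
  have hle4 : ∀ i, 1 ≤ i → i ≤ p → a i ≤ 4 := by
    intro i h1 h2
    by_contra hcon
    obtain ⟨t, hts, htc⟩ := Finset.exists_subset_card_eq (show 5 ≤ (A i).card by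
      simp [hadef] at hcon; omega)
    exact hH t ⟨(hclq' i h1 h2).subset (Finset.coe_subset.mpr hts), htc⟩
  -- monotone
  have hmono : ∀ i j, 1 ≤ i → i ≤ j → j ≤ p → a j ≤ a i := by
    intro i j h1 hij hjp
    refine hmax i (Finset.mem_Icc.mpr ⟨h1, le_trans hij hjp⟩) (A j)
      (hclq' j (le_trans h1 hij) hjp) ?_
    intro v hv l hl hli
    rw [Finset.mem_Icc] at hl
    intro hvl
    have hne : l ≠ j := by omega
    exact (Finset.disjoint_left.mp
      (hdisj l (Finset.mem_Icc.mpr hl) j (Finset.mem_Icc.mpr ⟨le_trans h1 hij, hjp⟩) hne)) hvl hv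
  -- index function
  have hex : ∀ v : V, ∃ i, (1 ≤ i ∧ i ≤ p) ∧ v ∈ A i := by
    intro v
    have : v ∈ (Finset.Icc 1 p).biUnion A := by rw [hunion]; exact Finset.mem_univ v
    obtain ⟨i, hi, hvi⟩ := Finset.mem_biUnion.mp this
    exact ⟨i, Finset.mem_Icc.mp hi, hvi⟩
  choose idx hidxr hidxm using hex
  have huniq : ∀ v l, 1 ≤ l → l ≤ p → v ∈ A l → l = idx v := by
    intro v l h1 h2 hvl
    by_contra hne
    exact (Finset.disjoint_left.mp (hdisj l (Finset.mem_Icc.mpr ⟨h1, h2⟩)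
      (idx v) (Finset.mem_Icc.mpr (hidxr v)) hne)) hvl (hidxm v)
  -- key greedy bound via indices
  have haux : ∀ i, 1 ≤ i → i ≤ p → ∀ s : Finset V, H.IsClique (s : Set V) →
      (∀ v ∈ s, i ≤ idx v) → s.card ≤ a i := by
    intro i h1 h2 s hs hvs
    refine hmax i (Finset.mem_Icc.mpr ⟨h1, h2⟩) s hs ?_
    intro v hv l hl hli hvl
    rw [Finset.mem_Icc] at hl
    have := huniq v l hl.1 hl.2 hvl
    have := hvs v hv
    omega
  -- neighborhood bound
  have hG1 : ∀ j w, 1 ≤ j → j ≤ p → j < idx w →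
      ((A j).filter (H.Adj w)).card + 1 ≤ a j := by
    intro j w h1 h2 hjw
    have hwn : w ∉ (A j).filter (H.Adj w) := by
      intro hw
      have := huniq w j h1 h2 (Finset.mem_of_mem_filter w hw)
      omega
    have hcl : H.IsClique ((insert w ((A j).filter (H.Adj w)) : Finset V) : Set V) := by
      rw [Finset.coe_insert]
      refine ((hclq' j h1 h2).subset ?_).insert ?_
      · exact Finset.coe_subset.mpr (Finset.filter_subset _ _)
      · intro b hb _
        exact (Finset.mem_filter.mp (Finset.mem_coe.mp hb)).2
    have := haux j h1 h2 _ hcl ?_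
    · rwa [Finset.card_insert_of_notMem hwn] at this
    · intro v hv
      rw [Finset.mem_insert] at hv
      rcases hv with rfl | hv
      · omega
      · have := huniq v j h1 h2 (Finset.mem_of_mem_filter v hv); omega
  -- characterizations of α β γ
  have hchar : ∀ i, 1 ≤ i → i ≤ p → ((a i = 4 ↔ i ≤ α) ∧ (3 ≤ a i ↔ i ≤ β) ∧ (2 ≤ a i ↔ i ≤ γ)) := by
    have e4 : (Finset.Icc 1 p).filter (fun i => a i = 4) = Finset.Icc 1 α := by
      rw [hαdef, seqA]; exact myFilterIcc (fun i j h1 hij hjp hj => by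
        have h1' := hmono i j h1 hij hjp
        have h2' := hle4 i h1 (le_trans hij hjp)
        omega)
    have e3 : (Finset.Icc 1 p).filter (fun i => 3 ≤ a i) = Finset.Icc 1 β := by
      rw [hβdef, seqB]; exact myFilterIcc (fun i j h1 hij hjp hj => by
        have := hmono i j h1 hij hjp; omega)
    have e2 : (Finset.Icc 1 p).filter (fun i => 2 ≤ a i) = Finset.Icc 1 γ := by
      rw [hγdef, seqC]; exact myFilterIcc (fun i j h1 hij hjp hj => by
        have := hmono i j h1 hij hjp; omega)
    intro i h1 h2
    constructor
    · constructor
      · intro h4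
        have : i ∈ (Finset.Icc 1 p).filter (fun i => a i = 4) := by
          rw [Finset.mem_filter, Finset.mem_Icc]; exact ⟨⟨h1, h2⟩, h4⟩
        rw [e4, Finset.mem_Icc] at this; exact this.2
      · intro hle
        have : i ∈ (Finset.Icc 1 p).filter (fun i => a i = 4) := by
          rw [e4, Finset.mem_Icc]; exact ⟨h1, hle⟩
        exact (Finset.mem_filter.mp this).2
    constructor
    · constructor
      · intro h4
        have : i ∈ (Finset.Icc 1 p).filter (fun i => 3 ≤ a i) := by
          rw [Finset.mem_filter, Finset.mem_Icc]; exact ⟨⟨h1, h2⟩, h4⟩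
        rw [e3, Finset.mem_Icc] at this; exact this.2
      · intro hle
        have : i ∈ (Finset.Icc 1 p).filter (fun i => 3 ≤ a i) := by
          rw [e3, Finset.mem_Icc]; exact ⟨h1, hle⟩
        exact (Finset.mem_filter.mp this).2
    · constructor
      · intro h4
        have : i ∈ (Finset.Icc 1 p).filter (fun i => 2 ≤ a i) := by
          rw [Finset.mem_filter, Finset.mem_Icc]; exact ⟨⟨h1, h2⟩, h4⟩
        rw [e2, Finset.mem_Icc] at this; exact this.2
      · intro hle
        have : i ∈ (Finset.Icc 1 p).filter (fun i => 2 ≤ a i) := by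
          rw [e2, Finset.mem_Icc]; exact ⟨h1, hle⟩
        exact (Finset.mem_filter.mp this).2
  have hβp : β ≤ p := by
    rw [hβdef, seqB]
    have := Finset.card_filter_le (Finset.Icc 1 p) (fun i => 3 ≤ a i)
    rwa [Nat.card_Icc, Nat.add_sub_cancel] at this
  have hγp : γ ≤ p := by
    rw [hγdef, seqC]
    have := Finset.card_filter_le (Finset.Icc 1 p) (fun i => 2 ≤ a i)
    rwa [Nat.card_Icc, Nat.add_sub_cancel] at this
  have hαp : α ≤ p := by
    rw [hαdef, seqA]
    have := Finset.card_filter_le (Finset.Icc 1 p) (fun i => a i = 4)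
    rwa [Nat.card_Icc, Nat.add_sub_cancel] at this
  have hαβ : α ≤ β := by
    by_contra hcon
    push_neg at hcon
    have h1 : 1 ≤ β + 1 := by omega
    have h2 : β + 1 ≤ p := by omega
    have := ((hchar (β+1) h1 h2).1).mpr (by omega)
    have := ((hchar (β+1) h1 h2).2.1).mp (by omega)
    omega
  have hβγ : β ≤ γ := by
    by_contra hcon
    push_neg at hcon
    have h1 : 1 ≤ γ + 1 := by omega
    have h2 : γ + 1 ≤ p := by omega
    have := ((hchar (γ+1) h1 h2).2.1).mpr (by omega)
    have := ((hchar (γ+1) h1 h2).2.2).mp (by omega)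
    omega
  -- total count
  have hm : ∑ i ∈ Finset.Icc 1 p, a i = Fintype.card V := by
    rw [← Finset.card_biUnion hdisj, hunion, Finset.card_univ]
  -- the cover
  set C1 : Finset (Finset V) := (Finset.Icc 1 β).image A with hC1
  set C2 : Finset (Finset V) :=
    ((Finset.Icc 1 β).sigma (fun j => (Finset.Ioc j p).biUnion A)).image
      (fun x => insert x.2 ((A x.1).filter (H.Adj x.2))) with hC2
  set C3a : Finset (Finset V) :=
    ((Finset.Icc 2 α).sigma (fun j => (Finset.Icc 1 (j-1)).biUnion A)).image
      (fun x => insert x.2 ((A x.1).filter (H.Adj x.2))) with hC3a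
  set C3b : Finset (Finset V) :=
    ((Finset.Ioc α γ).sigma (fun j => ((A j).powersetCard 2) ×ˢ (Finset.Icc 1 (min (j-1) β)))).image
      (fun x => x.2.1 ∪ ((A x.2.2).filter (fun u => ∀ y ∈ x.2.1, H.Adj u y))) with hC3b
  set C4 : Finset (Finset V) :=
    ((Finset.Icc 3 p).sigma (fun k => (A k).sigma (fun w => (Finset.Icc 2 (k-1)).sigma
        (fun j => ((A j).filter (H.Adj w)) ×ˢ (Finset.Icc 1 (min (j-1) β)))))).image
      (fun x => insert x.2.1 (insert x.2.2.2.1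
        ((A x.2.2.2.2).filter (fun u => H.Adj u x.2.1 ∧ H.Adj u x.2.2.2.1)))) with hC4
  set 𝒞 : Finset (Finset V) := C1 ∪ C2 ∪ C3a ∪ C3b ∪ C4 with h𝒞
  have hcov : IsCliqueCover H 3 𝒞 := by
    constructor
    · -- all members are cliques
      intro K hK
      rw [h𝒞] at hK
      simp only [Finset.mem_union] at hK
      rcases hK with ((((hK | hK) | hK) | hK) | hK)
      · rw [hC1, Finset.mem_image] at hK
        obtain ⟨i, hi, rfl⟩ := hK
        rw [Finset.mem_Icc] at hi
        exact hclq' i hi.1 (hi.2.trans hβp)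
      · rw [hC2, Finset.mem_image] at hK
        obtain ⟨x, hx, rfl⟩ := hK
        rw [Finset.mem_sigma, Finset.mem_Icc] at hx
        rw [Finset.coe_insert]
        refine ((hclq' x.1 hx.1.1 (hx.1.2.trans hβp)).subset
          (Finset.coe_subset.mpr (Finset.filter_subset _ _))).insert ?_
        intro b hb _
        exact (Finset.mem_filter.mp (Finset.mem_coe.mp hb)).2
      · rw [hC3a, Finset.mem_image] at hK
        obtain ⟨x, hx, rfl⟩ := hK
        rw [Finset.mem_sigma, Finset.mem_Icc] at hx
        have hx1 : 1 ≤ x.1 := by omega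
        have hx2 : x.1 ≤ p := le_trans hx.1.2 hαp
        rw [Finset.coe_insert]
        refine ((hclq' x.1 hx1 hx2).subset
          (Finset.coe_subset.mpr (Finset.filter_subset _ _))).insert ?_
        intro b hb _
        exact (Finset.mem_filter.mp (Finset.mem_coe.mp hb)).2
      · rw [hC3b, Finset.mem_image] at hK
        obtain ⟨x, hx, rfl⟩ := hK
        rw [Finset.mem_sigma, Finset.mem_Ioc, Finset.mem_product] at hx
        obtain ⟨⟨hj1, hjγ⟩, he, hi⟩ := hx
        rw [Finset.mem_powersetCard] at he
        rw [Finset.mem_Icc] at hi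
        have hip : x.2.2 ≤ p := by
          have : x.2.2 ≤ min (x.1 - 1) β := hi.2
          have := le_trans this (min_le_right _ _)
          omega
        rw [SimpleGraph.isClique_iff]
        intro u hu v hv hne
        simp only [Finset.coe_union, Set.mem_union, Finset.mem_coe, Finset.mem_filter] at hu hv
        rcases hu with hu | hu <;> rcases hv with hv | hv
        · exact hclq' x.1 (by omega) (le_trans hjγ hγp)
            (Finset.mem_coe.mpr (he.1 hu)) (Finset.mem_coe.mpr (he.1 hv)) hne
        · exact (hv.2 u hu).symm
        · exact hu.2 v hv
        · exact hclq' x.2.2 hi.1 hip (Finset.mem_coe.mpr hu.1) (Finset.mem_coe.mpr hv.1) hne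
      · rw [hC4, Finset.mem_image] at hK
        obtain ⟨x, hx, rfl⟩ := hK
        obtain ⟨k, w, j, v, i⟩ := x
        simp only [Finset.mem_sigma, Finset.mem_product, Finset.mem_Icc, Finset.mem_filter] at hx
        obtain ⟨⟨hk3, hkp⟩, hwk, ⟨hj2, hjk⟩, ⟨hvj, hadjwv⟩, hi1, himin⟩ := hx
        have hjp : j ≤ p := by omega
        have hip : i ≤ p := by
          have := le_trans himin (min_le_right _ _)
          omega
        have hwv : w ≠ v := by
          rintro rfl; exact H.irrefl hadjwv
        rw [SimpleGraph.isClique_iff]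
        intro x hx y hy hne
        simp only [Finset.coe_insert, Set.mem_insert_iff, Finset.mem_coe,
          Finset.mem_filter] at hx hy
        rcases hx with rfl | rfl | hx <;> rcases hy with rfl | rfl | hy
        · exact absurd rfl hne
        · exact hadjwv
        · exact (hy.2.1).symm
        · exact hadjwv.symm
        · exact absurd rfl hne
        · exact (hy.2.2).symm
        · exact hx.2.1
        · exact hx.2.2
        · exact hclq' i (by omega) hip (Finset.mem_coe.mpr hx.1) (Finset.mem_coe.mpr hy.1) hne
    · -- every triangle is covered
      intro T hT
      have hm1 : ∀ K, K ∈ C1 → K ∈ 𝒞 := by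
        intro K hK; rw [h𝒞]
        exact Finset.mem_union_left _ (Finset.mem_union_left _ (Finset.mem_union_left _
          (Finset.mem_union_left _ hK)))
      have hm2 : ∀ K, K ∈ C2 → K ∈ 𝒞 := by
        intro K hK; rw [h𝒞]
        exact Finset.mem_union_left _ (Finset.mem_union_left _ (Finset.mem_union_left _
          (Finset.mem_union_right _ hK)))
      have hm3 : ∀ K, K ∈ C3a → K ∈ 𝒞 := by
        intro K hK; rw [h𝒞]
        exact Finset.mem_union_left _ (Finset.mem_union_left _ (Finset.mem_union_right _ hK))
      have hm4 : ∀ K, K ∈ C3b → K ∈ 𝒞 := by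
        intro K hK; rw [h𝒞]
        exact Finset.mem_union_left _ (Finset.mem_union_right _ hK)
      have hm5 : ∀ K, K ∈ C4 → K ∈ 𝒞 := by
        intro K hK; rw [h𝒞]
        exact Finset.mem_union_right _ hK
      have hsorted : ∃ x y z : V, x ≠ y ∧ x ≠ z ∧ y ≠ z ∧ T = {x,y,z} ∧
          idx x ≤ idx y ∧ idx y ≤ idx z := by
        obtain ⟨x, y, z, hxy, hxz, hyz, hTeq⟩ := Finset.card_eq_three.mp hT.2
        rcases le_total (idx x) (idx y) with h1 | h1 <;>
        rcases le_total (idx x) (idx z) with h2 | h2 <;>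
        rcases le_total (idx y) (idx z) with h3 | h3
        · exact ⟨x, y, z, hxy, hxz, hyz, hTeq, h1, h3⟩
        · exact ⟨x, z, y, hxz, hxy, hyz.symm, by rw [hTeq]; ext w; simp; tauto, h2, h3⟩
        · exact ⟨x, y, z, hxy, hxz, hyz, hTeq, h1, h3⟩
        · exact ⟨z, x, y, hxz.symm, hyz.symm, hxy, by rw [hTeq]; ext w; simp; tauto, h2, h1⟩
        · exact ⟨y, x, z, hxy.symm, hyz, hxz, by rw [hTeq]; ext w; simp; tauto, h1, h2⟩
        · exact ⟨y, x, z, hxy.symm, hyz, hxz, by rw [hTeq]; ext w; simp; tauto, h1, h2⟩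
        · exact ⟨y, z, x, hyz, hxy.symm, hxz.symm, by rw [hTeq]; ext w; simp; tauto, h3, h2⟩
        · exact ⟨z, y, x, hyz.symm, hxz.symm, hxy.symm, by rw [hTeq]; ext w; simp; tauto, h3, h1⟩
      obtain ⟨x, y, z, hxy, hxz, hyz, hTeq, hixy, hiyz⟩ := hsorted
      have hxr := hidxr x
      have hyr := hidxr y
      have hzr := hidxr z
      have hxT : x ∈ T := by rw [hTeq]; simp
      have hyT : y ∈ T := by rw [hTeq]; simp
      have hzT : z ∈ T := by rw [hTeq]; simp
      have haxy : H.Adj x y := hT.1 (Finset.mem_coe.mpr hxT) (Finset.mem_coe.mpr hyT) hxy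
      have haxz : H.Adj x z := hT.1 (Finset.mem_coe.mpr hxT) (Finset.mem_coe.mpr hzT) hxz
      have hayz : H.Adj y z := hT.1 (Finset.mem_coe.mpr hyT) (Finset.mem_coe.mpr hzT) hyz
      have h3x : 3 ≤ a (idx x) := by
        have h := haux (idx x) (hidxr x).1 (hidxr x).2 T hT.1 ?_
        · have hc := hT.2
          omega
        · intro v hv
          rw [hTeq] at hv
          simp only [Finset.mem_insert, Finset.mem_singleton] at hv
          rcases hv with rfl | rfl | rfl
          · exact le_refl _
          · exact hixy
          · exact le_trans hixy hiyz
      have hxβ : idx x ≤ β := ((hchar (idx x) (hidxr x).1 (hidxr x).2).2.1).mp h3x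
      have hTsub : ∀ v ∈ T, v = x ∨ v = y ∨ v = z := by
        intro v hv
        rw [hTeq] at hv
        simpa using hv
      by_cases e12 : idx x = idx y
      · by_cases e23 : idx y = idx z
        · -- all three in the same part
          refine ⟨A (idx x), hm1 _ ?_, ?_⟩
          · rw [hC1]
            exact Finset.mem_image_of_mem A (Finset.mem_Icc.mpr ⟨(hidxr x).1, hxβ⟩)
          · intro v hv
            rcases hTsub v hv with h | h | h
            · rw [h]; exact hidxm x
            · rw [h, e12]; exact hidxm y
            · rw [h, e12, e23]; exact hidxm z
        · -- two in A (idx x), one later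
          have h23 : idx y < idx z := lt_of_le_of_ne hiyz e23
          refine ⟨insert z ((A (idx x)).filter (H.Adj z)), hm2 _ ?_, ?_⟩
          · rw [hC2]
            refine Finset.mem_image_of_mem
              (fun q : (_ : ℕ) × V => insert q.2 ((A q.1).filter (H.Adj q.2)))
              (a := ⟨idx x, z⟩) ?_
            refine Finset.mem_sigma.mpr ⟨Finset.mem_Icc.mpr ⟨(hidxr x).1, hxβ⟩, ?_⟩
            exact Finset.mem_biUnion.mpr ⟨idx z,
              Finset.mem_Ioc.mpr ⟨by show idx x < idx z; omega, (hidxr z).2⟩, hidxm z⟩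
          · intro v hv
            rcases hTsub v hv with h | h | h
            · rw [h]
              exact Finset.mem_insert_of_mem (Finset.mem_filter.mpr ⟨hidxm x, haxz.symm⟩)
            · rw [h]
              refine Finset.mem_insert_of_mem (Finset.mem_filter.mpr ⟨?_, hayz.symm⟩)
              rw [e12]; exact hidxm y
            · rw [h]
              exact Finset.mem_insert_self _ _
      · have h12 : idx x < idx y := lt_of_le_of_ne hixy e12
        by_cases e23 : idx y = idx z
        · -- one in A (idx x), two in A (idx y)
          have h2y : 2 ≤ a (idx y) := by
            have hsub : ({y, z} : Finset V) ⊆ A (idx y) := by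
              intro v hv
              simp only [Finset.mem_insert, Finset.mem_singleton] at hv
              rcases hv with h | h
              · rw [h]; exact hidxm y
              · rw [h, e23]; exact hidxm z
            have h1 := Finset.card_le_card hsub
            rw [Finset.card_pair hyz] at h1
            exact h1
          have hyγ : idx y ≤ γ := ((hchar (idx y) (hidxr y).1 (hidxr y).2).2.2).mp h2y
          by_cases e4 : a (idx y) = 4
          · -- part of size 4 : use C3a
            have hyα : idx y ≤ α := ((hchar (idx y) (hidxr y).1 (hidxr y).2).1).mp e4
            refine ⟨insert x ((A (idx y)).filter (H.Adj x)), hm3 _ ?_, ?_⟩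
            · rw [hC3a]
              refine Finset.mem_image_of_mem
                (fun q : (_ : ℕ) × V => insert q.2 ((A q.1).filter (H.Adj q.2)))
                (a := ⟨idx y, x⟩) ?_
              refine Finset.mem_sigma.mpr
                ⟨Finset.mem_Icc.mpr ⟨by show 2 ≤ idx y; omega, hyα⟩, ?_⟩
              exact Finset.mem_biUnion.mpr ⟨idx x,
                Finset.mem_Icc.mpr ⟨(hidxr x).1, by show idx x ≤ idx y - 1; omega⟩, hidxm x⟩
            · intro v hv
              rcases hTsub v hv with h | h | h
              · rw [h]
                exact Finset.mem_insert_self _ _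
              · rw [h]
                exact Finset.mem_insert_of_mem (Finset.mem_filter.mpr ⟨hidxm y, haxy⟩)
              · rw [h]
                refine Finset.mem_insert_of_mem (Finset.mem_filter.mpr ⟨?_, haxz⟩)
                rw [e23]; exact hidxm z
          · -- part of size ≤ 3 : use C3b
            have hyα : α < idx y := by
              by_contra hcon
              push_neg at hcon
              exact e4 (((hchar (idx y) (hidxr y).1 (hidxr y).2).1).mpr hcon)
            have hesub : ({y, z} : Finset V) ⊆ A (idx y) := by
              intro v hv
              simp only [Finset.mem_insert, Finset.mem_singleton] at hv
              rcases hv with h | h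
              · rw [h]; exact hidxm y
              · rw [h, e23]; exact hidxm z
            refine ⟨({y, z} : Finset V) ∪
              ((A (idx x)).filter (fun u => ∀ w ∈ ({y, z} : Finset V), H.Adj u w)),
              hm4 _ ?_, ?_⟩
            · rw [hC3b]
              refine Finset.mem_image_of_mem
                (fun q : (_ : ℕ) × Finset V × ℕ =>
                  q.2.1 ∪ ((A q.2.2).filter (fun u => ∀ y ∈ q.2.1, H.Adj u y)))
                (a := ⟨idx y, (({y, z} : Finset V), idx x)⟩) ?_
              refine Finset.mem_sigma.mpr ⟨Finset.mem_Ioc.mpr ⟨hyα, hyγ⟩, ?_⟩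
              refine Finset.mem_product.mpr ⟨?_, ?_⟩
              · exact Finset.mem_powersetCard.mpr ⟨hesub, Finset.card_pair hyz⟩
              · exact Finset.mem_Icc.mpr ⟨(hidxr x).1,
                  le_min (by show idx x ≤ idx y - 1; omega) hxβ⟩
            · intro v hv
              rcases hTsub v hv with h | h | h
              · rw [h]
                refine Finset.mem_union_right _ (Finset.mem_filter.mpr ⟨hidxm x, ?_⟩)
                intro w hw
                simp only [Finset.mem_insert, Finset.mem_singleton] at hw
                rcases hw with rfl | rfl
                · exact haxy
                · exact haxz
              · rw [h]
                exact Finset.mem_union_left _ (by simp)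
              · rw [h]
                exact Finset.mem_union_left _ (by simp)
        · -- three different parts : use C4
          have h23 : idx y < idx z := lt_of_le_of_ne hiyz e23
          refine ⟨insert z (insert y
            ((A (idx x)).filter (fun u => H.Adj u z ∧ H.Adj u y))), hm5 _ ?_, ?_⟩
          · rw [hC4]
            refine Finset.mem_image_of_mem
              (fun q : (_ : ℕ) × (_ : V) × (_ : ℕ) × V × ℕ =>
                insert q.2.1 (insert q.2.2.2.1
                  ((A q.2.2.2.2).filter (fun u => H.Adj u q.2.1 ∧ H.Adj u q.2.2.2.1))))
              (a := ⟨idx z, z, idx y, (y, idx x)⟩) ?_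
            refine Finset.mem_sigma.mpr
              ⟨Finset.mem_Icc.mpr ⟨by show 3 ≤ idx z; omega, (hidxr z).2⟩, ?_⟩
            refine Finset.mem_sigma.mpr ⟨hidxm z, ?_⟩
            refine Finset.mem_sigma.mpr ⟨Finset.mem_Icc.mpr
              ⟨by show 2 ≤ idx y; omega, by show idx y ≤ idx z - 1; omega⟩, ?_⟩
            refine Finset.mem_product.mpr ⟨?_, ?_⟩
            · exact Finset.mem_filter.mpr ⟨hidxm y, hayz.symm⟩
            · exact Finset.mem_Icc.mpr ⟨(hidxr x).1,
                le_min (by show idx x ≤ idx y - 1; omega) hxβ⟩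
          · intro v hv
            rcases hTsub v hv with h | h | h
            · rw [h]
              exact Finset.mem_insert_of_mem (Finset.mem_insert_of_mem
                (Finset.mem_filter.mpr ⟨hidxm x, haxz, haxy⟩))
            · rw [h]
              exact Finset.mem_insert_of_mem (Finset.mem_insert_self _ _)
            · rw [h]
              exact Finset.mem_insert_self _ _
  -- value lemmas
  have hge3 : ∀ j, 1 ≤ j → j ≤ β → 3 ≤ a j := fun j h1 h2 =>
    ((hchar j h1 (h2.trans hβp)).2.1).mpr h2
  have hge2 : ∀ j, 1 ≤ j → j ≤ γ → 2 ≤ a j := fun j h1 h2 =>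
    ((hchar j h1 (h2.trans hγp)).2.2).mpr h2
  have heq4 : ∀ j, 1 ≤ j → j ≤ α → a j = 4 := fun j h1 h2 =>
    ((hchar j h1 (h2.trans hαp)).1).mpr h2
  have heq3 : ∀ j, α < j → j ≤ β → a j = 3 := by
    intro j h1 h2
    have h3 := hge3 j (by omega) h2
    have h4 := hle4 j (by omega) (h2.trans hβp)
    have h5 : ¬ (a j = 4) := fun h => by
      have := ((hchar j (by omega) (h2.trans hβp)).1).mp h; omega
    omega
  have heq2 : ∀ j, β < j → j ≤ γ → a j = 2 := by
    intro j h1 h2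
    have h3 := hge2 j (by omega) h2
    have h5 : ¬ (3 ≤ a j) := fun h => by
      have := ((hchar j (by omega) (h2.trans hγp)).2.1).mp h; omega
    omega
  have hle1 : ∀ j, γ < j → j ≤ p → a j ≤ 1 := by
    intro j h1 h2
    have h5 : ¬ (2 ≤ a j) := fun h => by
      have := ((hchar j (by omega) h2).2.2).mp h; omega
    omega
  -- summation helpers
  have hsum_split : ∀ (v w : ℕ) (f : ℕ → ℤ), v ≤ w →
      ∑ k ∈ Finset.Icc 1 v, f k + ∑ k ∈ Finset.Icc (v+1) w, f k = ∑ k ∈ Finset.Icc 1 w, f k := by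
    intro v w f hvw
    have e1 : Finset.Icc 1 v = Finset.Ioc 0 v := by ext x; simp [Finset.mem_Icc, Finset.mem_Ioc]; omega
    have e2 : Finset.Icc (v+1) w = Finset.Ioc v w := by
      ext x; simp [Finset.mem_Icc, Finset.mem_Ioc]
    have e3 : Finset.Icc 1 w = Finset.Ioc 0 w := by ext x; simp [Finset.mem_Icc, Finset.mem_Ioc]; omega
    rw [e1, e2, e3]
    exact Finset.sum_Ioc_consecutive f (Nat.zero_le v) hvw
  have hsum_split2 : ∀ (u v w : ℕ) (f : ℕ → ℤ), u ≤ v → v ≤ w →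
      ∑ k ∈ Finset.Icc (u+1) v, f k + ∑ k ∈ Finset.Icc (v+1) w, f k
        = ∑ k ∈ Finset.Icc (u+1) w, f k := by
    intro u v w f huv hvw
    have e1 : Finset.Icc (u+1) v = Finset.Ioc u v := by
      ext x; simp [Finset.mem_Icc, Finset.mem_Ioc]
    have e2 : Finset.Icc (v+1) w = Finset.Ioc v w := by
      ext x; simp [Finset.mem_Icc, Finset.mem_Ioc]
    have e3 : Finset.Icc (u+1) w = Finset.Ioc u w := by
      ext x; simp [Finset.mem_Icc, Finset.mem_Ioc]
    rw [e1, e2, e3]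
    exact Finset.sum_Ioc_consecutive f huv hvw
  -- prefix sums of a
  have hD4 : ∀ j, j ≤ α → ∑ k ∈ Finset.Icc 1 j, (a k : ℤ) = 4 * (j : ℤ) := by
    intro j hj
    have e : ∀ k ∈ Finset.Icc 1 j, (a k : ℤ) = 4 := by
      intro k hk
      rw [Finset.mem_Icc] at hk
      exact_mod_cast congrArg (Nat.cast (R := ℤ)) (heq4 k hk.1 (hk.2.trans hj))
    rw [Finset.sum_congr rfl e, Finset.sum_const, Nat.card_Icc, Nat.add_sub_cancel,
      nsmul_eq_mul]
    ring
  have hD3 : ∀ j, α ≤ j → j ≤ β → ∑ k ∈ Finset.Icc 1 j, (a k : ℤ) = (α : ℤ) + 3 * (j : ℤ) := by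
    intro j h1 h2
    have e : ∀ k ∈ Finset.Icc (α+1) j, (a k : ℤ) = 3 := by
      intro k hk
      rw [Finset.mem_Icc] at hk
      exact_mod_cast congrArg (Nat.cast (R := ℤ)) (heq3 k (by omega) (hk.2.trans h2))
    have hs := hsum_split α j (fun k => (a k : ℤ)) h1
    rw [hD4 α le_rfl, Finset.sum_congr rfl e, Finset.sum_const, Nat.card_Icc,
      nsmul_eq_mul] at hs
    have hcast : ((j + 1 - (α+1) : ℕ) : ℤ) = (j : ℤ) - α := by
      have : j + 1 - (α+1) = j - α := by omega
      rw [this, Nat.cast_sub h1]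
    rw [hcast] at hs
    linarith
  have hGa := myGauss1 α
  have hGb := myGauss1 β
  have hG2a := myGauss2 α
  have hG2b := myGauss2 β
  -- the double prefix sum
  have h2D : 2 * ∑ j ∈ Finset.Icc 1 β, (∑ k ∈ Finset.Icc 1 j, (a k : ℤ))
      = -(α:ℤ)^2 + α + 2*α*β + 3*(β:ℤ)^2 + 3*β := by
    have hs := hsum_split α β (fun j => ∑ k ∈ Finset.Icc 1 j, (a k : ℤ)) hαβ
    have s1 : ∑ j ∈ Finset.Icc 1 α, (∑ k ∈ Finset.Icc 1 j, (a k : ℤ))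
        = 4 * ∑ j ∈ Finset.Icc 1 α, (j : ℤ) := by
      rw [Finset.mul_sum]
      exact Finset.sum_congr rfl (fun j hj => hD4 j (Finset.mem_Icc.mp hj).2)
    have s2 : ∑ j ∈ Finset.Icc (α+1) β, (∑ k ∈ Finset.Icc 1 j, (a k : ℤ))
        = ∑ j ∈ Finset.Icc (α+1) β, ((α:ℤ) + 3 * (j:ℤ)) := by
      refine Finset.sum_congr rfl (fun j hj => ?_)
      rw [Finset.mem_Icc] at hj
      exact hD3 j (by omega) hj.2
    have s3 : ∑ j ∈ Finset.Icc (α+1) β, ((α:ℤ) + 3 * (j:ℤ))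
        = ((β:ℤ) - α) * α + 3 * ∑ j ∈ Finset.Icc (α+1) β, (j:ℤ) := by
      rw [Finset.sum_add_distrib, Finset.sum_const, Finset.mul_sum, Nat.card_Icc, nsmul_eq_mul]
      have hcast : ((β + 1 - (α+1) : ℕ) : ℤ) = (β : ℤ) - α := by
        have : β + 1 - (α+1) = β - α := by omega
        rw [this, Nat.cast_sub hαβ]
      rw [hcast]
    have s4 := hsum_split α β (fun j => (j : ℤ)) hαβ
    -- combine
    rw [← hs, s1, s2, s3]
    nlinarith [hGa, hGb, s4]
  -- piece N2
  have hN2 : ((∑ j ∈ Finset.Icc 1 β, ∑ k ∈ Finset.Ioc j p, a k : ℕ) : ℤ)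
      = (β:ℤ) * (Fintype.card V : ℤ)
        - ∑ j ∈ Finset.Icc 1 β, (∑ k ∈ Finset.Icc 1 j, (a k : ℤ)) := by
    push_cast
    have e : ∀ j ∈ Finset.Icc 1 β, ∑ k ∈ Finset.Ioc j p, (a k : ℤ)
        = (Fintype.card V : ℤ) - ∑ k ∈ Finset.Icc 1 j, (a k : ℤ) := by
      intro j hj
      rw [Finset.mem_Icc] at hj
      have e2 : Finset.Icc (j+1) p = Finset.Ioc j p := by
        ext x; simp [Finset.mem_Icc, Finset.mem_Ioc]
      have hs := hsum_split j p (fun k => (a k : ℤ)) (hj.2.trans hβp)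
      rw [e2] at hs
      have hmz : ∑ k ∈ Finset.Icc 1 p, (a k : ℤ) = (Fintype.card V : ℤ) := by
        rw [← hm]; push_cast; rfl
      linarith
    rw [Finset.sum_congr rfl e, Finset.sum_sub_distrib, Finset.sum_const, Nat.card_Icc,
      Nat.add_sub_cancel, nsmul_eq_mul]
  -- piece N3a
  have hN3a : ((∑ j ∈ Finset.Icc 2 α, ∑ i ∈ Finset.Icc 1 (j-1), a i : ℕ) : ℤ)
      = 4 * ∑ j ∈ Finset.Icc 1 α, ((j:ℤ) - 1) := by
    push_cast
    have e : ∀ j ∈ Finset.Icc 2 α, ∑ i ∈ Finset.Icc 1 (j-1), (a i : ℤ) = 4 * ((j:ℤ) - 1) := by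
      intro j hj
      rw [Finset.mem_Icc] at hj
      have := hD4 (j-1) (by omega)
      rw [this, Nat.cast_sub (by omega : 1 ≤ j)]
      push_cast; ring
    rw [Finset.sum_congr rfl e, Finset.mul_sum]
    refine Finset.sum_subset ?_ ?_
    · intro x hx
      rw [Finset.mem_Icc] at *
      omega
    · intro x hx hnx
      rw [Finset.mem_Icc] at hx
      have hx1 : x = 1 := by
        by_contra hc
        exact hnx (Finset.mem_Icc.mpr ⟨by omega, hx.2⟩)
      rw [hx1]
      norm_num
  -- piece N3b
  have hIocIcc : ∀ u v : ℕ, Finset.Ioc u v = Finset.Icc (u+1) v := by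
    intro u v; ext x; simp [Finset.mem_Icc, Finset.mem_Ioc]
  have hN3b : ((∑ j ∈ Finset.Ioc α γ, (a j).choose 2 * (min (j-1) β) : ℕ) : ℤ)
      = (3 * ∑ j ∈ Finset.Icc 1 β, ((j:ℤ) - 1) - 3 * ∑ j ∈ Finset.Icc 1 α, ((j:ℤ) - 1))
        + ((γ:ℤ) - β) * β := by
    rw [Nat.cast_sum, hIocIcc]
    have hs := hsum_split2 α β γ (fun j => (((a j).choose 2 * (min (j-1) β) : ℕ) : ℤ)) hαβ hβγ
    have p1 : ∑ j ∈ Finset.Icc (α+1) β, (((a j).choose 2 * (min (j-1) β) : ℕ) : ℤ)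
        = ∑ j ∈ Finset.Icc (α+1) β, 3 * ((j:ℤ) - 1) := by
      refine Finset.sum_congr rfl (fun j hj => ?_)
      rw [Finset.mem_Icc] at hj
      have e1 : a j = 3 := heq3 j (by omega) hj.2
      have e2 : min (j-1) β = j - 1 := min_eq_left (by omega)
      rw [e1, e2, Nat.cast_mul, Nat.cast_sub (by omega : 1 ≤ j)]
      norm_num [Nat.choose]
    have p2 : ∑ j ∈ Finset.Icc (β+1) γ, (((a j).choose 2 * (min (j-1) β) : ℕ) : ℤ)
        = ((γ:ℤ) - β) * β := by
      have e : ∀ j ∈ Finset.Icc (β+1) γ,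
          (((a j).choose 2 * (min (j-1) β) : ℕ) : ℤ) = (β:ℤ) := by
        intro j hj
        rw [Finset.mem_Icc] at hj
        have e1 : a j = 2 := heq2 j (by omega) hj.2
        have e2 : min (j-1) β = β := min_eq_right (by omega)
        rw [e1, e2]
        norm_num [Nat.choose]
      rw [Finset.sum_congr rfl e, Finset.sum_const, Nat.card_Icc, nsmul_eq_mul]
      have hcast : ((γ + 1 - (β+1) : ℕ) : ℤ) = (γ : ℤ) - β := by
        have h9 : γ + 1 - (β+1) = γ - β := by omega
        rw [h9, Nat.cast_sub hβγ]
      rw [hcast]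
    have p3 : ∑ j ∈ Finset.Icc (α+1) β, (3:ℤ) * ((j:ℤ) - 1)
        = 3 * ∑ j ∈ Finset.Icc 1 β, ((j:ℤ) - 1) - 3 * ∑ j ∈ Finset.Icc 1 α, ((j:ℤ) - 1) := by
      have hs2 := hsum_split α β (fun j => ((j:ℤ) - 1)) hαβ
      rw [← Finset.mul_sum]
      linarith
    rw [← hs, p1, p2, p3]
  -- cardinality bounds for the pieces
  have hc1 : C1.card ≤ β := by
    rw [hC1]
    refine le_trans Finset.card_image_le ?_
    rw [Nat.card_Icc, Nat.add_sub_cancel]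
  have hc2 : C2.card ≤ ∑ j ∈ Finset.Icc 1 β, ∑ k ∈ Finset.Ioc j p, a k := by
    rw [hC2]
    refine le_trans Finset.card_image_le ?_
    rw [Finset.card_sigma]
    refine le_of_eq (Finset.sum_congr rfl ?_)
    intro j hj
    rw [Finset.mem_Icc] at hj
    rw [Finset.card_biUnion]
    intro x hx y hy hne
    rw [Finset.mem_coe, Finset.mem_Ioc] at hx hy
    exact hdisj x (Finset.mem_Icc.mpr ⟨by omega, hx.2⟩) y (Finset.mem_Icc.mpr ⟨by omega, hy.2⟩) hne
  have hc3a : C3a.card ≤ ∑ j ∈ Finset.Icc 2 α, ∑ i ∈ Finset.Icc 1 (j-1), a i := by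
    rw [hC3a]
    refine le_trans Finset.card_image_le ?_
    rw [Finset.card_sigma]
    refine le_of_eq (Finset.sum_congr rfl ?_)
    intro j hj
    rw [Finset.mem_Icc] at hj
    rw [Finset.card_biUnion]
    intro x hx y hy hne
    rw [Finset.mem_coe, Finset.mem_Icc] at hx hy
    have hjp : j ≤ p := hj.2.trans hαp
    exact hdisj x (Finset.mem_Icc.mpr ⟨hx.1, by omega⟩) y (Finset.mem_Icc.mpr ⟨hy.1, by omega⟩) hne
  have hc3b : C3b.card ≤ ∑ j ∈ Finset.Ioc α γ, (a j).choose 2 * (min (j-1) β) := by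
    rw [hC3b]
    refine le_trans Finset.card_image_le ?_
    rw [Finset.card_sigma]
    refine le_of_eq (Finset.sum_congr rfl ?_)
    intro j hj
    rw [Finset.card_product, Finset.card_powersetCard, Nat.card_Icc, Nat.add_sub_cancel]
  have hc4 : C4.card ≤ ∑ k ∈ Finset.Icc 3 p, ∑ w ∈ A k, ∑ j ∈ Finset.Icc 2 (k-1),
      ((A j).filter (H.Adj w)).card * (min (j-1) β) := by
    rw [hC4]
    refine le_trans Finset.card_image_le ?_
    rw [Finset.card_sigma]
    refine le_of_eq (Finset.sum_congr rfl ?_)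
    intro k hk
    rw [Finset.card_sigma]
    refine Finset.sum_congr rfl ?_
    intro w hw
    rw [Finset.card_sigma]
    refine Finset.sum_congr rfl ?_
    intro j hj
    rw [Finset.card_product, Nat.card_Icc, Nat.add_sub_cancel]
  have hccard : 𝒞.card ≤ β + (∑ j ∈ Finset.Icc 1 β, ∑ k ∈ Finset.Ioc j p, a k)
      + (∑ j ∈ Finset.Icc 2 α, ∑ i ∈ Finset.Icc 1 (j-1), a i)
      + (∑ j ∈ Finset.Ioc α γ, (a j).choose 2 * (min (j-1) β))
      + (∑ k ∈ Finset.Icc 3 p, ∑ w ∈ A k, ∑ j ∈ Finset.Icc 2 (k-1),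
          ((A j).filter (H.Adj w)).card * (min (j-1) β)) := by
    have u1 := Finset.card_union_le (C1 ∪ C2 ∪ C3a ∪ C3b) C4
    have u2 := Finset.card_union_le (C1 ∪ C2 ∪ C3a) C3b
    have u3 := Finset.card_union_le (C1 ∪ C2) C3a
    have u4 := Finset.card_union_le C1 C2
    rw [h𝒞]
    omega
  -- inequality I : the first four pieces are at most S1 + S2
  have hI : (β : ℤ) + ((∑ j ∈ Finset.Icc 1 β, ∑ k ∈ Finset.Ioc j p, a k : ℕ) : ℤ)
      + ((∑ j ∈ Finset.Icc 2 α, ∑ i ∈ Finset.Icc 1 (j-1), a i : ℕ) : ℤ)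
      + ((∑ j ∈ Finset.Ioc α γ, (a j).choose 2 * (min (j-1) β) : ℕ) : ℤ)
      ≤ S1 p a + S2 (Fintype.card V) p a := by
    have hS12 : S1 p a + S2 (Fintype.card V) p a
        = (Fintype.card V : ℤ) * β + (α:ℤ)^2 - (α:ℤ)*β - (β:ℤ)^2 + (β:ℤ)*γ - α - 2*β := by
      simp only [S1, S2, ← hαdef, ← hβdef, ← hγdef]
      ring
    rw [hS12, hN2, hN3a, hN3b]
    nlinarith [h2D, hG2a, hG2b]
  -- inequality II : the last piece is at most S3
  have hUb : ∀ k, 3 ≤ k → k ≤ p →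
      (∑ w ∈ A k, ∑ j ∈ Finset.Icc 2 (k-1), ((A j).filter (H.Adj w)).card * (min (j-1) β))
        ≤ a k * ∑ j ∈ Finset.Icc 2 (k-1), (a j - 1) * (min (j-1) β) := by
    intro k h3 hp
    have hW : ∀ w ∈ A k, ∑ j ∈ Finset.Icc 2 (k-1), ((A j).filter (H.Adj w)).card * (min (j-1) β)
        ≤ ∑ j ∈ Finset.Icc 2 (k-1), (a j - 1) * (min (j-1) β) := by
      intro w hw
      refine Finset.sum_le_sum ?_
      intro j hj
      rw [Finset.mem_Icc] at hj
      have hidxw : idx w = k := (huniq w k (by omega) hp hw).symm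
      have hg := hG1 j w (by omega) (by omega) (by omega)
      exact Nat.mul_le_mul_right _ (by omega)
    calc ∑ w ∈ A k, ∑ j ∈ Finset.Icc 2 (k-1), ((A j).filter (H.Adj w)).card * (min (j-1) β)
        ≤ ∑ _w ∈ A k, ∑ j ∈ Finset.Icc 2 (k-1), (a j - 1) * (min (j-1) β) :=
          Finset.sum_le_sum hW
      _ = a k * ∑ j ∈ Finset.Icc 2 (k-1), (a j - 1) * (min (j-1) β) := by
          rw [Finset.sum_const, smul_eq_mul]
  have hCast1 : ∀ n, n ≤ β → ((∑ j ∈ Finset.Icc 2 n, (a j - 1) * (min (j-1) β) : ℕ) : ℤ)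
      = ∑ j ∈ Finset.Icc 2 n, ((a j : ℤ) - 1) * ((j:ℤ) - 1) := by
    intro n hn
    rw [Nat.cast_sum]
    refine Finset.sum_congr rfl (fun j hj => ?_)
    rw [Finset.mem_Icc] at hj
    have h3 : 3 ≤ a j := hge3 j (by omega) (by omega)
    have e2 : min (j-1) β = j - 1 := min_eq_left (by omega)
    rw [e2, Nat.cast_mul, Nat.cast_sub (by omega : 1 ≤ a j),
      Nat.cast_sub (by omega : 1 ≤ j), Nat.cast_one]
  have hSplitInner : ∀ n, β ≤ n → n ≤ γ →
      ((∑ j ∈ Finset.Icc 2 n, (a j - 1) * (min (j-1) β) : ℕ) : ℤ)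
      = (∑ j ∈ Finset.Icc 2 β, ((a j : ℤ) - 1) * ((j:ℤ) - 1))
        + ∑ j ∈ Finset.Icc (β+1) n, ((a j : ℤ) - 1) * (β : ℤ) := by
    intro n hβn hnγ
    rcases Nat.eq_zero_or_pos β with hb0 | hb1
    · rw [Nat.cast_sum]
      have z1 : ∀ j ∈ Finset.Icc 2 n, (((a j - 1) * (min (j-1) β) : ℕ) : ℤ) = 0 := by
        intro j hj
        rw [hb0]
        simp
      have z2 : ∀ j ∈ Finset.Icc (β+1) n, ((a j : ℤ) - 1) * (β : ℤ) = 0 := by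
        intro j hj
        rw [hb0]
        push_cast
        ring
      rw [Finset.sum_congr rfl z1, Finset.sum_congr rfl z2]
      have : Finset.Icc 2 β = (∅ : Finset ℕ) := by
        rw [hb0]; rfl
      rw [this]
      simp
    · rw [Nat.cast_sum]
      have hs := hsum_split2 1 β n (fun j => (((a j - 1) * (min (j-1) β) : ℕ) : ℤ))
        (by omega) hβn
      have p1 : ∑ j ∈ Finset.Icc 2 β, (((a j - 1) * (min (j-1) β) : ℕ) : ℤ)
          = ∑ j ∈ Finset.Icc 2 β, ((a j : ℤ) - 1) * ((j:ℤ) - 1) := by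
        refine Finset.sum_congr rfl (fun j hj => ?_)
        rw [Finset.mem_Icc] at hj
        have h3 : 3 ≤ a j := hge3 j (by omega) hj.2
        have e2 : min (j-1) β = j - 1 := min_eq_left (by omega)
        rw [e2, Nat.cast_mul, Nat.cast_sub (by omega : 1 ≤ a j),
          Nat.cast_sub (by omega : 1 ≤ j), Nat.cast_one]
      have p2 : ∑ j ∈ Finset.Icc (β+1) n, (((a j - 1) * (min (j-1) β) : ℕ) : ℤ)
          = ∑ j ∈ Finset.Icc (β+1) n, ((a j : ℤ) - 1) * (β : ℤ) := by
        refine Finset.sum_congr rfl (fun j hj => ?_)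
        rw [Finset.mem_Icc] at hj
        have h2 : 2 ≤ a j := hge2 j (by omega) (by omega)
        have e2 : min (j-1) β = β := min_eq_right (by omega)
        rw [e2, Nat.cast_mul, Nat.cast_sub (by omega : 1 ≤ a j), Nat.cast_one]
      have e1 : Finset.Icc (1+1) β = Finset.Icc 2 β := by norm_num
      have e2 : Finset.Icc (1+1) n = Finset.Icc 2 n := by norm_num
      rw [e1, e2] at hs
      rw [← hs, p1, p2]
  -- sum over the three ranges
  have hsplit3 : ∀ g : ℕ → ℤ, ∑ k ∈ Finset.Icc 3 p, g k
      = ∑ k ∈ Finset.Icc 3 β, g k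
        + ∑ k ∈ (Finset.Icc (β+1) γ).filter (fun k => 3 ≤ k), g k
        + ∑ k ∈ (Finset.Icc (γ+1) p).filter (fun k => 3 ≤ k), g k := by
    intro g
    have hd1 : Disjoint (Finset.Icc 3 β) ((Finset.Icc (β+1) γ).filter (fun k => 3 ≤ k)) := by
      rw [Finset.disjoint_left]
      intro k hk hk'
      rw [Finset.mem_Icc] at hk
      rw [Finset.mem_filter, Finset.mem_Icc] at hk'
      omega
    have hd2 : Disjoint (Finset.Icc 3 β ∪ (Finset.Icc (β+1) γ).filter (fun k => 3 ≤ k))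
        ((Finset.Icc (γ+1) p).filter (fun k => 3 ≤ k)) := by
      rw [Finset.disjoint_left]
      intro k hk hk'
      simp only [Finset.mem_union, Finset.mem_filter, Finset.mem_Icc] at hk hk'
      omega
    have e : Finset.Icc 3 p = (Finset.Icc 3 β ∪ (Finset.Icc (β+1) γ).filter (fun k => 3 ≤ k))
        ∪ (Finset.Icc (γ+1) p).filter (fun k => 3 ≤ k) := by
      ext k
      simp only [Finset.mem_union, Finset.mem_filter, Finset.mem_Icc]
      omega
    rw [e, Finset.sum_union hd2, Finset.sum_union hd1]
  -- final bound for N4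
  have hII : ((∑ k ∈ Finset.Icc 3 p, ∑ w ∈ A k, ∑ j ∈ Finset.Icc 2 (k-1),
      ((A j).filter (H.Adj w)).card * (min (j-1) β) : ℕ) : ℤ) ≤ S3 p a := by
    have step1 : ((∑ k ∈ Finset.Icc 3 p, ∑ w ∈ A k, ∑ j ∈ Finset.Icc 2 (k-1),
        ((A j).filter (H.Adj w)).card * (min (j-1) β) : ℕ) : ℤ)
        ≤ ∑ k ∈ Finset.Icc 3 p,
            ((a k * ∑ j ∈ Finset.Icc 2 (k-1), (a j - 1) * (min (j-1) β) : ℕ) : ℤ) := by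
      rw [Nat.cast_sum]
      refine Finset.sum_le_sum (fun k hk => ?_)
      rw [Finset.mem_Icc] at hk
      exact_mod_cast hUb k hk.1 hk.2
    refine le_trans step1 ?_
    rw [hsplit3 (fun k => ((a k * ∑ j ∈ Finset.Icc 2 (k-1), (a j - 1) * (min (j-1) β) : ℕ) : ℤ))]
    have hS3 : S3 p a
        = (∑ k ∈ Finset.Icc 3 β,
            (a k : ℤ) * ∑ j ∈ Finset.Icc 2 (k - 1), ((a j : ℤ) - 1) * ((j : ℤ) - 1)) +
          (∑ k ∈ Finset.Icc (β + 1) γ, (a k : ℤ) *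
            ((∑ j ∈ Finset.Icc 2 β, ((a j : ℤ) - 1) * ((j : ℤ) - 1)) +
              ∑ j ∈ Finset.Icc (β + 1) (k - 1), ((a j : ℤ) - 1) * (β : ℤ))) +
          (∑ _k ∈ Finset.Icc (γ + 1) p,
            ((∑ j ∈ Finset.Icc 2 β, ((a j : ℤ) - 1) * ((j : ℤ) - 1)) +
              ∑ j ∈ Finset.Icc (β + 1) γ, ((a j : ℤ) - 1) * (β : ℤ))) := by
      simp only [S3, ← hαdef, ← hβdef, ← hγdef]
    rw [hS3]
    have part1 : ∑ k ∈ Finset.Icc 3 β,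
        ((a k * ∑ j ∈ Finset.Icc 2 (k-1), (a j - 1) * (min (j-1) β) : ℕ) : ℤ)
        = ∑ k ∈ Finset.Icc 3 β,
            (a k : ℤ) * ∑ j ∈ Finset.Icc 2 (k - 1), ((a j : ℤ) - 1) * ((j : ℤ) - 1) := by
      refine Finset.sum_congr rfl (fun k hk => ?_)
      rw [Finset.mem_Icc] at hk
      rw [Nat.cast_mul, hCast1 (k-1) (by omega)]
    have part2 : ∑ k ∈ (Finset.Icc (β+1) γ).filter (fun k => 3 ≤ k),
        ((a k * ∑ j ∈ Finset.Icc 2 (k-1), (a j - 1) * (min (j-1) β) : ℕ) : ℤ)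
        ≤ ∑ k ∈ Finset.Icc (β + 1) γ, (a k : ℤ) *
            ((∑ j ∈ Finset.Icc 2 β, ((a j : ℤ) - 1) * ((j : ℤ) - 1)) +
              ∑ j ∈ Finset.Icc (β + 1) (k - 1), ((a j : ℤ) - 1) * (β : ℤ)) := by
      have e : ∀ k ∈ (Finset.Icc (β+1) γ).filter (fun k => 3 ≤ k),
          ((a k * ∑ j ∈ Finset.Icc 2 (k-1), (a j - 1) * (min (j-1) β) : ℕ) : ℤ)
          = (a k : ℤ) *
            ((∑ j ∈ Finset.Icc 2 β, ((a j : ℤ) - 1) * ((j : ℤ) - 1)) +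
              ∑ j ∈ Finset.Icc (β + 1) (k - 1), ((a j : ℤ) - 1) * (β : ℤ)) := by
        intro k hk
        rw [Finset.mem_filter, Finset.mem_Icc] at hk
        rw [Nat.cast_mul, hSplitInner (k-1) (by omega) (by omega)]
      rw [Finset.sum_congr rfl e]
      refine Finset.sum_le_sum_of_subset_of_nonneg (Finset.filter_subset _ _) ?_
      intro k hk _
      rw [Finset.mem_Icc] at hk
      rw [← hSplitInner (k-1) (by omega) (by omega)]
      positivity
    have part3 : ∑ k ∈ (Finset.Icc (γ+1) p).filter (fun k => 3 ≤ k),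
        ((a k * ∑ j ∈ Finset.Icc 2 (k-1), (a j - 1) * (min (j-1) β) : ℕ) : ℤ)
        ≤ ∑ _k ∈ Finset.Icc (γ + 1) p,
            ((∑ j ∈ Finset.Icc 2 β, ((a j : ℤ) - 1) * ((j : ℤ) - 1)) +
              ∑ j ∈ Finset.Icc (β + 1) γ, ((a j : ℤ) - 1) * (β : ℤ)) := by
      have hbd : ∀ k ∈ (Finset.Icc (γ+1) p).filter (fun k => 3 ≤ k),
          ((a k * ∑ j ∈ Finset.Icc 2 (k-1), (a j - 1) * (min (j-1) β) : ℕ) : ℤ)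
          ≤ ((∑ j ∈ Finset.Icc 2 β, ((a j : ℤ) - 1) * ((j : ℤ) - 1)) +
              ∑ j ∈ Finset.Icc (β + 1) γ, ((a j : ℤ) - 1) * (β : ℤ)) := by
        intro k hk
        rw [Finset.mem_filter, Finset.mem_Icc] at hk
        have hz : ∑ j ∈ Finset.Icc 2 γ, (a j - 1) * (min (j-1) β)
            = ∑ j ∈ Finset.Icc 2 (k-1), (a j - 1) * (min (j-1) β) := by
          refine Finset.sum_subset ?_ ?_
          · intro x hx
            rw [Finset.mem_Icc] at *
            omega
          · intro x hx hnx
            rw [Finset.mem_Icc] at hx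
            have hxγ : γ < x := by
              by_contra hc
              exact hnx (Finset.mem_Icc.mpr ⟨hx.1, by omega⟩)
            have := hle1 x hxγ (by omega)
            have hz2 : a x - 1 = 0 := by omega
            rw [hz2, zero_mul]
        have hak : a k ≤ 1 := hle1 k (by omega) (by omega)
        calc ((a k * ∑ j ∈ Finset.Icc 2 (k-1), (a j - 1) * (min (j-1) β) : ℕ) : ℤ)
            ≤ ((1 * ∑ j ∈ Finset.Icc 2 (k-1), (a j - 1) * (min (j-1) β) : ℕ) : ℤ) := by
              exact_mod_cast Nat.mul_le_mul_right _ hak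
          _ = ((∑ j ∈ Finset.Icc 2 (k-1), (a j - 1) * (min (j-1) β) : ℕ) : ℤ) := by
              rw [one_mul]
          _ = ((∑ j ∈ Finset.Icc 2 γ, (a j - 1) * (min (j-1) β) : ℕ) : ℤ) := by rw [hz]
          _ = _ := hSplitInner γ hβγ le_rfl
      calc ∑ k ∈ (Finset.Icc (γ+1) p).filter (fun k => 3 ≤ k),
            ((a k * ∑ j ∈ Finset.Icc 2 (k-1), (a j - 1) * (min (j-1) β) : ℕ) : ℤ)
          ≤ ∑ _k ∈ (Finset.Icc (γ+1) p).filter (fun k => 3 ≤ k),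
            ((∑ j ∈ Finset.Icc 2 β, ((a j : ℤ) - 1) * ((j : ℤ) - 1)) +
              ∑ j ∈ Finset.Icc (β + 1) γ, ((a j : ℤ) - 1) * (β : ℤ)) := Finset.sum_le_sum hbd
        _ ≤ _ := by
            refine Finset.sum_le_sum_of_subset_of_nonneg (Finset.filter_subset _ _) ?_
            intro k hk _
            rw [← hSplitInner γ hβγ le_rfl]
            positivity
    exact add_le_add (add_le_add (le_of_eq part1) part2) part3
  -- assemble everything
  have hcn : coverNumber H 3 ≤ 𝒞.card := Nat.sInf_le ⟨𝒞, hcov, rfl⟩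
  have hfin : ((𝒞.card : ℕ) : ℤ) ≤ fval (Fintype.card V) p a := by
    have hcast : ((𝒞.card : ℕ) : ℤ) ≤ (β : ℤ)
        + ((∑ j ∈ Finset.Icc 1 β, ∑ k ∈ Finset.Ioc j p, a k : ℕ) : ℤ)
        + ((∑ j ∈ Finset.Icc 2 α, ∑ i ∈ Finset.Icc 1 (j-1), a i : ℕ) : ℤ)
        + ((∑ j ∈ Finset.Ioc α γ, (a j).choose 2 * (min (j-1) β) : ℕ) : ℤ)
        + ((∑ k ∈ Finset.Icc 3 p, ∑ w ∈ A k, ∑ j ∈ Finset.Icc 2 (k-1),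
            ((A j).filter (H.Adj w)).card * (min (j-1) β) : ℕ) : ℤ) := by
      exact_mod_cast hccard
    have hfv : fval (Fintype.card V) p a
        = S1 p a + S2 (Fintype.card V) p a + S3 p a := rfl
    rw [hfv]
    linarith
  calc (coverNumber H 3 : ℤ) ≤ ((𝒞.card : ℕ) : ℤ) := by exact_mod_cast hcn
    _ ≤ fval (Fintype.card V) p a := hfin
end

section
/- For any (m,p)-greedy sequence A, there exists an integer q ≤ p and an (m,q)-greedy sequence A' such that f(A) ≤ f(A') ≤ 28q³ − (45/2)q²m + 6qm² − (1/2)m³ + R_0, where R_0 = max{R_1, R_2, R_3} with R_1 = (3/2)qm − (1/2)m² − 3q + m, R_2 = −28q² + (33/2)qm − (5/2)m² + 6q − 2m, and R_3 = −56q² + (63/2)qm − (9/2)m² + 34q − 10m − 6. -/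
open Finset SimpleGraph

namespace Stmt10Aux

lemma sum_quad (α β γ : ℤ) (n : ℕ) :
    6 * ∑ k ∈ Finset.Ioc 0 n, (α * (k : ℤ) ^ 2 + β * (k : ℤ) + γ)
      = α * (2 * (n : ℤ) ^ 3 + 3 * (n : ℤ) ^ 2 + (n : ℤ))
        + β * (3 * (n : ℤ) ^ 2 + 3 * (n : ℤ)) + γ * (6 * (n : ℤ)) := by
  induction n with
  | zero => simp
  | succ n ih =>
    rw [Finset.sum_Ioc_succ_top (Nat.zero_le n)]
    push_cast
    push_cast at ih
    linear_combination ih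

lemma sum_quad' (α β γ : ℤ) {l n : ℕ} (h : l ≤ n) :
    6 * ∑ k ∈ Finset.Ioc l n, (α * (k : ℤ) ^ 2 + β * (k : ℤ) + γ)
      = (α * (2 * (n : ℤ) ^ 3 + 3 * (n : ℤ) ^ 2 + (n : ℤ))
          + β * (3 * (n : ℤ) ^ 2 + 3 * (n : ℤ)) + γ * (6 * (n : ℤ)))
        - (α * (2 * (l : ℤ) ^ 3 + 3 * (l : ℤ) ^ 2 + (l : ℤ))
          + β * (3 * (l : ℤ) ^ 2 + 3 * (l : ℤ)) + γ * (6 * (l : ℤ))) := by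
  have hsplit := Finset.sum_Ioc_consecutive (fun k : ℕ => α * (k : ℤ) ^ 2 + β * (k : ℤ) + γ)
    (Nat.zero_le l) h
  have h1 := sum_quad α β γ n
  have h2 := sum_quad α β γ l
  have h3 : 6 * ((∑ k ∈ Finset.Ioc 0 l, (α * (k : ℤ) ^ 2 + β * (k : ℤ) + γ))
      + ∑ k ∈ Finset.Ioc l n, (α * (k : ℤ) ^ 2 + β * (k : ℤ) + γ))
      = 6 * ∑ k ∈ Finset.Ioc 0 n, (α * (k : ℤ) ^ 2 + β * (k : ℤ) + γ) := by rw [hsplit]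
  linarith

lemma sum_Ioc_ext (g : ℕ → ℤ) (l n : ℕ) (h : ∀ k, 1 ≤ k → k ≤ l → g k = 0) :
    ∑ k ∈ Finset.Ioc l n, g k = ∑ k ∈ Finset.Ioc 0 n, g k := by
  rcases le_or_gt l n with hl | hl
  · rw [← Finset.sum_Ioc_consecutive g (Nat.zero_le l) hl,
      Finset.sum_eq_zero (fun k hk => h k (Finset.mem_Ioc.mp hk).1 (Finset.mem_Ioc.mp hk).2),
      zero_add]
  · rw [Finset.Ioc_eq_empty (by omega), Finset.sum_empty,
      Finset.sum_eq_zero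
        (fun k hk => h k (Finset.mem_Ioc.mp hk).1 (le_trans (Finset.mem_Ioc.mp hk).2 hl.le))]

lemma filter_dc {p : ℕ} (P : ℕ → Prop) [DecidablePred P]
    (h : ∀ i j : ℕ, 1 ≤ i → i ≤ j → j ≤ p → P j → P i) :
    (Finset.Icc 1 p).filter P = Finset.Icc 1 (((Finset.Icc 1 p).filter P).card) := by
  set S := (Finset.Icc 1 p).filter P with hS
  have hmem : ∀ j ∈ S, 1 ≤ j ∧ j ≤ p ∧ P j := by
    intro j hj
    rw [hS, Finset.mem_filter, Finset.mem_Icc] at hj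
    exact ⟨hj.1.1, hj.1.2, hj.2⟩
  have hsub : ∀ j ∈ S, Finset.Icc 1 j ⊆ S := by
    intro j hj i hi
    rw [Finset.mem_Icc] at hi
    obtain ⟨h1j, hjp, hPj⟩ := hmem j hj
    rw [hS, Finset.mem_filter, Finset.mem_Icc]
    exact ⟨⟨hi.1, le_trans hi.2 hjp⟩, h i j hi.1 hi.2 hjp hPj⟩
  have h1 : S ⊆ Finset.Icc 1 S.card := by
    intro j hj
    have hc := Finset.card_le_card (hsub j hj)
    rw [Nat.card_Icc] at hc
    rw [Finset.mem_Icc]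
    exact ⟨(hmem j hj).1, by omega⟩
  refine Finset.eq_of_subset_of_card_le h1 ?_
  rw [Nat.card_Icc]
  omega

/-- step sequence with `a` fours, then threes up to `b`, twos up to `c`, then ones. -/
def mkSeq (a b c : ℕ) : ℕ → ℕ :=
  fun i => if i ≤ a then 4 else if i ≤ b then 3 else if i ≤ c then 2 else 1

lemma mkSeq4 (a b c : ℕ) : ∀ i, 1 ≤ i → i ≤ a → mkSeq a b c i = 4 := by
  intro i _ h
  unfold mkSeq
  rw [if_pos h]

lemma mkSeq3 (a b c : ℕ) : ∀ i, a < i → i ≤ b → mkSeq a b c i = 3 := by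
  intro i h1 h2
  unfold mkSeq
  rw [if_neg (by omega), if_pos h2]

lemma mkSeq2 (a b c : ℕ) (hab : a ≤ b) : ∀ i, b < i → i ≤ c → mkSeq a b c i = 2 := by
  intro i h1 h2
  unfold mkSeq
  rw [if_neg (by omega), if_neg (by omega), if_pos h2]

lemma mkSeq1 (a b c : ℕ) (hab : a ≤ b) (hbc : b ≤ c) :
    ∀ i, c < i → mkSeq a b c i = 1 := by
  intro i h1
  unfold mkSeq
  rw [if_neg (by omega), if_neg (by omega), if_neg (by omega)]

lemma sum_step (q A B C : ℕ) (a : ℕ → ℕ) (hAB : A ≤ B) (hBC : B ≤ C) (hCq : C ≤ q)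
    (h4 : ∀ i, 1 ≤ i → i ≤ A → a i = 4) (h3 : ∀ i, A < i → i ≤ B → a i = 3)
    (h2 : ∀ i, B < i → i ≤ C → a i = 2) (h1 : ∀ i, C < i → i ≤ q → a i = 1) :
    ∑ i ∈ Finset.Icc 1 q, a i = A + B + C + q := by
  have hAq : A ≤ q := le_trans hAB (le_trans hBC hCq)
  have hBq : B ≤ q := le_trans hBC hCq
  rw [show Finset.Icc 1 q = Finset.Ioc 0 q from Finset.Icc_add_one_left_eq_Ioc 0 q]
  rw [← Finset.sum_Ioc_consecutive a (Nat.zero_le A) hAq,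
      ← Finset.sum_Ioc_consecutive a hAB hBq,
      ← Finset.sum_Ioc_consecutive a hBC hCq]
  have e1 : ∑ i ∈ Finset.Ioc 0 A, a i = 4 * A := by
    rw [Finset.sum_congr rfl
      (fun i hi => h4 i (Finset.mem_Ioc.mp hi).1 (Finset.mem_Ioc.mp hi).2),
      Finset.sum_const, Nat.card_Ioc, smul_eq_mul]
    omega
  have e2 : ∑ i ∈ Finset.Ioc A B, a i = 3 * (B - A) := by
    rw [Finset.sum_congr rfl
      (fun i hi => h3 i (Finset.mem_Ioc.mp hi).1 (Finset.mem_Ioc.mp hi).2),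
      Finset.sum_const, Nat.card_Ioc, smul_eq_mul]
    omega
  have e3 : ∑ i ∈ Finset.Ioc B C, a i = 2 * (C - B) := by
    rw [Finset.sum_congr rfl
      (fun i hi => h2 i (Finset.mem_Ioc.mp hi).1 (Finset.mem_Ioc.mp hi).2),
      Finset.sum_const, Nat.card_Ioc, smul_eq_mul]
    omega
  have e4 : ∑ i ∈ Finset.Ioc C q, a i = q - C := by
    rw [Finset.sum_congr rfl
      (fun i hi => h1 i (Finset.mem_Ioc.mp hi).1 (Finset.mem_Ioc.mp hi).2),
      Finset.sum_const, Nat.card_Ioc, smul_eq_mul]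
    omega
  rw [e1, e2, e3, e4]
  omega

lemma stats_step (q A B C : ℕ) (a : ℕ → ℕ) (hAB : A ≤ B) (hBC : B ≤ C) (hCq : C ≤ q)
    (h4 : ∀ i, 1 ≤ i → i ≤ A → a i = 4) (h3 : ∀ i, A < i → i ≤ B → a i = 3)
    (h2 : ∀ i, B < i → i ≤ C → a i = 2) (h1 : ∀ i, C < i → i ≤ q → a i = 1) :
    seqA q a = A ∧ seqB q a = B ∧ seqC q a = C := by
  have hAq : A ≤ q := le_trans hAB (le_trans hBC hCq)
  have hBq : B ≤ q := le_trans hBC hCq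
  refine ⟨?_, ?_, ?_⟩
  · have : (Finset.Icc 1 q).filter (fun i => a i = 4) = Finset.Icc 1 A := by
      ext i
      simp only [Finset.mem_filter, Finset.mem_Icc]
      constructor
      · rintro ⟨⟨hi1, hiq⟩, hv⟩
        refine ⟨hi1, ?_⟩
        by_contra hcon
        push_neg at hcon
        rcases le_or_gt i B with hc | hc
        · have := h3 i hcon hc; omega
        · rcases le_or_gt i C with hc' | hc'
          · have := h2 i hc hc'; omega
          · have := h1 i hc' hiq; omega
      · rintro ⟨hi1, hiA⟩
        exact ⟨⟨hi1, le_trans hiA hAq⟩, h4 i hi1 hiA⟩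
    rw [seqA, this, Nat.card_Icc]
    omega
  · have : (Finset.Icc 1 q).filter (fun i => 3 ≤ a i) = Finset.Icc 1 B := by
      ext i
      simp only [Finset.mem_filter, Finset.mem_Icc]
      constructor
      · rintro ⟨⟨hi1, hiq⟩, hv⟩
        refine ⟨hi1, ?_⟩
        by_contra hcon
        push_neg at hcon
        rcases le_or_gt i C with hc' | hc'
        · have := h2 i hcon hc'; omega
        · have := h1 i hc' hiq; omega
      · rintro ⟨hi1, hiB⟩
        rcases le_or_gt i A with hc | hc
        · have := h4 i hi1 hc; exact ⟨⟨hi1, le_trans hiB hBq⟩, by omega⟩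
        · have := h3 i hc hiB; exact ⟨⟨hi1, le_trans hiB hBq⟩, by omega⟩
    rw [seqB, this, Nat.card_Icc]
    omega
  · have : (Finset.Icc 1 q).filter (fun i => 2 ≤ a i) = Finset.Icc 1 C := by
      ext i
      simp only [Finset.mem_filter, Finset.mem_Icc]
      constructor
      · rintro ⟨⟨hi1, hiq⟩, hv⟩
        refine ⟨hi1, ?_⟩
        by_contra hcon
        push_neg at hcon
        have := h1 i hcon hiq; omega
      · rintro ⟨hi1, hiC⟩
        rcases le_or_gt i A with hc | hc
        · have := h4 i hi1 hc; exact ⟨⟨hi1, le_trans hiC hCq⟩, by omega⟩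
        · rcases le_or_gt i B with hc' | hc'
          · have := h3 i hc hc'; exact ⟨⟨hi1, le_trans hiC hCq⟩, by omega⟩
          · have := h2 i hc' hiC; exact ⟨⟨hi1, le_trans hiC hCq⟩, by omega⟩
    rw [seqC, this, Nat.card_Icc]
    omega

lemma S3_closed (q A B C : ℕ) (a : ℕ → ℕ) (hAB : A ≤ B) (hBC : B ≤ C) (hCq : C ≤ q)
    (hB : seqB q a = B) (hC : seqC q a = C)
    (h4 : ∀ i, 1 ≤ i → i ≤ A → a i = 4)
    (h3 : ∀ i, A < i → i ≤ B → a i = 3)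
    (h2 : ∀ i, B < i → i ≤ C → a i = 2) :
    36 * S3 q a = 18 * (2 * (B : ℤ) * C * q - 4 * (B : ℤ) * C - 2 * (B : ℤ) * q
      + 4 * (B : ℤ) + 4 * (A : ℤ) - (A : ℤ) * ((q : ℤ) + C + B) - 3 * (A : ℤ) ^ 2
      + (A : ℤ) ^ 2 * ((q : ℤ) + C + B) - (A : ℤ) ^ 3) := by
  have hinner1 : ∀ k : ℕ, 1 ≤ k → k ≤ A →
      6 * ∑ j ∈ Finset.Icc 2 (k - 1), ((a j : ℤ) - 1) * ((j : ℤ) - 1)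
        = 9 * (k : ℤ) ^ 2 - 27 * (k : ℤ) + 18 := by
    intro k hk1 hkA
    rw [show Finset.Icc 2 (k - 1) = Finset.Ioc 1 (k - 1) from Finset.Icc_add_one_left_eq_Ioc 1 (k - 1)]
    rw [sum_Ioc_ext _ 1 _ (by
      intro j hj1 hj2
      have : j = 1 := by omega
      subst this
      simp)]
    rw [show (∑ j ∈ Finset.Ioc 0 (k - 1), ((a j : ℤ) - 1) * ((j : ℤ) - 1))
        = ∑ j ∈ Finset.Ioc 0 (k - 1), ((0 : ℤ) * (j : ℤ) ^ 2 + 3 * (j : ℤ) + (-3)) from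
      Finset.sum_congr rfl (fun j hj => by
        obtain ⟨hj1, hj2⟩ := Finset.mem_Ioc.mp hj
        rw [h4 j hj1 (by omega)]
        push_cast
        ring)]
    have h6 := sum_quad 0 3 (-3) (k - 1)
    have hc : ((k - 1 : ℕ) : ℤ) = (k : ℤ) - 1 := by omega
    rw [hc] at h6
    linear_combination h6
  have hinner2 : ∀ k : ℕ, A < k → k ≤ B + 1 →
      6 * ∑ j ∈ Finset.Icc 2 (k - 1), ((a j : ℤ) - 1) * ((j : ℤ) - 1)
        = 3 * (A : ℤ) ^ 2 - 3 * (A : ℤ) + 6 * (k : ℤ) ^ 2 - 18 * (k : ℤ) + 12 := by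
    intro k hkA hkB
    rw [show Finset.Icc 2 (k - 1) = Finset.Ioc 1 (k - 1) from Finset.Icc_add_one_left_eq_Ioc 1 (k - 1)]
    rw [sum_Ioc_ext _ 1 _ (by
      intro j hj1 hj2
      have : j = 1 := by omega
      subst this
      simp)]
    rw [← Finset.sum_Ioc_consecutive _ (Nat.zero_le A) (show A ≤ k - 1 by omega)]
    rw [show (∑ j ∈ Finset.Ioc 0 A, ((a j : ℤ) - 1) * ((j : ℤ) - 1))
        = ∑ j ∈ Finset.Ioc 0 A, ((0 : ℤ) * (j : ℤ) ^ 2 + 3 * (j : ℤ) + (-3)) from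
      Finset.sum_congr rfl (fun j hj => by
        obtain ⟨hj1, hj2⟩ := Finset.mem_Ioc.mp hj
        rw [h4 j hj1 hj2]
        push_cast
        ring)]
    rw [show (∑ j ∈ Finset.Ioc A (k - 1), ((a j : ℤ) - 1) * ((j : ℤ) - 1))
        = ∑ j ∈ Finset.Ioc A (k - 1), ((0 : ℤ) * (j : ℤ) ^ 2 + 2 * (j : ℤ) + (-2)) from
      Finset.sum_congr rfl (fun j hj => by
        obtain ⟨hj1, hj2⟩ := Finset.mem_Ioc.mp hj
        rw [h3 j hj1 (by omega)]
        push_cast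
        ring)]
    have h6a := sum_quad 0 3 (-3) A
    have h6b := sum_quad' 0 2 (-2) (show A ≤ k - 1 by omega)
    have hc : ((k - 1 : ℕ) : ℤ) = (k : ℤ) - 1 := by omega
    rw [hc] at h6b
    linear_combination h6a + h6b
  have hT6 : 6 * ∑ j ∈ Finset.Icc 2 B, ((a j : ℤ) - 1) * ((j : ℤ) - 1)
      = 3 * (A : ℤ) ^ 2 - 3 * (A : ℤ) + 6 * (B : ℤ) ^ 2 - 6 * (B : ℤ) := by
    have h := hinner2 (B + 1) (by omega) le_rfl
    rw [Nat.add_sub_cancel] at h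
    push_cast at h
    linear_combination h
  have hV : (∑ j ∈ Finset.Icc (B + 1) C, ((a j : ℤ) - 1) * (B : ℤ))
      = (B : ℤ) * ((C : ℤ) - (B : ℤ)) := by
    rw [Finset.Icc_add_one_left_eq_Ioc]
    rw [show (∑ j ∈ Finset.Ioc B C, ((a j : ℤ) - 1) * (B : ℤ))
        = ∑ j ∈ Finset.Ioc B C, (B : ℤ) from
      Finset.sum_congr rfl (fun j hj => by
        obtain ⟨hj1, hj2⟩ := Finset.mem_Ioc.mp hj
        rw [h2 j hj1 hj2]
        push_cast
        ring)]
    rw [Finset.sum_const, Nat.card_Ioc, nsmul_eq_mul]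
    have hc : ((C - B : ℕ) : ℤ) = (C : ℤ) - (B : ℤ) := by omega
    rw [hc]
    ring
  -- the three pieces
  have hU1 : 36 * ∑ k ∈ Finset.Icc 3 B,
        (a k : ℤ) * ∑ j ∈ Finset.Icc 2 (k - 1), ((a j : ℤ) - 1) * ((j : ℤ) - 1)
      = (36 * (2 * (A : ℤ) ^ 3 + 3 * (A : ℤ) ^ 2 + (A : ℤ))
          + (-108) * (3 * (A : ℤ) ^ 2 + 3 * (A : ℤ)) + 72 * (6 * (A : ℤ)))
        + ((18 * (2 * (B : ℤ) ^ 3 + 3 * (B : ℤ) ^ 2 + (B : ℤ))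
            + (-54) * (3 * (B : ℤ) ^ 2 + 3 * (B : ℤ))
            + (36 + 9 * (A : ℤ) ^ 2 - 9 * (A : ℤ)) * (6 * (B : ℤ)))
          - (18 * (2 * (A : ℤ) ^ 3 + 3 * (A : ℤ) ^ 2 + (A : ℤ))
            + (-54) * (3 * (A : ℤ) ^ 2 + 3 * (A : ℤ))
            + (36 + 9 * (A : ℤ) ^ 2 - 9 * (A : ℤ)) * (6 * (A : ℤ)))) := by
    rw [show Finset.Icc 3 B = Finset.Ioc 2 B from Finset.Icc_add_one_left_eq_Ioc 2 B]
    rw [sum_Ioc_ext _ 2 B (by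
      intro k hk1 hk2
      have he : Finset.Icc 2 (k - 1) = ∅ := Finset.Icc_eq_empty (by omega)
      rw [he, Finset.sum_empty, mul_zero])]
    rw [← Finset.sum_Ioc_consecutive _ (Nat.zero_le A) hAB]
    have e1 : ∑ k ∈ Finset.Ioc 0 A,
        (36 : ℤ) * ((a k : ℤ) * ∑ j ∈ Finset.Icc 2 (k - 1), ((a j : ℤ) - 1) * ((j : ℤ) - 1))
        = 6 * ∑ k ∈ Finset.Ioc 0 A,
            (36 * (k : ℤ) ^ 2 + (-108) * (k : ℤ) + 72) := by
      rw [Finset.mul_sum]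
      refine Finset.sum_congr rfl fun k hk => ?_
      obtain ⟨hk1, hk2⟩ := Finset.mem_Ioc.mp hk
      rw [h4 k hk1 hk2]
      have h := hinner1 k hk1 hk2
      push_cast
      linear_combination 24 * h
    have e2 : ∑ k ∈ Finset.Ioc A B,
        (36 : ℤ) * ((a k : ℤ) * ∑ j ∈ Finset.Icc 2 (k - 1), ((a j : ℤ) - 1) * ((j : ℤ) - 1))
        = 6 * ∑ k ∈ Finset.Ioc A B,
            (18 * (k : ℤ) ^ 2 + (-54) * (k : ℤ) + (36 + 9 * (A : ℤ) ^ 2 - 9 * (A : ℤ))) := by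
      rw [Finset.mul_sum]
      refine Finset.sum_congr rfl fun k hk => ?_
      obtain ⟨hk1, hk2⟩ := Finset.mem_Ioc.mp hk
      rw [h3 k hk1 hk2]
      have h := hinner2 k hk1 (by omega)
      push_cast
      linear_combination 18 * h
    have q1 := sum_quad 36 (-108) 72 A
    have q2 := sum_quad' 18 (-54) (36 + 9 * (A : ℤ) ^ 2 - 9 * (A : ℤ)) hAB
    rw [mul_add, Finset.mul_sum, Finset.mul_sum]
    rw [e1, e2, q1, q2]
  have hU2 : 36 * ∑ k ∈ Finset.Icc (B + 1) C, (a k : ℤ) *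
        ((∑ j ∈ Finset.Icc 2 B, ((a j : ℤ) - 1) * ((j : ℤ) - 1)) +
          ∑ j ∈ Finset.Icc (B + 1) (k - 1), ((a j : ℤ) - 1) * (B : ℤ))
      = ((12 * (B : ℤ)) * (3 * (C : ℤ) ^ 2 + 3 * (C : ℤ))
          + (6 * (A : ℤ) ^ 2 - 6 * (A : ℤ) - 24 * (B : ℤ)) * (6 * (C : ℤ)))
        - ((12 * (B : ℤ)) * (3 * (B : ℤ) ^ 2 + 3 * (B : ℤ))
          + (6 * (A : ℤ) ^ 2 - 6 * (A : ℤ) - 24 * (B : ℤ)) * (6 * (B : ℤ))) := by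
    rw [show Finset.Icc (B + 1) C = Finset.Ioc B C from Finset.Icc_add_one_left_eq_Ioc B C]
    have e3 : ∑ k ∈ Finset.Ioc B C, (36 : ℤ) * ((a k : ℤ) *
          ((∑ j ∈ Finset.Icc 2 B, ((a j : ℤ) - 1) * ((j : ℤ) - 1)) +
            ∑ j ∈ Finset.Icc (B + 1) (k - 1), ((a j : ℤ) - 1) * (B : ℤ)))
        = 6 * ∑ k ∈ Finset.Ioc B C, ((0 : ℤ) * (k : ℤ) ^ 2 + (12 * (B : ℤ)) * (k : ℤ)
            + (6 * (A : ℤ) ^ 2 - 6 * (A : ℤ) - 24 * (B : ℤ))) := by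
      rw [Finset.mul_sum]
      refine Finset.sum_congr rfl fun k hk => ?_
      obtain ⟨hk1, hk2⟩ := Finset.mem_Ioc.mp hk
      rw [h2 k hk1 hk2]
      have hi : (∑ j ∈ Finset.Icc (B + 1) (k - 1), ((a j : ℤ) - 1) * (B : ℤ))
          = (B : ℤ) * ((k : ℤ) - 1 - (B : ℤ)) := by
        rw [Finset.Icc_add_one_left_eq_Ioc]
        rw [show (∑ j ∈ Finset.Ioc B (k - 1), ((a j : ℤ) - 1) * (B : ℤ))
            = ∑ j ∈ Finset.Ioc B (k - 1), (B : ℤ) from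
          Finset.sum_congr rfl (fun j hj => by
            obtain ⟨hj1, hj2⟩ := Finset.mem_Ioc.mp hj
            rw [h2 j hj1 (by omega)]
            push_cast
            ring)]
        rw [Finset.sum_const, Nat.card_Ioc, nsmul_eq_mul]
        have hc : ((k - 1 - B : ℕ) : ℤ) = (k : ℤ) - 1 - (B : ℤ) := by omega
        rw [hc]
        ring
      rw [hi]
      push_cast
      linear_combination 12 * hT6
    have q3 := sum_quad' 0 (12 * (B : ℤ)) (6 * (A : ℤ) ^ 2 - 6 * (A : ℤ) - 24 * (B : ℤ)) hBC
    rw [Finset.mul_sum, e3, q3]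
    ring
  have hU3 : 36 * ∑ _k ∈ Finset.Icc (C + 1) q,
        ((∑ j ∈ Finset.Icc 2 B, ((a j : ℤ) - 1) * ((j : ℤ) - 1)) +
          ∑ j ∈ Finset.Icc (B + 1) C, ((a j : ℤ) - 1) * (B : ℤ))
      = ((q : ℤ) - (C : ℤ)) * (6 * (3 * (A : ℤ) ^ 2 - 3 * (A : ℤ) + 6 * (B : ℤ) ^ 2 - 6 * (B : ℤ))
          + 36 * ((B : ℤ) * ((C : ℤ) - (B : ℤ)))) := by
    rw [Finset.sum_const, Nat.card_Icc, nsmul_eq_mul]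
    have hc : ((q + 1 - (C + 1) : ℕ) : ℤ) = (q : ℤ) - (C : ℤ) := by omega
    rw [hc]
    linear_combination ((q : ℤ) - (C : ℤ)) * 6 * hT6 + (36 * ((q : ℤ) - (C : ℤ))) * hV
  simp only [S3, hB, hC]
  linear_combination hU1 + hU2 + hU3

lemma fval_closed (m q A B C : ℕ) (a : ℕ → ℕ) (hAB : A ≤ B) (hBC : B ≤ C) (hCq : C ≤ q)
    (hA : seqA q a = A) (hB : seqB q a = B) (hC : seqC q a = C)
    (h4 : ∀ i, 1 ≤ i → i ≤ A → a i = 4)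
    (h3 : ∀ i, A < i → i ≤ B → a i = 3)
    (h2 : ∀ i, B < i → i ≤ C → a i = 2) :
    36 * fval m q a = 36 * ((m : ℤ) * (B : ℤ) + (A : ℤ) ^ 2 - (A : ℤ) * (B : ℤ)
        - (B : ℤ) ^ 2 + (B : ℤ) * (C : ℤ) - (A : ℤ) - 3 * (B : ℤ) + (B : ℤ))
      + 18 * (2 * (B : ℤ) * C * q - 4 * (B : ℤ) * C - 2 * (B : ℤ) * q
        + 4 * (B : ℤ) + 4 * (A : ℤ) - (A : ℤ) * ((q : ℤ) + C + B) - 3 * (A : ℤ) ^ 2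
        + (A : ℤ) ^ 2 * ((q : ℤ) + C + B) - (A : ℤ) ^ 3) := by
  have h := S3_closed q A B C a hAB hBC hCq hB hC h4 h3 h2
  simp only [fval, S1, S2, hA, hB, hC]
  linear_combination h

lemma prod3_0 {x y z s : ℤ} (hx : 0 ≤ x) (hxy : x ≤ y) (hyz : y ≤ z)
    (h : x + y + z = 3 * s) : x * y * z ≤ s ^ 3 := by
  obtain ⟨b, hb0, rfl⟩ : ∃ b, 0 ≤ b ∧ y = x + b := ⟨y - x, by omega, by ring⟩
  obtain ⟨c, hc0, rfl⟩ : ∃ c, 0 ≤ c ∧ z = x + b + c := ⟨z - (x + b), by omega, by ring⟩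
  have hs : 3 * s = 3 * x + 2 * b + c := by omega
  have h27 : 27 * (x * (x + b) * (x + b + c)) ≤ (3 * x + 2 * b + c) ^ 3 := by
    nlinarith [mul_nonneg (mul_nonneg hb0 hb0) hc0, mul_nonneg (mul_nonneg hb0 hc0) hc0,
      mul_nonneg (mul_nonneg hc0 hc0) hc0, mul_nonneg (mul_nonneg hb0 hb0) hb0,
      mul_nonneg (mul_nonneg hx hc0) hc0, mul_nonneg (mul_nonneg hx hb0) hc0,
      mul_nonneg (mul_nonneg hx hb0) hb0]
  have hcube : 27 * s ^ 3 = (3 * x + 2 * b + c) ^ 3 := by rw [← hs]; ring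
  linarith

lemma prod3_1 {x y z s : ℤ} (hx : 0 ≤ x) (hxy : x ≤ y) (hyz : y ≤ z)
    (h : x + y + z = 3 * s + 1) : x * y * z ≤ s ^ 2 * (s + 1) := by
  rcases le_or_gt y s with hy | hy
  · -- x ≤ y ≤ s
    obtain ⟨b, hb0, rfl⟩ : ∃ b, 0 ≤ b ∧ y = x + b := ⟨y - x, by omega, by ring⟩
    obtain ⟨c, hc0, rfl⟩ : ∃ c, 0 ≤ c ∧ s = x + b + c := ⟨s - (x + b), by omega, by ring⟩
    have hz : z = x + b + c + 1 + 2 * c + b := by omega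
    subst hz
    nlinarith [mul_nonneg (mul_nonneg hc0 hc0) hc0, mul_nonneg (mul_nonneg hb0 hc0) hc0,
      mul_nonneg (mul_nonneg hb0 hb0) hc0, mul_nonneg (mul_nonneg hb0 hb0) hb0,
      mul_nonneg (mul_nonneg hx hc0) hc0, mul_nonneg (mul_nonneg hx hb0) hc0,
      mul_nonneg (mul_nonneg hx hb0) hb0, mul_nonneg hc0 hc0, mul_nonneg hb0 hc0,
      mul_nonneg hb0 hb0, mul_nonneg hx hc0, mul_nonneg hx hb0]
  · -- s + 1 ≤ y
    obtain ⟨e, he0, rfl⟩ : ∃ e, 0 ≤ e ∧ y = s + 1 + e := ⟨y - (s + 1), by omega, by ring⟩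
    obtain ⟨f, hf0, rfl⟩ : ∃ f, 0 ≤ f ∧ z = s + 1 + e + f := ⟨z - (s + 1 + e), by omega, by ring⟩
    have hs : s = x + 1 + 2 * e + f := by omega
    subst hs
    nlinarith [mul_nonneg (mul_nonneg hf0 hf0) hf0, mul_nonneg (mul_nonneg he0 hf0) hf0,
      mul_nonneg (mul_nonneg he0 he0) hf0, mul_nonneg (mul_nonneg he0 he0) he0,
      mul_nonneg (mul_nonneg hx hf0) hf0, mul_nonneg (mul_nonneg hx he0) hf0,
      mul_nonneg (mul_nonneg hx he0) he0, mul_nonneg hf0 hf0, mul_nonneg he0 hf0,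
      mul_nonneg he0 he0, mul_nonneg hx hf0, mul_nonneg hx he0]

lemma prod3_2 {x y z s : ℤ} (hx : 0 ≤ x) (hxy : x ≤ y) (hyz : y ≤ z)
    (h : x + y + z = 3 * s + 2) : x * y * z ≤ s * (s + 1) ^ 2 := by
  rcases le_or_gt y s with hy | hy
  · obtain ⟨b, hb0, rfl⟩ : ∃ b, 0 ≤ b ∧ y = x + b := ⟨y - x, by omega, by ring⟩
    obtain ⟨c, hc0, rfl⟩ : ∃ c, 0 ≤ c ∧ s = x + b + c := ⟨s - (x + b), by omega, by ring⟩
    have hz : z = 3 * (x + b + c) + 2 - x - (x + b) := by omega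
    subst hz
    nlinarith [mul_nonneg (mul_nonneg hc0 hc0) hc0, mul_nonneg (mul_nonneg hb0 hc0) hc0,
      mul_nonneg (mul_nonneg hb0 hb0) hc0, mul_nonneg (mul_nonneg hb0 hb0) hb0,
      mul_nonneg (mul_nonneg hx hc0) hc0, mul_nonneg (mul_nonneg hx hb0) hc0,
      mul_nonneg (mul_nonneg hx hb0) hb0, mul_nonneg hc0 hc0, mul_nonneg hb0 hc0,
      mul_nonneg hb0 hb0, mul_nonneg hx hc0, mul_nonneg hx hb0]
  · obtain ⟨e, he0, rfl⟩ : ∃ e, 0 ≤ e ∧ y = s + 1 + e := ⟨y - (s + 1), by omega, by ring⟩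
    obtain ⟨f, hf0, rfl⟩ : ∃ f, 0 ≤ f ∧ z = s + 1 + e + f := ⟨z - (s + 1 + e), by omega, by ring⟩
    have hs : s = x + 2 * e + f := by omega
    subst hs
    nlinarith [mul_nonneg (mul_nonneg hf0 hf0) hf0, mul_nonneg (mul_nonneg he0 hf0) hf0,
      mul_nonneg (mul_nonneg he0 he0) hf0, mul_nonneg (mul_nonneg he0 he0) he0,
      mul_nonneg (mul_nonneg hx hf0) hf0, mul_nonneg (mul_nonneg hx he0) hf0,
      mul_nonneg (mul_nonneg hx he0) he0, mul_nonneg hf0 hf0, mul_nonneg he0 hf0,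
      mul_nonneg he0 he0, mul_nonneg hx hf0, mul_nonneg hx he0]

lemma mkSeq_greedy (a b c q : ℕ) (hab : a ≤ b) (hbc : b ≤ c) (hcq : c ≤ q) :
    IsGreedySeq (a + b + c + q) q (mkSeq a b c) := by
  refine ⟨?_, ?_, ?_⟩
  · intro i _
    unfold mkSeq
    split_ifs <;> omega
  · intro i j h1 h2 h3
    unfold mkSeq
    split_ifs <;> omega
  · exact sum_step q a b c (mkSeq a b c) hab hbc hcq (mkSeq4 a b c) (mkSeq3 a b c)
      (mkSeq2 a b c hab) (fun i h1 _ => mkSeq1 a b c hab hbc i h1)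

lemma mkSeq_fval (m a b c q : ℕ) (hab : a ≤ b) (hbc : b ≤ c) (hcq : c ≤ q) :
    36 * fval m q (mkSeq a b c)
      = 36 * ((m : ℤ) * (b : ℤ) + (a : ℤ) ^ 2 - (a : ℤ) * (b : ℤ)
          - (b : ℤ) ^ 2 + (b : ℤ) * (c : ℤ) - (a : ℤ) - 3 * (b : ℤ) + (b : ℤ))
        + 18 * (2 * (b : ℤ) * c * q - 4 * (b : ℤ) * c - 2 * (b : ℤ) * q
          + 4 * (b : ℤ) + 4 * (a : ℤ) - (a : ℤ) * ((q : ℤ) + c + b) - 3 * (a : ℤ) ^ 2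
          + (a : ℤ) ^ 2 * ((q : ℤ) + c + b) - (a : ℤ) ^ 3) := by
  obtain ⟨sA, sB, sC⟩ := stats_step q a b c (mkSeq a b c) hab hbc hcq (mkSeq4 a b c)
    (mkSeq3 a b c) (mkSeq2 a b c hab) (fun i h1 _ => mkSeq1 a b c hab hbc i h1)
  exact fval_closed m q a b c (mkSeq a b c) hab hbc hcq sA sB sC (mkSeq4 a b c)
    (mkSeq3 a b c) (mkSeq2 a b c hab)

end Stmt10Aux

open Stmt10Aux in
theorem stmt10 (m p : ℕ) (a : ℕ → ℕ) (ha : IsGreedySeq m p a) :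
    ∃ q ≤ p, ∃ a' : ℕ → ℕ, IsGreedySeq m q a' ∧ fval m p a ≤ fval m q a' ∧
      (fval m q a' : ℚ) ≤
        28 * (q : ℚ) ^ 3 - 45 / 2 * (q : ℚ) ^ 2 * (m : ℚ) + 6 * (q : ℚ) * (m : ℚ) ^ 2
          - 1 / 2 * (m : ℚ) ^ 3 +
          max (max
            (3 / 2 * (q : ℚ) * (m : ℚ) - 1 / 2 * (m : ℚ) ^ 2 - 3 * (q : ℚ) + (m : ℚ))
            (-28 * (q : ℚ) ^ 2 + 33 / 2 * (q : ℚ) * (m : ℚ) - 5 / 2 * (m : ℚ) ^ 2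
              + 6 * (q : ℚ) - 2 * (m : ℚ)))
            (-56 * (q : ℚ) ^ 2 + 63 / 2 * (q : ℚ) * (m : ℚ) - 9 / 2 * (m : ℚ) ^ 2
              + 34 * (q : ℚ) - 10 * (m : ℚ) - 6) := by
  obtain ⟨hbound, hmono, hsum⟩ := ha
  set A := seqA p a with hAdef
  set B := seqB p a with hBdef
  set C := seqC p a with hCdef
  -- downward-closed characterizations
  have hfA : (Finset.Icc 1 p).filter (fun i => a i = 4) = Finset.Icc 1 A := by
    refine filter_dc (fun i => a i = 4) ?_
    intro i j h1 h2 h3 h4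
    have hb := (hbound i (Finset.mem_Icc.mpr ⟨h1, le_trans h2 h3⟩)).2
    have hmn := hmono i j h1 h2 h3
    omega
  have hfB : (Finset.Icc 1 p).filter (fun i => 3 ≤ a i) = Finset.Icc 1 B := by
    refine filter_dc (fun i => 3 ≤ a i) ?_
    intro i j h1 h2 h3 h4
    have hmn := hmono i j h1 h2 h3
    omega
  have hfC : (Finset.Icc 1 p).filter (fun i => 2 ≤ a i) = Finset.Icc 1 C := by
    refine filter_dc (fun i => 2 ≤ a i) ?_
    intro i j h1 h2 h3 h4
    have hmn := hmono i j h1 h2 h3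
    omega
  have hABle : A ≤ B := by
    refine Finset.card_le_card ?_
    intro x hx
    simp only [Finset.mem_filter] at hx ⊢
    exact ⟨hx.1, by omega⟩
  have hBCle : B ≤ C := by
    refine Finset.card_le_card ?_
    intro x hx
    simp only [Finset.mem_filter] at hx ⊢
    exact ⟨hx.1, by omega⟩
  have hCple : C ≤ p := by
    have h := Finset.card_filter_le (Finset.Icc 1 p) (fun i => 2 ≤ a i)
    rw [Nat.card_Icc] at h
    have h2 : seqC p a ≤ p := by
      unfold seqC
      omega
    omega
  -- value structure
  have h4 : ∀ i, 1 ≤ i → i ≤ A → a i = 4 := by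
    intro i h1 h2
    have : i ∈ (Finset.Icc 1 p).filter (fun i => a i = 4) := by
      rw [hfA]
      exact Finset.mem_Icc.mpr ⟨h1, h2⟩
    exact (Finset.mem_filter.mp this).2
  have hmemA : ∀ i, 1 ≤ i → i ≤ p → a i = 4 → i ≤ A := by
    intro i h1 h2 h3
    have : i ∈ Finset.Icc 1 A := by
      rw [← hfA]
      exact Finset.mem_filter.mpr ⟨Finset.mem_Icc.mpr ⟨h1, h2⟩, h3⟩
    exact (Finset.mem_Icc.mp this).2
  have h3v : ∀ i, A < i → i ≤ B → a i = 3 := by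
    intro i h1 h2
    have hip : i ≤ p := le_trans h2 (le_trans hBCle hCple)
    have h1i : 1 ≤ i := by omega
    have hge : 3 ≤ a i := by
      have : i ∈ (Finset.Icc 1 p).filter (fun i => 3 ≤ a i) := by
        rw [hfB]
        exact Finset.mem_Icc.mpr ⟨h1i, h2⟩
      exact (Finset.mem_filter.mp this).2
    have hle := (hbound i (Finset.mem_Icc.mpr ⟨h1i, hip⟩)).2
    have hne : a i ≠ 4 := fun hc => by have := hmemA i h1i hip hc; omega
    omega
  have h2v : ∀ i, B < i → i ≤ C → a i = 2 := by
    intro i h1 h2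
    have hip : i ≤ p := le_trans h2 hCple
    have h1i : 1 ≤ i := by omega
    have hge : 2 ≤ a i := by
      have : i ∈ (Finset.Icc 1 p).filter (fun i => 2 ≤ a i) := by
        rw [hfC]
        exact Finset.mem_Icc.mpr ⟨h1i, h2⟩
      exact (Finset.mem_filter.mp this).2
    have hlt : ¬ 3 ≤ a i := by
      intro hc
      have : i ∈ Finset.Icc 1 B := by
        rw [← hfB]
        exact Finset.mem_filter.mpr ⟨Finset.mem_Icc.mpr ⟨h1i, hip⟩, hc⟩
      have := (Finset.mem_Icc.mp this).2
      omega
    omega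
  have h1v : ∀ i, C < i → i ≤ p → a i = 1 := by
    intro i h1 h2
    have h1i : 1 ≤ i := by omega
    have hge := (hbound i (Finset.mem_Icc.mpr ⟨h1i, h2⟩)).1
    have hlt : ¬ 2 ≤ a i := by
      intro hc
      have : i ∈ Finset.Icc 1 C := by
        rw [← hfC]
        exact Finset.mem_filter.mpr ⟨Finset.mem_Icc.mpr ⟨h1i, h2⟩, hc⟩
      have := (Finset.mem_Icc.mp this).2
      omega
    omega
  have hm : m = A + B + C + p := by
    have := sum_step p A B C a hABle hBCle hCple h4 h3v h2v h1v
    omega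
  have hfo : 36 * fval m p a = 36 * ((m : ℤ) * (B : ℤ) + (A : ℤ) ^ 2 - (A : ℤ) * (B : ℤ)
        - (B : ℤ) ^ 2 + (B : ℤ) * (C : ℤ) - (A : ℤ) - 3 * (B : ℤ) + (B : ℤ))
      + 18 * (2 * (B : ℤ) * C * p - 4 * (B : ℤ) * C - 2 * (B : ℤ) * p
        + 4 * (B : ℤ) + 4 * (A : ℤ) - (A : ℤ) * ((p : ℤ) + C + B) - 3 * (A : ℤ) ^ 2
        + (A : ℤ) ^ 2 * ((p : ℤ) + C + B) - (A : ℤ) ^ 3) :=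
    fval_closed m p A B C a hABle hBCle hCple hAdef.symm hBdef.symm hCdef.symm h4 h3v h2v
  have hmZ : (m : ℤ) = (A : ℤ) + B + C + p := by exact_mod_cast hm
  obtain ⟨t, ht⟩ : ∃ t, 3 * (B - A) + 2 * (C - B) + (p - C) = 3 * t ∨
      3 * (B - A) + 2 * (C - B) + (p - C) = 3 * t + 1 ∨
      3 * (B - A) + 2 * (C - B) + (p - C) = 3 * t + 2 :=
    ⟨(3 * (B - A) + 2 * (C - B) + (p - C)) / 3, by omega⟩
  rcases ht with ht | ht | ht
  · -- remainder 0 : target (A, A+t, A+t, A+t), uses R1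
    have hrel1 : (B : ℤ) + C + p = 3 * (A : ℤ) + 3 * (t : ℤ) := by omega
    refine ⟨A + t, by omega, mkSeq A (A + t) (A + t), ?_, ?_, ?_⟩
    · have hg := mkSeq_greedy A (A + t) (A + t) (A + t) (by omega) le_rfl le_rfl
      rwa [show A + (A + t) + (A + t) + (A + t) = m by omega] at hg
    · have hft := mkSeq_fval m A (A + t) (A + t) (A + t) (by omega) le_rfl le_rfl
      have hprod : (B : ℤ) * C * p ≤ ((A : ℤ) + t) ^ 3 :=
        prod3_0 (by positivity) (by exact_mod_cast hBCle) (by exact_mod_cast hCple)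
          (by linarith)
      have hid : 36 * fval m (A + t) (mkSeq A (A + t) (A + t))
          = 36 * fval m p a + 36 * (((A : ℤ) + t) ^ 3 - (B : ℤ) * C * p) := by
        rw [hfo, hft]
        push_cast
        linear_combination (36 * (t : ℤ) + 54 * (A : ℤ) - 18 * (A : ℤ) ^ 2) * hrel1
          + (36 * (t : ℤ) - 36 * (B : ℤ) + 36 * (A : ℤ)) * hmZ
      linarith
    · have hft := mkSeq_fval m A (A + t) (A + t) (A + t) (by omega) le_rfl le_rfl
      have hftQ : (36 : ℚ) * ((fval m (A + t) (mkSeq A (A + t) (A + t)) : ℤ) : ℚ)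
          = 36 * ((m : ℚ) * ((A : ℚ) + t) + (A : ℚ) ^ 2 - (A : ℚ) * ((A : ℚ) + t)
              - ((A : ℚ) + t) ^ 2 + ((A : ℚ) + t) * ((A : ℚ) + t) - (A : ℚ)
              - 3 * ((A : ℚ) + t) + ((A : ℚ) + t))
            + 18 * (2 * ((A : ℚ) + t) * ((A : ℚ) + t) * ((A : ℚ) + t)
              - 4 * ((A : ℚ) + t) * ((A : ℚ) + t) - 2 * ((A : ℚ) + t) * ((A : ℚ) + t)
              + 4 * ((A : ℚ) + t) + 4 * (A : ℚ)
              - (A : ℚ) * (((A : ℚ) + t) + ((A : ℚ) + t) + ((A : ℚ) + t))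
              - 3 * (A : ℚ) ^ 2
              + (A : ℚ) ^ 2 * (((A : ℚ) + t) + ((A : ℚ) + t) + ((A : ℚ) + t))
              - (A : ℚ) ^ 3) := by
        exact_mod_cast hft
      have hmQ : (m : ℚ) = 4 * (A : ℚ) + 3 * (t : ℚ) := by
        have : m = 4 * A + 3 * t := by omega
        exact_mod_cast this
      refine le_trans (le_of_eq ?_)
        (add_le_add_right (le_trans (le_max_left _ _) (le_max_left _ _)) _)
      push_cast
      rw [hmQ] at hftQ ⊢
      linear_combination (1 / 36 : ℚ) * hftQ
  · -- remainder 1 : target (A, A+t, A+t, A+t+1), uses R3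
    have hrel1 : (B : ℤ) + C + p = 3 * (A : ℤ) + 3 * (t : ℤ) + 1 := by omega
    refine ⟨A + t + 1, by omega, mkSeq A (A + t) (A + t), ?_, ?_, ?_⟩
    · have hg := mkSeq_greedy A (A + t) (A + t) (A + t + 1) (by omega) le_rfl (by omega)
      rwa [show A + (A + t) + (A + t) + (A + t + 1) = m by omega] at hg
    · have hft := mkSeq_fval m A (A + t) (A + t) (A + t + 1) (by omega) le_rfl (by omega)
      have hprod : (B : ℤ) * C * p ≤ ((A : ℤ) + t) ^ 2 * ((A : ℤ) + t + 1) :=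
        prod3_1 (by positivity) (by exact_mod_cast hBCle) (by exact_mod_cast hCple)
          (by linarith)
      have hid : 36 * fval m (A + t + 1) (mkSeq A (A + t) (A + t))
          = 36 * fval m p a
            + 36 * (((A : ℤ) + t) ^ 2 * ((A : ℤ) + t + 1) - (B : ℤ) * C * p) := by
        rw [hfo, hft]
        push_cast
        linear_combination (36 * (t : ℤ) + 54 * (A : ℤ) - 18 * (A : ℤ) ^ 2) * hrel1
          + (36 * (t : ℤ) - 36 * (B : ℤ) + 36 * (A : ℤ)) * hmZ
      linarith
    · have hft := mkSeq_fval m A (A + t) (A + t) (A + t + 1) (by omega) le_rfl (by omega)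
      have hftQ : (36 : ℚ) * ((fval m (A + t + 1) (mkSeq A (A + t) (A + t)) : ℤ) : ℚ)
          = 36 * ((m : ℚ) * ((A : ℚ) + t) + (A : ℚ) ^ 2 - (A : ℚ) * ((A : ℚ) + t)
              - ((A : ℚ) + t) ^ 2 + ((A : ℚ) + t) * ((A : ℚ) + t) - (A : ℚ)
              - 3 * ((A : ℚ) + t) + ((A : ℚ) + t))
            + 18 * (2 * ((A : ℚ) + t) * ((A : ℚ) + t) * ((A : ℚ) + t + 1)
              - 4 * ((A : ℚ) + t) * ((A : ℚ) + t) - 2 * ((A : ℚ) + t) * ((A : ℚ) + t + 1)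
              + 4 * ((A : ℚ) + t) + 4 * (A : ℚ)
              - (A : ℚ) * (((A : ℚ) + t + 1) + ((A : ℚ) + t) + ((A : ℚ) + t))
              - 3 * (A : ℚ) ^ 2
              + (A : ℚ) ^ 2 * (((A : ℚ) + t + 1) + ((A : ℚ) + t) + ((A : ℚ) + t))
              - (A : ℚ) ^ 3) := by
        exact_mod_cast hft
      have hmQ : (m : ℚ) = 4 * (A : ℚ) + 3 * (t : ℚ) + 1 := by
        have : m = 4 * A + 3 * t + 1 := by omega
        exact_mod_cast this
      refine le_trans (le_of_eq ?_) (add_le_add_right (le_max_right _ _) _)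
      push_cast
      rw [hmQ] at hftQ ⊢
      linear_combination (1 / 36 : ℚ) * hftQ
  · -- remainder 2 : target (A, A+t, A+t+1, A+t+1), uses R2
    have hrel1 : (B : ℤ) + C + p = 3 * (A : ℤ) + 3 * (t : ℤ) + 2 := by omega
    refine ⟨A + t + 1, by omega, mkSeq A (A + t) (A + t + 1), ?_, ?_, ?_⟩
    · have hg := mkSeq_greedy A (A + t) (A + t + 1) (A + t + 1) (by omega) (by omega) le_rfl
      rwa [show A + (A + t) + (A + t + 1) + (A + t + 1) = m by omega] at hg
    · have hft := mkSeq_fval m A (A + t) (A + t + 1) (A + t + 1) (by omega) (by omega) le_rfl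
      have hprod : (B : ℤ) * C * p ≤ ((A : ℤ) + t) * ((A : ℤ) + t + 1) ^ 2 :=
        prod3_2 (by positivity) (by exact_mod_cast hBCle) (by exact_mod_cast hCple)
          (by linarith)
      have hid : 36 * fval m (A + t + 1) (mkSeq A (A + t) (A + t + 1))
          = 36 * fval m p a
            + 36 * (((A : ℤ) + t) * ((A : ℤ) + t + 1) ^ 2 - (B : ℤ) * C * p) := by
        rw [hfo, hft]
        push_cast
        linear_combination (36 * (t : ℤ) + 54 * (A : ℤ) - 18 * (A : ℤ) ^ 2) * hrel1
          + (36 * (t : ℤ) - 36 * (B : ℤ) + 36 * (A : ℤ)) * hmZ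
      linarith
    · have hft := mkSeq_fval m A (A + t) (A + t + 1) (A + t + 1) (by omega) (by omega) le_rfl
      have hftQ : (36 : ℚ) * ((fval m (A + t + 1) (mkSeq A (A + t) (A + t + 1)) : ℤ) : ℚ)
          = 36 * ((m : ℚ) * ((A : ℚ) + t) + (A : ℚ) ^ 2 - (A : ℚ) * ((A : ℚ) + t)
              - ((A : ℚ) + t) ^ 2 + ((A : ℚ) + t) * ((A : ℚ) + t + 1) - (A : ℚ)
              - 3 * ((A : ℚ) + t) + ((A : ℚ) + t))
            + 18 * (2 * ((A : ℚ) + t) * ((A : ℚ) + t + 1) * ((A : ℚ) + t + 1)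
              - 4 * ((A : ℚ) + t) * ((A : ℚ) + t + 1) - 2 * ((A : ℚ) + t) * ((A : ℚ) + t + 1)
              + 4 * ((A : ℚ) + t) + 4 * (A : ℚ)
              - (A : ℚ) * (((A : ℚ) + t + 1) + ((A : ℚ) + t + 1) + ((A : ℚ) + t))
              - 3 * (A : ℚ) ^ 2
              + (A : ℚ) ^ 2 * (((A : ℚ) + t + 1) + ((A : ℚ) + t + 1) + ((A : ℚ) + t))
              - (A : ℚ) ^ 3) := by
        exact_mod_cast hft
      have hmQ : (m : ℚ) = 4 * (A : ℚ) + 3 * (t : ℚ) + 2 := by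
        have : m = 4 * A + 3 * t + 2 := by omega
        exact_mod_cast this
      refine le_trans (le_of_eq ?_)
        (add_le_add_right (le_trans (le_max_right _ _) (le_max_left _ _)) _)
      push_cast
      rw [hmQ] at hftQ ⊢
      linear_combination (1 / 36 : ℚ) * hftQ
end

section
/- Let A = (a_1, …, a_p) be an (m,p)-greedy sequence, let c = #{i : a_i ≥ 2}, and suppose p ≥ c + 2 (i.e., A contains at least two entries equal to 1). Let A' = (a_1, …, a_c, 2, 1, …, 1) be the (m, p−1)-greedy sequence of length p−1 obtained from A by changing the first entry equal to 1 into a 2 and deleting the last entry. Then f(A') ≥ f(A). -/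
open Finset SimpleGraph

/-- A downward-closed finset of positive naturals is an initial segment. -/
lemma downset_eq (S : Finset ℕ) (h1 : ∀ i ∈ S, 1 ≤ i)
    (h2 : ∀ i j, j ∈ S → 1 ≤ i → i ≤ j → i ∈ S) :
    S = Finset.Icc 1 S.card := by
  rcases S.eq_empty_or_nonempty with rfl | hS
  · simp
  obtain ⟨n, hn, hmax⟩ := S.exists_max_image id hS
  have hSn : S = Finset.Icc 1 n := by
    ext i
    simp only [Finset.mem_Icc]
    exact ⟨fun hi => ⟨h1 i hi, hmax i hi⟩, fun hi => h2 i n hn hi.1 hi.2⟩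
  rw [hSn, Nat.card_Icc, Nat.add_sub_cancel]

theorem stmt11 (m p : ℕ) (a : ℕ → ℕ) (ha : IsGreedySeq m p a)
    (hp : seqC p a + 2 ≤ p) :
    fval m p a ≤
      fval m (p - 1) (fun i => if i ≤ seqC p a then a i else if i = seqC p a + 1 then 2 else 1) := by
  obtain ⟨hbound, hmono, -⟩ := ha
  set c := seqC p a with hc
  set b := seqB p a with hb
  set A := seqA p a with hA
  set a' : ℕ → ℕ := fun i => if i ≤ c then a i else if i = c + 1 then 2 else 1 with ha'
  -- the three filters are initial segments
  have hCf : (Finset.Icc 1 p).filter (fun i => 2 ≤ a i) = Finset.Icc 1 c := by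
    rw [hc]
    exact downset_eq _ (fun i hi => (Finset.mem_Icc.1 (Finset.mem_filter.1 hi).1).1)
      (fun i j hj hi1 hij => by
        simp only [Finset.mem_filter, Finset.mem_Icc] at hj ⊢
        exact ⟨⟨hi1, le_trans hij hj.1.2⟩, le_trans hj.2 (hmono i j hi1 hij hj.1.2)⟩)
  have hBf : (Finset.Icc 1 p).filter (fun i => 3 ≤ a i) = Finset.Icc 1 b := by
    rw [hb]
    exact downset_eq _ (fun i hi => (Finset.mem_Icc.1 (Finset.mem_filter.1 hi).1).1)
      (fun i j hj hi1 hij => by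
        simp only [Finset.mem_filter, Finset.mem_Icc] at hj ⊢
        exact ⟨⟨hi1, le_trans hij hj.1.2⟩, le_trans hj.2 (hmono i j hi1 hij hj.1.2)⟩)
  have hAf : (Finset.Icc 1 p).filter (fun i => a i = 4) = Finset.Icc 1 A := by
    rw [hA]
    exact downset_eq _ (fun i hi => (Finset.mem_Icc.1 (Finset.mem_filter.1 hi).1).1)
      (fun i j hj hi1 hij => by
        simp only [Finset.mem_filter, Finset.mem_Icc] at hj ⊢
        have hjp : j ≤ p := hj.1.2
        have h4 : 4 ≤ a i := hj.2 ▸ hmono i j hi1 hij hjp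
        exact ⟨⟨hi1, le_trans hij hjp⟩,
          le_antisymm (hbound i (Finset.mem_Icc.2 ⟨hi1, le_trans hij hjp⟩)).2 h4⟩)
  have hbc : b ≤ c := by
    rw [hb, hc]
    apply Finset.card_le_card
    intro x hx
    simp only [Finset.mem_filter] at hx ⊢
    exact ⟨hx.1, by omega⟩
  have hAb : A ≤ b := by
    rw [hA, hb]
    apply Finset.card_le_card
    intro x hx
    simp only [Finset.mem_filter] at hx ⊢
    exact ⟨hx.1, by omega⟩
  -- characterizations
  have h2a : ∀ i, 1 ≤ i → i ≤ c → 2 ≤ a i := by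
    intro i h1 h2
    have : i ∈ (Finset.Icc 1 p).filter (fun i => 2 ≤ a i) := by
      rw [hCf]; exact Finset.mem_Icc.2 ⟨h1, h2⟩
    exact (Finset.mem_filter.1 this).2
  have h3a : ∀ i, 1 ≤ i → i ≤ b → 3 ≤ a i := by
    intro i h1 h2
    have : i ∈ (Finset.Icc 1 p).filter (fun i => 3 ≤ a i) := by
      rw [hBf]; exact Finset.mem_Icc.2 ⟨h1, h2⟩
    exact (Finset.mem_filter.1 this).2
  have h3b : ∀ i, 1 ≤ i → i ≤ p → 3 ≤ a i → i ≤ b := by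
    intro i h1 hip h2
    have : i ∈ Finset.Icc 1 b := by
      rw [← hBf]; exact Finset.mem_filter.2 ⟨Finset.mem_Icc.2 ⟨h1, hip⟩, h2⟩
    exact (Finset.mem_Icc.1 this).2
  have h4a : ∀ i, 1 ≤ i → i ≤ A → a i = 4 := by
    intro i h1 h2
    have : i ∈ (Finset.Icc 1 p).filter (fun i => a i = 4) := by
      rw [hAf]; exact Finset.mem_Icc.2 ⟨h1, h2⟩
    exact (Finset.mem_filter.1 this).2
  have h4b : ∀ i, 1 ≤ i → i ≤ p → a i = 4 → i ≤ A := by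
    intro i h1 hip h2
    have : i ∈ Finset.Icc 1 A := by
      rw [← hAf]; exact Finset.mem_filter.2 ⟨Finset.mem_Icc.2 ⟨h1, hip⟩, h2⟩
    exact (Finset.mem_Icc.1 this).2
  -- values of a'
  have ha'eq : ∀ i, i ≤ c → a' i = a i := by
    intro i hi
    simp only [ha', if_pos hi]
  have ha'c1 : a' (c + 1) = 2 := by
    simp only [ha']
    rw [if_neg (by omega)]
    simp
  have ha'one : ∀ i, c + 1 < i → a' i = 1 := by
    intro i hi
    simp only [ha']
    rw [if_neg (by omega), if_neg (by omega)]
  -- statistics of a'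
  have hC' : seqC (p - 1) a' = c + 1 := by
    have hfilter : (Finset.Icc 1 (p - 1)).filter (fun i => 2 ≤ a' i)
        = Finset.Icc 1 (c + 1) := by
      ext i
      simp only [Finset.mem_filter, Finset.mem_Icc]
      constructor
      · rintro ⟨⟨h1, h2⟩, h3⟩
        refine ⟨h1, ?_⟩
        by_contra hcon
        push_neg at hcon
        rw [ha'one i (by omega)] at h3
        omega
      · rintro ⟨h1, h2⟩
        refine ⟨⟨h1, by omega⟩, ?_⟩
        by_cases hic : i ≤ c
        · rw [ha'eq i hic]; exact h2a i h1 hic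
        · have : i = c + 1 := by omega
          rw [this, ha'c1]
    rw [seqC, hfilter, Nat.card_Icc]
    omega
  have hB' : seqB (p - 1) a' = b := by
    have hfilter : (Finset.Icc 1 (p - 1)).filter (fun i => 3 ≤ a' i)
        = Finset.Icc 1 b := by
      ext i
      simp only [Finset.mem_filter, Finset.mem_Icc]
      constructor
      · rintro ⟨⟨h1, h2⟩, h3⟩
        refine ⟨h1, ?_⟩
        by_cases hic : i ≤ c
        · rw [ha'eq i hic] at h3
          exact h3b i h1 (by omega) h3
        · by_cases hic1 : i = c + 1
          · rw [hic1, ha'c1] at h3; omega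
          · rw [ha'one i (by omega)] at h3; omega
      · rintro ⟨h1, h2⟩
        refine ⟨⟨h1, by omega⟩, ?_⟩
        rw [ha'eq i (le_trans h2 hbc)]
        exact h3a i h1 h2
    rw [seqB, hfilter, Nat.card_Icc]
    omega
  have hA' : seqA (p - 1) a' = A := by
    have hfilter : (Finset.Icc 1 (p - 1)).filter (fun i => a' i = 4)
        = Finset.Icc 1 A := by
      ext i
      simp only [Finset.mem_filter, Finset.mem_Icc]
      constructor
      · rintro ⟨⟨h1, h2⟩, h3⟩
        refine ⟨h1, ?_⟩
        by_cases hic : i ≤ c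
        · rw [ha'eq i hic] at h3
          exact h4b i h1 (by omega) h3
        · by_cases hic1 : i = c + 1
          · rw [hic1, ha'c1] at h3; omega
          · rw [ha'one i (by omega)] at h3; omega
      · rintro ⟨h1, h2⟩
        refine ⟨⟨h1, by omega⟩, ?_⟩
        rw [ha'eq i (le_trans h2 (le_trans hAb hbc))]
        exact h4a i h1 h2
    rw [seqA, hfilter, Nat.card_Icc]
    omega
  -- abbreviations for inner sums
  set T1 : ℤ := ∑ j ∈ Finset.Icc 2 b, ((a j : ℤ) - 1) * ((j : ℤ) - 1) with hT1
  set T2 : ℤ := ∑ j ∈ Finset.Icc (b + 1) c, ((a j : ℤ) - 1) * (b : ℤ) with hT2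
  -- the three pieces of S3 for a'
  have e1 : (∑ k ∈ Finset.Icc 3 b,
        (a' k : ℤ) * ∑ j ∈ Finset.Icc 2 (k - 1), ((a' j : ℤ) - 1) * ((j : ℤ) - 1))
      = ∑ k ∈ Finset.Icc 3 b,
        (a k : ℤ) * ∑ j ∈ Finset.Icc 2 (k - 1), ((a j : ℤ) - 1) * ((j : ℤ) - 1) := by
    refine Finset.sum_congr rfl fun k hk => ?_
    rw [Finset.mem_Icc] at hk
    rw [ha'eq k (le_trans hk.2 hbc)]
    congr 1
    refine Finset.sum_congr rfl fun j hj => ?_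
    rw [Finset.mem_Icc] at hj
    rw [ha'eq j (by omega)]
  have eT1' : (∑ j ∈ Finset.Icc 2 b, ((a' j : ℤ) - 1) * ((j : ℤ) - 1)) = T1 := by
    rw [hT1]
    refine Finset.sum_congr rfl fun j hj => ?_
    rw [Finset.mem_Icc] at hj
    rw [ha'eq j (le_trans hj.2 hbc)]
  have eT2' : (∑ j ∈ Finset.Icc (b + 1) c, ((a' j : ℤ) - 1) * (b : ℤ)) = T2 := by
    rw [hT2]
    refine Finset.sum_congr rfl fun j hj => ?_
    rw [Finset.mem_Icc] at hj
    rw [ha'eq j hj.2]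
  have e2 : (∑ k ∈ Finset.Icc (b + 1) (c + 1), (a' k : ℤ) *
        ((∑ j ∈ Finset.Icc 2 b, ((a' j : ℤ) - 1) * ((j : ℤ) - 1)) +
          ∑ j ∈ Finset.Icc (b + 1) (k - 1), ((a' j : ℤ) - 1) * (b : ℤ)))
      = (∑ k ∈ Finset.Icc (b + 1) c, (a k : ℤ) *
        ((∑ j ∈ Finset.Icc 2 b, ((a j : ℤ) - 1) * ((j : ℤ) - 1)) +
          ∑ j ∈ Finset.Icc (b + 1) (k - 1), ((a j : ℤ) - 1) * (b : ℤ)))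
        + 2 * (T1 + T2) := by
    rw [Finset.sum_Icc_succ_top (by omega : b + 1 ≤ c + 1)]
    congr 1
    · refine Finset.sum_congr rfl fun k hk => ?_
      rw [Finset.mem_Icc] at hk
      rw [ha'eq k hk.2]
      congr 1
      rw [eT1']
      congr 1
      refine Finset.sum_congr rfl fun j hj => ?_
      rw [Finset.mem_Icc] at hj
      rw [ha'eq j (by omega)]
    · rw [ha'c1]
      have : c + 1 - 1 = c := by omega
      rw [this, eT1', eT2']
      push_cast
      ring
  have ecount1 : (Finset.Icc (c + 1) p).card = p - c := by
    rw [Nat.card_Icc]; omega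
  have ecount2 : (Finset.Icc (c + 1 + 1) (p - 1)).card = p - c - 2 := by
    rw [Nat.card_Icc]; omega
  have e3 : (∑ _k ∈ Finset.Icc (c + 1 + 1) (p - 1),
        ((∑ j ∈ Finset.Icc 2 b, ((a' j : ℤ) - 1) * ((j : ℤ) - 1)) +
          ∑ j ∈ Finset.Icc (b + 1) (c + 1), ((a' j : ℤ) - 1) * (b : ℤ)))
      = ((p : ℤ) - c - 2) * (T1 + T2 + b) := by
    rw [Finset.sum_const, ecount2, eT1']
    rw [Finset.sum_Icc_succ_top (by omega : b + 1 ≤ c + 1), eT2', ha'c1]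
    have hcast : ((p - c - 2 : ℕ) : ℤ) = (p : ℤ) - c - 2 := by omega
    rw [nsmul_eq_mul, hcast]
    push_cast
    ring
  have e3old : (∑ _k ∈ Finset.Icc (c + 1) p, (T1 + T2)) = ((p : ℤ) - c) * (T1 + T2) := by
    rw [Finset.sum_const, ecount1, nsmul_eq_mul]
    have hcast : ((p - c : ℕ) : ℤ) = (p : ℤ) - c := by omega
    rw [hcast]
  -- put everything together
  have key : fval m (p - 1) a' = fval m p a + ((p : ℤ) - c - 1) * b := by
    unfold fval S1 S2 S3
    rw [hA', hB', hC', ← hA, ← hb, ← hc]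
    rw [e1, e2, e3, e3old]
    push_cast
    ring
  rw [key]
  have hple : (c : ℤ) + 2 ≤ (p : ℤ) := by exact_mod_cast hp
  nlinarith [Int.ofNat_nonneg b]
end

section
/- Let A = (a_1, …, a_p) be an (m,p)-greedy sequence with b = #{i : a_i ≥ 3} and c = #{i : a_i ≥ 2}, and suppose p = c + 1 and c > b (i.e., A has exactly one entry equal to 1 and at least one entry equal to 2). Let A' = (a_1, …, a_b, 3, 2, …, 2) be the (m, p−1)-greedy sequence of length p−1 obtained from A by changing the first entry equal to 2 into a 3 and deleting the entry equal to 1. Then f(A') − f(A) = c(c − b) ≥ 0. -/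
open Finset SimpleGraph

lemma filter_le_eq_Icc (p t : ℕ) (a : ℕ → ℕ)
    (hmono : ∀ i j : ℕ, 1 ≤ i → i ≤ j → j ≤ p → a j ≤ a i) :
    (Finset.Icc 1 p).filter (fun i => t ≤ a i)
      = Finset.Icc 1 (((Finset.Icc 1 p).filter (fun i => t ≤ a i)).card) := by
  set S := (Finset.Icc 1 p).filter (fun i => t ≤ a i) with hS
  have hsub : S ⊆ Finset.Icc 1 p := Finset.filter_subset _ _
  have hk : S.card ≤ p := by
    have := Finset.card_le_card hsub
    simpa using this
  refine (Finset.eq_of_subset_of_card_le ?_ (by simp)).symm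
  intro i hi
  simp only [Finset.mem_Icc] at hi
  by_contra hiS
  have hait : ¬ t ≤ a i := by
    intro h
    exact hiS (by simp [hS, Finset.mem_filter, Finset.mem_Icc, hi.1, h, le_trans hi.2 hk])
  have hSsub : S ⊆ Finset.Icc 1 (i - 1) := by
    intro j hj
    simp only [hS, Finset.mem_filter, Finset.mem_Icc] at hj
    refine Finset.mem_Icc.2 ⟨hj.1.1, ?_⟩
    by_contra hji
    have hij : i ≤ j := by omega
    have := hmono i j hi.1 hij hj.1.2
    omega
  have := Finset.card_le_card hSsub
  simp only [Nat.card_Icc] at this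
  omega

lemma gauss2 (s : ℕ) : ∀ n : ℕ,
    (∑ k ∈ Finset.Icc (s+1) (s+n), ((k:ℤ) - s - 1)) * 2 = (n:ℤ) * ((n:ℤ)-1) := by
  intro n
  induction n with
  | zero => simp
  | succ n ih =>
    rw [show s + (n+1) = (s+n) + 1 from rfl, Finset.sum_Icc_succ_top (by omega)]
    push_cast
    push_cast at ih
    nlinarith [ih]

lemma sum_Icc_split (f : ℕ → ℤ) (b c : ℕ) (h : b ≤ c) :
    (∑ i ∈ Finset.Icc 1 b, f i) + ∑ i ∈ Finset.Icc (b+1) c, f i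
      = ∑ i ∈ Finset.Icc 1 c, f i := by
  have h1 : ∀ n : ℕ, Finset.Icc 1 n = Finset.Ioc 0 n := by
    intro n
    rw [show (1:ℕ) = 0 + 1 from rfl, Finset.Icc_add_one_left_eq_Ioc]
  have h2 : Finset.Icc (b+1) c = Finset.Ioc b c := Finset.Icc_add_one_left_eq_Ioc b c
  rw [h1, h1, h2]
  exact Finset.sum_Ioc_consecutive _ (Nat.zero_le b) h

theorem stmt12 (m p : ℕ) (a : ℕ → ℕ) (ha : IsGreedySeq m p a)
    (hp : p = seqC p a + 1) (hbc : seqB p a < seqC p a) :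
    fval m (p - 1) (fun i => if i ≤ seqB p a then a i else if i = seqB p a + 1 then 3 else 2)
          - fval m p a =
        (seqC p a : ℤ) * ((seqC p a : ℤ) - (seqB p a : ℤ)) ∧
      0 ≤ fval m (p - 1)
            (fun i => if i ≤ seqB p a then a i else if i = seqB p a + 1 then 3 else 2)
          - fval m p a := by
  obtain ⟨hrange, hmono, hsum⟩ := ha
  set b := seqB p a with hb
  set c := seqC p a with hc
  set α := seqA p a with hα
  set f := (fun i => if i ≤ b then a i else if i = b + 1 then 3 else 2) with hf
  -- filter characterizations
  have hfil3 : (Finset.Icc 1 p).filter (fun i => 3 ≤ a i) = Finset.Icc 1 b := by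
    rw [hb, seqB]; exact filter_le_eq_Icc p 3 a hmono
  have hfil2 : (Finset.Icc 1 p).filter (fun i => 2 ≤ a i) = Finset.Icc 1 c := by
    rw [hc, seqC]; exact filter_le_eq_Icc p 2 a hmono
  have hfil4 : (Finset.Icc 1 p).filter (fun i => a i = 4) = Finset.Icc 1 α := by
    have he : (Finset.Icc 1 p).filter (fun i => a i = 4)
        = (Finset.Icc 1 p).filter (fun i => 4 ≤ a i) := by
      apply Finset.filter_congr
      intro i hi
      have := hrange i hi
      constructor <;> intro h <;> omega
    rw [hα, seqA, he]
    exact filter_le_eq_Icc p 4 a hmono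
  have h3 : ∀ i, 1 ≤ i → i ≤ p → (3 ≤ a i ↔ i ≤ b) := by
    intro i h1 h2
    have := Finset.ext_iff.1 hfil3 i
    simp only [Finset.mem_filter, Finset.mem_Icc] at this
    omega
  have h2i : ∀ i, 1 ≤ i → i ≤ p → (2 ≤ a i ↔ i ≤ c) := by
    intro i h1 h2
    have := Finset.ext_iff.1 hfil2 i
    simp only [Finset.mem_filter, Finset.mem_Icc] at this
    omega
  have h4 : ∀ i, 1 ≤ i → i ≤ p → (a i = 4 ↔ i ≤ α) := by
    intro i h1 h2
    have := Finset.ext_iff.1 hfil4 i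
    simp only [Finset.mem_filter, Finset.mem_Icc] at this
    omega
  have hcp : c ≤ p := by omega
  have hbp : b ≤ p := by omega
  have hαp : α ≤ p := by
    rw [hα, seqA]
    have := Finset.card_le_card (Finset.filter_subset (fun i => a i = 4) (Finset.Icc 1 p))
    simpa using this
  have hαb : α ≤ b := by
    rcases Nat.eq_zero_or_pos α with h0 | h0
    · omega
    · have h4α : a α = 4 := (h4 α h0 hαp).2 le_rfl
      have := (h3 α h0 hαp).1 (by omega)
      exact this
  -- values
  have hv3 : ∀ i, 1 ≤ i → i ≤ b → 3 ≤ a i := fun i h1 h2 => (h3 i h1 (by omega)).2 h2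
  have hv4 : ∀ i, 1 ≤ i → i ≤ α → a i = 4 := fun i h1 h2 => (h4 i h1 (by omega)).2 h2
  have hv34 : ∀ i, α + 1 ≤ i → i ≤ b → a i = 3 := by
    intro i h1 h2
    have ha3 := hv3 i (by omega) h2
    have ha4 := (h4 i (by omega) (by omega))
    have := hrange i (Finset.mem_Icc.2 ⟨by omega, by omega⟩)
    omega
  have hv2 : ∀ i, b + 1 ≤ i → i ≤ c → a i = 2 := by
    intro i h1 h2
    have := (h2i i (by omega) (by omega)).2 h2
    have := (h3 i (by omega) (by omega))
    omega
  have hv1 : a p = 1 := by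
    have hr := hrange p (Finset.mem_Icc.2 ⟨by omega, le_rfl⟩)
    have := h2i p (by omega) le_rfl
    omega
  -- the value of m
  have hsumZ : (∑ i ∈ Finset.Icc 1 p, (a i : ℤ)) = (m : ℤ) := by
    exact_mod_cast congrArg (Nat.cast : ℕ → ℤ) hsum
  have hm : (m : ℤ) = (α : ℤ) + (b : ℤ) + 2 * (c : ℤ) + 1 := by
    have e1 : ∑ i ∈ Finset.Icc 1 α, (a i : ℤ) = 4 * (α : ℤ) := by
      have e1' : ∑ i ∈ Finset.Icc 1 α, (a i : ℤ) = ∑ i ∈ Finset.Icc 1 α, (4 : ℤ) :=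
        Finset.sum_congr rfl (fun i hi => by
          rw [Finset.mem_Icc] at hi
          rw [hv4 i hi.1 hi.2]; norm_num)
      rw [e1', Finset.sum_const, Nat.card_Icc, nsmul_eq_mul]
      have : ((α + 1 - 1 : ℕ) : ℤ) = (α : ℤ) := by omega
      rw [this]; ring
    have e2 : ∑ i ∈ Finset.Icc (α + 1) b, (a i : ℤ) = 3 * ((b : ℤ) - (α : ℤ)) := by
      have e2' : ∑ i ∈ Finset.Icc (α + 1) b, (a i : ℤ)
          = ∑ i ∈ Finset.Icc (α + 1) b, (3 : ℤ) :=
        Finset.sum_congr rfl (fun i hi => by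
          rw [Finset.mem_Icc] at hi
          rw [hv34 i hi.1 hi.2]; norm_num)
      rw [e2', Finset.sum_const, Nat.card_Icc, nsmul_eq_mul]
      have : ((b + 1 - (α + 1) : ℕ) : ℤ) = (b : ℤ) - (α : ℤ) := by omega
      rw [this]; ring
    have e3 : ∑ i ∈ Finset.Icc (b + 1) c, (a i : ℤ) = 2 * ((c : ℤ) - (b : ℤ)) := by
      have e3' : ∑ i ∈ Finset.Icc (b + 1) c, (a i : ℤ)
          = ∑ i ∈ Finset.Icc (b + 1) c, (2 : ℤ) :=
        Finset.sum_congr rfl (fun i hi => by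
          rw [Finset.mem_Icc] at hi
          rw [hv2 i hi.1 hi.2]; norm_num)
      rw [e3', Finset.sum_const, Nat.card_Icc, nsmul_eq_mul]
      have : ((c + 1 - (b + 1) : ℕ) : ℤ) = (c : ℤ) - (b : ℤ) := by omega
      rw [this]; ring
    have s1 : (∑ i ∈ Finset.Icc 1 b, (a i : ℤ)) + ∑ i ∈ Finset.Icc (b+1) c, (a i : ℤ)
        = ∑ i ∈ Finset.Icc 1 c, (a i : ℤ) := sum_Icc_split _ b c (by omega)
    have s2 : (∑ i ∈ Finset.Icc 1 α, (a i : ℤ)) + ∑ i ∈ Finset.Icc (α+1) b, (a i : ℤ)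
        = ∑ i ∈ Finset.Icc 1 b, (a i : ℤ) := sum_Icc_split _ α b hαb
    have s3 : (∑ i ∈ Finset.Icc 1 c, (a i : ℤ)) + ∑ i ∈ Finset.Icc (c+1) p, (a i : ℤ)
        = ∑ i ∈ Finset.Icc 1 p, (a i : ℤ) := sum_Icc_split _ c p hcp
    have e4 : ∑ i ∈ Finset.Icc (c+1) p, (a i : ℤ) = 1 := by
      rw [hp, Finset.Icc_self, Finset.sum_singleton, ← hp, hv1]
      norm_num
    rw [← hsumZ, ← s3, ← s1, ← s2, e1, e2, e3, e4]
    ring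
  -- facts about f
  have hf_le : ∀ i, i ≤ b → f i = a i := by
    intro i h; simp [hf, h]
  have hf_b1 : f (b + 1) = 3 := by
    simp [hf]
  have hf_gt : ∀ i, b + 2 ≤ i → f i = 2 := by
    intro i h
    simp only [hf]
    rw [if_neg (by omega), if_neg (by omega)]
  have hp1 : p - 1 = c := by omega
  rw [hp1]
  -- seq invariants of f
  have hfB : seqB c f = b + 1 := by
    rw [seqB]
    have he : (Finset.Icc 1 c).filter (fun i => 3 ≤ f i) = Finset.Icc 1 (b + 1) := by
      ext i
      simp only [Finset.mem_filter, Finset.mem_Icc]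
      constructor
      · rintro ⟨⟨h1, h2⟩, h3f⟩
        refine ⟨h1, ?_⟩
        by_contra hcon
        rw [hf_gt i (by omega)] at h3f
        omega
      · rintro ⟨h1, h2⟩
        refine ⟨⟨h1, by omega⟩, ?_⟩
        rcases Nat.lt_or_ge i (b + 1) with h | h
        · rw [hf_le i (by omega)]
          exact hv3 i h1 (by omega)
        · have hi' : i = b + 1 := by omega
          rw [hi', hf_b1]
    rw [he, Nat.card_Icc]
    omega
  have hfC : seqC c f = c := by
    rw [seqC]
    have he : (Finset.Icc 1 c).filter (fun i => 2 ≤ f i) = Finset.Icc 1 c := by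
      apply Finset.filter_true_of_mem
      intro i hi
      rw [Finset.mem_Icc] at hi
      by_cases h1 : i ≤ b
      · rw [hf_le i h1]
        have := hv3 i hi.1 h1
        omega
      · by_cases h2 : i = b + 1
        · rw [h2, hf_b1]; norm_num
        · rw [hf_gt i (by omega)]
    rw [he, Nat.card_Icc]
    omega
  have hfA : seqA c f = α := by
    rw [seqA]
    have he : (Finset.Icc 1 c).filter (fun i => f i = 4) = Finset.Icc 1 α := by
      ext i
      simp only [Finset.mem_filter, Finset.mem_Icc]
      constructor
      · rintro ⟨⟨h1, h2⟩, h4f⟩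
        by_cases hib : i ≤ b
        · rw [hf_le i hib] at h4f
          exact ⟨h1, (h4 i h1 (by omega)).1 h4f⟩
        · by_cases hib1 : i = b + 1
          · rw [hib1, hf_b1] at h4f; omega
          · rw [hf_gt i (by omega)] at h4f; omega
      · rintro ⟨h1, h2⟩
        refine ⟨⟨h1, by omega⟩, ?_⟩
        rw [hf_le i (by omega)]
        exact hv4 i h1 h2
    rw [he, Nat.card_Icc]
    omega
  simp only [fval, S1, S2, S3, hfA, hfB, hfC, ← hb, ← hc, ← hα]
  -- abbreviation lemmas for the sums
  have hW' : ∑ j ∈ Finset.Icc 2 (b+1), ((f j : ℤ) - 1) * ((j : ℤ) - 1)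
      = (∑ j ∈ Finset.Icc 2 b, ((a j : ℤ) - 1) * ((j : ℤ) - 1)) + 2 * (b : ℤ) := by
    rcases Nat.eq_zero_or_pos b with h0 | h0
    · rw [h0, show Finset.Icc 2 (0+1) = (∅ : Finset ℕ) from Finset.Icc_eq_empty (by omega),
        show Finset.Icc 2 0 = (∅ : Finset ℕ) from Finset.Icc_eq_empty (by omega)]
      simp
    · rw [Finset.sum_Icc_succ_top (by omega : 2 ≤ b + 1)]
      have e : ∑ j ∈ Finset.Icc 2 b, ((f j : ℤ) - 1) * ((j : ℤ) - 1)
          = ∑ j ∈ Finset.Icc 2 b, ((a j : ℤ) - 1) * ((j : ℤ) - 1) :=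
        Finset.sum_congr rfl (fun j hj => by
          rw [Finset.mem_Icc] at hj; rw [hf_le j hj.2])
      rw [e, hf_b1]
      push_cast
      ring
  have hT1' : ∑ k ∈ Finset.Icc 3 (b+1), (f k : ℤ) *
        ∑ j ∈ Finset.Icc 2 (k-1), ((f j : ℤ) - 1) * ((j : ℤ) - 1)
      = (∑ k ∈ Finset.Icc 3 b, (a k : ℤ) *
          ∑ j ∈ Finset.Icc 2 (k-1), ((a j : ℤ) - 1) * ((j : ℤ) - 1))
        + 3 * (∑ j ∈ Finset.Icc 2 b, ((a j : ℤ) - 1) * ((j : ℤ) - 1)) := by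
    rcases Nat.lt_or_ge b 2 with h0 | h0
    · rw [show Finset.Icc 3 (b+1) = (∅ : Finset ℕ) from Finset.Icc_eq_empty (by omega),
        show Finset.Icc 3 b = (∅ : Finset ℕ) from Finset.Icc_eq_empty (by omega),
        show Finset.Icc 2 b = (∅ : Finset ℕ) from Finset.Icc_eq_empty (by omega)]
      simp
    · rw [Finset.sum_Icc_succ_top (by omega : 3 ≤ b + 1)]
      have e1 : ∑ k ∈ Finset.Icc 3 b, (f k : ℤ) *
            ∑ j ∈ Finset.Icc 2 (k-1), ((f j : ℤ) - 1) * ((j : ℤ) - 1)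
          = ∑ k ∈ Finset.Icc 3 b, (a k : ℤ) *
            ∑ j ∈ Finset.Icc 2 (k-1), ((a j : ℤ) - 1) * ((j : ℤ) - 1) := by
        apply Finset.sum_congr rfl
        intro k hk
        rw [Finset.mem_Icc] at hk
        rw [hf_le k hk.2]
        congr 1
        apply Finset.sum_congr rfl
        intro j hj
        rw [Finset.mem_Icc] at hj
        rw [hf_le j (by omega)]
      have e2 : ∑ j ∈ Finset.Icc 2 (b+1-1), ((f j : ℤ) - 1) * ((j : ℤ) - 1)
          = ∑ j ∈ Finset.Icc 2 b, ((a j : ℤ) - 1) * ((j : ℤ) - 1) := by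
        rw [show b+1-1 = b from rfl]
        exact Finset.sum_congr rfl (fun j hj => by
          rw [Finset.mem_Icc] at hj; rw [hf_le j hj.2])
      rw [e1, e2, hf_b1]
      push_cast
      ring
  have hK1 : ∑ k ∈ Finset.Icc (b+1) c, (a k : ℤ) *
        ((∑ j ∈ Finset.Icc 2 b, ((a j : ℤ) - 1) * ((j : ℤ) - 1)) +
          ∑ j ∈ Finset.Icc (b+1) (k-1), ((a j : ℤ) - 1) * (b : ℤ))
      = 2 * ((c:ℤ) - b) * (∑ j ∈ Finset.Icc 2 b, ((a j : ℤ) - 1) * ((j : ℤ) - 1))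
        + (b : ℤ) * (((c:ℤ) - b) * ((c:ℤ) - b - 1)) := by
    have step : ∑ k ∈ Finset.Icc (b+1) c, (a k : ℤ) *
          ((∑ j ∈ Finset.Icc 2 b, ((a j : ℤ) - 1) * ((j : ℤ) - 1)) +
            ∑ j ∈ Finset.Icc (b+1) (k-1), ((a j : ℤ) - 1) * (b : ℤ))
        = ∑ k ∈ Finset.Icc (b+1) c,
            (2 * (∑ j ∈ Finset.Icc 2 b, ((a j : ℤ) - 1) * ((j : ℤ) - 1))
              + 2 * (b : ℤ) * ((k : ℤ) - (b : ℤ) - 1)) := by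
      apply Finset.sum_congr rfl
      intro k hk
      rw [Finset.mem_Icc] at hk
      have hak : a k = 2 := hv2 k hk.1 hk.2
      have hin : ∑ j ∈ Finset.Icc (b+1) (k-1), ((a j : ℤ) - 1) * (b : ℤ)
          = ((k : ℤ) - (b : ℤ) - 1) * (b : ℤ) := by
        have e : ∑ j ∈ Finset.Icc (b+1) (k-1), ((a j : ℤ) - 1) * (b : ℤ)
            = ∑ j ∈ Finset.Icc (b+1) (k-1), (b : ℤ) :=
          Finset.sum_congr rfl (fun j hj => by
            rw [Finset.mem_Icc] at hj
            rw [hv2 j hj.1 (by omega)]; norm_num)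
        rw [e, Finset.sum_const, Nat.card_Icc, nsmul_eq_mul]
        have hcst : ((k - 1 + 1 - (b+1) : ℕ) : ℤ) = (k : ℤ) - (b : ℤ) - 1 := by omega
        rw [hcst]
      rw [hak, hin]
      push_cast
      ring
    rw [step, Finset.sum_add_distrib, Finset.sum_const, Nat.card_Icc, nsmul_eq_mul,
      ← Finset.mul_sum]
    have g := gauss2 b (c - b)
    rw [show b + (c - b) = c by omega] at g
    have h1 : ((c + 1 - (b+1) : ℕ) : ℤ) = (c : ℤ) - (b : ℤ) := by omega
    have h2 : ((c - b : ℕ) : ℤ) = (c : ℤ) - (b : ℤ) := by omega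
    rw [h2] at g
    rw [h1]
    linear_combination (b : ℤ) * g
  have hK1' : ∑ k ∈ Finset.Icc (b+1+1) c, (f k : ℤ) *
        ((∑ j ∈ Finset.Icc 2 (b+1), ((f j : ℤ) - 1) * ((j : ℤ) - 1)) +
          ∑ j ∈ Finset.Icc (b+1+1) (k-1), ((f j : ℤ) - 1) * ((b+1 : ℕ) : ℤ))
      = 2 * ((c:ℤ) - b - 1) *
          ((∑ j ∈ Finset.Icc 2 b, ((a j : ℤ) - 1) * ((j : ℤ) - 1)) + 2 * (b : ℤ))
        + ((b : ℤ) + 1) * (((c:ℤ) - b - 1) * ((c:ℤ) - b - 2)) := by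
    rw [hW']
    have step : ∑ k ∈ Finset.Icc (b+1+1) c, (f k : ℤ) *
          (((∑ j ∈ Finset.Icc 2 b, ((a j : ℤ) - 1) * ((j : ℤ) - 1)) + 2 * (b : ℤ)) +
            ∑ j ∈ Finset.Icc (b+1+1) (k-1), ((f j : ℤ) - 1) * ((b+1 : ℕ) : ℤ))
        = ∑ k ∈ Finset.Icc (b+1+1) c,
            (2 * ((∑ j ∈ Finset.Icc 2 b, ((a j : ℤ) - 1) * ((j : ℤ) - 1)) + 2 * (b : ℤ))
              + 2 * ((b : ℤ) + 1) * ((k : ℤ) - ((b+1 : ℕ) : ℤ) - 1)) := by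
      apply Finset.sum_congr rfl
      intro k hk
      rw [Finset.mem_Icc] at hk
      have hfk : f k = 2 := hf_gt k (by omega)
      have hin : ∑ j ∈ Finset.Icc (b+1+1) (k-1), ((f j : ℤ) - 1) * ((b+1 : ℕ) : ℤ)
          = ((k : ℤ) - (b : ℤ) - 2) * ((b : ℤ) + 1) := by
        have e : ∑ j ∈ Finset.Icc (b+1+1) (k-1), ((f j : ℤ) - 1) * ((b+1 : ℕ) : ℤ)
            = ∑ j ∈ Finset.Icc (b+1+1) (k-1), ((b : ℤ) + 1) :=
          Finset.sum_congr rfl (fun j hj => by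
            rw [Finset.mem_Icc] at hj
            rw [hf_gt j (by omega)]
            push_cast
            ring)
        rw [e, Finset.sum_const, Nat.card_Icc, nsmul_eq_mul]
        have hcst : ((k - 1 + 1 - (b+1+1) : ℕ) : ℤ) = (k : ℤ) - (b : ℤ) - 2 := by omega
        rw [hcst]
      rw [hfk, hin]
      push_cast
      ring
    rw [step, Finset.sum_add_distrib, Finset.sum_const, Nat.card_Icc, nsmul_eq_mul,
      ← Finset.mul_sum]
    have g := gauss2 (b+1) (c - b - 1)
    rw [show b + 1 + (c - b - 1) = c by omega] at g
    have h1 : ((c + 1 - (b+1+1) : ℕ) : ℤ) = (c : ℤ) - (b : ℤ) - 1 := by omega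
    have h2 : ((c - b - 1 : ℕ) : ℤ) = (c : ℤ) - (b : ℤ) - 1 := by omega
    rw [h2] at g
    rw [h1]
    push_cast at g ⊢
    linear_combination ((b : ℤ) + 1) * g
  have hK3 : ∑ _k ∈ Finset.Icc (c+1) p,
        ((∑ j ∈ Finset.Icc 2 b, ((a j : ℤ) - 1) * ((j : ℤ) - 1)) +
          ∑ j ∈ Finset.Icc (b+1) c, ((a j : ℤ) - 1) * (b : ℤ))
      = (∑ j ∈ Finset.Icc 2 b, ((a j : ℤ) - 1) * ((j : ℤ) - 1))
        + ((c:ℤ) - b) * (b : ℤ) := by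
    have hIcc : Finset.Icc (c+1) p = {c+1} := by rw [hp, Finset.Icc_self]
    rw [hIcc, Finset.sum_singleton]
    congr 1
    have e : ∑ j ∈ Finset.Icc (b+1) c, ((a j : ℤ) - 1) * (b : ℤ)
        = ∑ j ∈ Finset.Icc (b+1) c, (b : ℤ) :=
      Finset.sum_congr rfl (fun j hj => by
        rw [Finset.mem_Icc] at hj
        rw [hv2 j hj.1 hj.2]; norm_num)
    rw [e, Finset.sum_const, Nat.card_Icc, nsmul_eq_mul]
    have hcst : ((c + 1 - (b+1) : ℕ) : ℤ) = (c : ℤ) - (b : ℤ) := by omega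
    rw [hcst]
  rw [hT1', hK1, hK1', hK3,
    show Finset.Icc (c+1) c = (∅ : Finset ℕ) from Finset.Icc_eq_empty (by omega),
    Finset.sum_empty]
  have hR : (0:ℤ) ≤ (c:ℤ) * ((c:ℤ) - (b:ℤ)) :=
    mul_nonneg (by positivity) (by omega)
  have key : ∀ E : ℤ, E = (c:ℤ) * ((c:ℤ) - (b:ℤ)) →
      E = (c:ℤ) * ((c:ℤ) - (b:ℤ)) ∧ 0 ≤ E := by
    intro E hE
    exact ⟨hE, by rw [hE]; exact hR⟩
  apply key
  push_cast
  linear_combination hm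
end

section
/- Let A = (a_1, …, a_p) be an (m,p)-greedy sequence with b = #{i : a_i ≥ 3} and c = #{i : a_i ≥ 2}, and suppose p = c ≥ b + 2 (i.e., A has no entry equal to 1 and at least two entries equal to 2). Let A' = (a_1, …, a_b, 3, 2, …, 2, 1) be the (m,p)-greedy sequence obtained from A by changing the first entry equal to 2 into a 3 and the last entry equal to 2 into a 1. Then f(A') − f(A) = c(c − b − 1) ≥ 0. -/
open Finset SimpleGraph

lemma mySumIccSplit (f : ℕ → ℤ) {x y z : ℕ} (h1 : x ≤ y + 1) (h2 : y ≤ z) :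
    ∑ i ∈ Finset.Icc x z, f i
      = ∑ i ∈ Finset.Icc x y, f i + ∑ i ∈ Finset.Icc (y+1) z, f i := by
  have hu : Finset.Icc x z = Finset.Icc x y ∪ Finset.Icc (y+1) z := by
    ext i; simp only [Finset.mem_Icc, Finset.mem_union]; omega
  rw [hu, Finset.sum_union]
  rw [Finset.disjoint_left]
  intro i hi hi'
  simp only [Finset.mem_Icc] at hi hi'; omega

lemma myGaussIcc (x N : ℕ) (T B : ℤ) :
    ∑ k ∈ Finset.Icc (x+1) (x+N), (2*(T + ((k:ℤ) - (x:ℤ) - 1)*B))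
      = 2*N*T + B*N*((N:ℤ)-1) := by
  induction N with
  | zero => rw [Finset.Icc_eq_empty (by omega)]; simp
  | succ n ih =>
      have hx : x + (n+1) = (x + n) + 1 := rfl
      rw [hx, Finset.sum_Icc_succ_top (by omega), ih]; push_cast; ring

set_option maxHeartbeats 2000000 in
theorem stmt13 (m p : ℕ) (a : ℕ → ℕ) (ha : IsGreedySeq m p a)
    (hp : p = seqC p a) (hbc : seqB p a + 2 ≤ seqC p a) :
    fval m p
          (fun i => if i ≤ seqB p a then a i
            else if i = seqB p a + 1 then 3 else if i = p then 1 else 2)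
          - fval m p a =
        (seqC p a : ℤ) * ((seqC p a : ℤ) - (seqB p a : ℤ) - 1) ∧
      0 ≤ fval m p
            (fun i => if i ≤ seqB p a then a i
              else if i = seqB p a + 1 then 3 else if i = p then 1 else 2)
          - fval m p a := by
  obtain ⟨hbd, hmono, hsum⟩ := ha
  set b := seqB p a with hbdef
  set c := seqC p a with hcdef
  set A := seqA p a with hAdef
  set a' : ℕ → ℕ := fun i => if i ≤ b then a i
      else if i = b + 1 then 3 else if i = p then 1 else 2 with ha'def
  have hcardIcc : (Finset.Icc 1 p).card = p := by simp
  have hbp : b ≤ p := by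
    rw [hbdef, seqB]
    exact le_trans (Finset.card_filter_le _ _) (by simp)
  have h2 : ∀ i, 1 ≤ i → i ≤ p → 2 ≤ a i := by
    have hfe : (Finset.Icc 1 p).filter (fun i => 2 ≤ a i) = Finset.Icc 1 p :=
      Finset.eq_of_subset_of_card_le (Finset.filter_subset _ _)
        (by rw [hcardIcc]; exact le_of_eq (hp.trans hcdef))
    intro i h1 h2'
    have hi : i ∈ (Finset.Icc 1 p).filter (fun i => 2 ≤ a i) := by
      rw [hfe]; exact Finset.mem_Icc.mpr ⟨h1, h2'⟩
    exact (Finset.mem_filter.mp hi).2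
  have key : ∀ i, 1 ≤ i → i ≤ p → (3 ≤ a i ↔ i ≤ b) := by
    intro i h1 hip
    constructor
    · intro h3
      have hsub : Finset.Icc 1 i ⊆ (Finset.Icc 1 p).filter (fun j => 3 ≤ a j) := by
        intro j hj
        rw [Finset.mem_Icc] at hj
        exact Finset.mem_filter.mpr ⟨Finset.mem_Icc.mpr ⟨hj.1, hj.2.trans hip⟩,
          le_trans h3 (hmono j i hj.1 hj.2 hip)⟩
      have hcard := Finset.card_le_card hsub
      rw [Nat.card_Icc] at hcard
      have hcb : ((Finset.Icc 1 p).filter (fun j => 3 ≤ a j)).card = b := by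
        rw [hbdef, seqB]
      omega
    · intro hib
      by_contra h3
      push_neg at h3
      have hsub : (Finset.Icc 1 p).filter (fun j => 3 ≤ a j) ⊆ Finset.Icc 1 (i-1) := by
        intro j hj
        rw [Finset.mem_filter, Finset.mem_Icc] at hj
        rw [Finset.mem_Icc]
        refine ⟨hj.1.1, ?_⟩
        by_contra hji
        push_neg at hji
        have := hmono i j h1 (by omega) hj.1.2
        omega
      have hcard := Finset.card_le_card hsub
      rw [Nat.card_Icc] at hcard
      have hcb : ((Finset.Icc 1 p).filter (fun j => 3 ≤ a j)).card = b := by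
        rw [hbdef, seqB]
      omega
  have h3i : ∀ i, 1 ≤ i → i ≤ b → 3 ≤ a i :=
    fun i h1 hib => (key i h1 (hib.trans hbp)).mpr hib
  have h2i : ∀ i, b+1 ≤ i → i ≤ p → a i = 2 := by
    intro i hbi hip
    have h2' := h2 i (by omega) hip
    have hn : a i < 3 := by
      by_contra hh
      push_neg at hh
      have := (key i (by omega) hip).mp hh
      omega
    omega
  have hbp2 : b + 2 ≤ p := by omega
  have ha'le : ∀ i, i ≤ b → a' i = a i := by
    intro i hi; simp only [ha'def]; rw [if_pos hi]
  have ha'b1 : a' (b+1) = 3 := by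
    simp only [ha'def]; rw [if_neg (by omega)]; simp
  have ha'p : a' p = 1 := by
    simp only [ha'def]; rw [if_neg (by omega), if_neg (by omega)]; simp
  have ha'mid : ∀ i, b+2 ≤ i → i ≤ p - 1 → a' i = 2 := by
    intro i h1' h2'
    simp only [ha'def]; rw [if_neg (by omega), if_neg (by omega), if_neg (by omega)]
  -- counts for a'
  have hA' : seqA p a' = A := by
    rw [hAdef]
    simp only [seqA]
    congr 1
    apply Finset.filter_congr
    intro i hi
    rw [Finset.mem_Icc] at hi
    by_cases hib : i ≤ b
    · rw [ha'le i hib]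
    · have hai : a i = 2 := h2i i (by omega) hi.2
      have hne : a' i ≠ 4 := by
        simp only [ha'def]; rw [if_neg hib]; split_ifs <;> omega
      exact iff_of_false hne (by omega)
  have hB' : seqB p a' = b + 1 := by
    have hfB : (Finset.Icc 1 p).filter (fun i => 3 ≤ a' i) = Finset.Icc 1 (b+1) := by
      ext i
      simp only [Finset.mem_filter, Finset.mem_Icc]
      constructor
      · rintro ⟨⟨hi1, hi2⟩, h3'⟩
        refine ⟨hi1, ?_⟩
        by_contra hh
        push_neg at hh
        rcases eq_or_ne i p with rfl | hip
        · rw [ha'p] at h3'; omega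
        · rw [ha'mid i (by omega) (by omega)] at h3'; omega
      · rintro ⟨hi1, hi2⟩
        refine ⟨⟨hi1, by omega⟩, ?_⟩
        by_cases hib : i ≤ b
        · rw [ha'le i hib]; exact h3i i hi1 hib
        · have : i = b + 1 := by omega
          rw [this, ha'b1]
    rw [seqB, hfB, Nat.card_Icc]
    omega
  have hC' : seqC p a' = p - 1 := by
    have hfC : (Finset.Icc 1 p).filter (fun i => 2 ≤ a' i) = Finset.Icc 1 (p-1) := by
      ext i
      simp only [Finset.mem_filter, Finset.mem_Icc]
      constructor
      · rintro ⟨⟨hi1, hi2⟩, h2'⟩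
        refine ⟨hi1, ?_⟩
        by_contra hh
        push_neg at hh
        have : i = p := by omega
        rw [this, ha'p] at h2'; omega
      · rintro ⟨hi1, hi2⟩
        refine ⟨⟨hi1, by omega⟩, ?_⟩
        by_cases hib : i ≤ b
        · rw [ha'le i hib]; exact h2 i hi1 (by omega)
        · by_cases hib1 : i = b + 1
          · rw [hib1, ha'b1]; omega
          · rw [ha'mid i (by omega) (by omega)]
    rw [seqC, hfC, Nat.card_Icc]
    omega
  -- the sum m
  have hsumZ : ∑ i ∈ Finset.Icc 1 p, (a i : ℤ) = (m : ℤ) := by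
    rw [← Nat.cast_sum]; exact_mod_cast hsum
  have h2part : ∑ i ∈ Finset.Icc (b+1) p, (a i : ℤ) = 2*((p:ℤ) - (b:ℤ)) := by
    have hpt : ∀ i ∈ Finset.Icc (b+1) p, (a i : ℤ) = 2 := by
      intro i hi; rw [Finset.mem_Icc] at hi
      rw [h2i i hi.1 hi.2]; norm_num
    rw [Finset.sum_congr rfl hpt, Finset.sum_const, nsmul_eq_mul, Nat.card_Icc]
    have : ((p + 1 - (b+1) : ℕ) : ℤ) = (p:ℤ) - (b:ℤ) := by omega
    rw [this]; ring
  have h1part : ∑ i ∈ Finset.Icc 1 b, (a i : ℤ) = 3*(b:ℤ) + (A:ℤ) := by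
    have hpt : ∀ i ∈ Finset.Icc 1 b, (a i : ℤ) = 3 + (if a i = 4 then (1:ℤ) else 0) := by
      intro i hi; rw [Finset.mem_Icc] at hi
      have h3 := h3i i hi.1 hi.2
      have h4 := (hbd i (Finset.mem_Icc.mpr ⟨hi.1, by omega⟩)).2
      split_ifs with h <;> omega
    rw [Finset.sum_congr rfl hpt, Finset.sum_add_distrib, Finset.sum_const, nsmul_eq_mul,
      Finset.sum_boole, Nat.card_Icc]
    have hfilter : Finset.filter (fun i => a i = 4) (Finset.Icc 1 b)
        = Finset.filter (fun i => a i = 4) (Finset.Icc 1 p) := by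
      ext i
      simp only [Finset.mem_filter, Finset.mem_Icc]
      constructor
      · rintro ⟨⟨hi1, hi2⟩, h4⟩; exact ⟨⟨hi1, by omega⟩, h4⟩
      · rintro ⟨⟨hi1, hi2⟩, h4⟩
        exact ⟨⟨hi1, (key i hi1 hi2).mp (by omega)⟩, h4⟩
    have hcA : (Finset.filter (fun i => a i = 4) (Finset.Icc 1 p)).card = A := by
      rw [hAdef, seqA]
    rw [hfilter, hcA]
    have : ((b + 1 - 1 : ℕ) : ℤ) = (b:ℤ) := by omega
    rw [this]; ring
  have hm : (m:ℤ) = (A:ℤ) + (b:ℤ) + 2*(c:ℤ) := by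
    have hsplit := mySumIccSplit (fun i => (a i : ℤ)) (by omega : 1 ≤ b + 1) hbp
    rw [hsumZ, h1part, h2part] at hsplit
    have hpc : (p:ℤ) = (c:ℤ) := by exact_mod_cast hp
    rw [hpc] at hsplit
    linarith
  -- S3 for a
  have hS3a : S3 p a =
      (∑ k ∈ Finset.Icc 3 b, (a k : ℤ) * ∑ j ∈ Finset.Icc 2 (k - 1),
          ((a j : ℤ) - 1) * ((j : ℤ) - 1))
      + (2*((c:ℤ)-(b:ℤ))*(∑ j ∈ Finset.Icc 2 b, ((a j : ℤ) - 1) * ((j : ℤ) - 1))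
        + (b:ℤ)*((c:ℤ)-(b:ℤ))*(((c:ℤ)-(b:ℤ))-1)) := by
    simp only [S3, ← hbdef, ← hcdef]
    rw [show Finset.Icc (c+1) p = ∅ from Finset.Icc_eq_empty (by omega),
      Finset.sum_empty, add_zero]
    congr 1
    have hcongr : ∀ k ∈ Finset.Icc (b+1) c, (a k : ℤ) *
        ((∑ j ∈ Finset.Icc 2 b, ((a j : ℤ) - 1) * ((j : ℤ) - 1)) +
          ∑ j ∈ Finset.Icc (b+1) (k - 1), ((a j : ℤ) - 1) * (b : ℤ))
        = 2*((∑ j ∈ Finset.Icc 2 b, ((a j : ℤ) - 1) * ((j : ℤ) - 1))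
            + ((k:ℤ) - (b:ℤ) - 1)*(b:ℤ)) := by
      intro k hk; rw [Finset.mem_Icc] at hk
      have hak : a k = 2 := h2i k hk.1 (by omega)
      have hin : ∑ j ∈ Finset.Icc (b+1) (k-1), ((a j : ℤ) - 1) * (b : ℤ)
          = ((k:ℤ)-(b:ℤ)-1)*(b:ℤ) := by
        have h1 : ∀ j ∈ Finset.Icc (b+1) (k-1), ((a j : ℤ) - 1) * (b : ℤ) = (b:ℤ) := by
          intro j hj; rw [Finset.mem_Icc] at hj
          rw [h2i j hj.1 (by omega)]; push_cast; ring
        rw [Finset.sum_congr rfl h1, Finset.sum_const, nsmul_eq_mul, Nat.card_Icc]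
        have : ((k - 1 + 1 - (b+1) : ℕ) : ℤ) = (k:ℤ)-(b:ℤ)-1 := by omega
        rw [this]
      rw [hak, hin]; push_cast; ring
    rw [Finset.sum_congr rfl hcongr]
    have h := myGaussIcc b (c - b)
      (∑ j ∈ Finset.Icc 2 b, ((a j : ℤ) - 1) * ((j : ℤ) - 1)) (b:ℤ)
    rw [show b + (c - b) = c from by omega] at h
    rw [h, show ((c - b : ℕ):ℤ) = (c:ℤ)-(b:ℤ) from by omega]
  -- S3 pieces for a'
  have hT' : ∑ j ∈ Finset.Icc 2 (b+1), ((a' j : ℤ) - 1) * ((j : ℤ) - 1)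
      = (∑ j ∈ Finset.Icc 2 b, ((a j : ℤ) - 1) * ((j : ℤ) - 1)) + 2*(b:ℤ) := by
    by_cases hb1 : 1 ≤ b
    · rw [Finset.sum_Icc_succ_top (by omega : 2 ≤ b + 1)]
      have hpt : ∀ j ∈ Finset.Icc 2 b, ((a' j : ℤ) - 1) * ((j : ℤ) - 1)
          = ((a j : ℤ) - 1) * ((j : ℤ) - 1) := by
        intro j hj; rw [Finset.mem_Icc] at hj; rw [ha'le j hj.2]
      rw [Finset.sum_congr rfl hpt, ha'b1]
      push_cast; ring
    · have hb0 : b = 0 := by omega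
      rw [hb0]
      rw [Finset.Icc_eq_empty (by omega : ¬ (2:ℕ) ≤ 0 + 1),
        Finset.Icc_eq_empty (by omega : ¬ (2:ℕ) ≤ 0)]
      simp
  have hfirst' : ∑ k ∈ Finset.Icc 3 (b+1), (a' k : ℤ) * ∑ j ∈ Finset.Icc 2 (k - 1),
        ((a' j : ℤ) - 1) * ((j : ℤ) - 1)
      = (∑ k ∈ Finset.Icc 3 b, (a k : ℤ) * ∑ j ∈ Finset.Icc 2 (k - 1),
          ((a j : ℤ) - 1) * ((j : ℤ) - 1))
        + 3*(∑ j ∈ Finset.Icc 2 b, ((a j : ℤ) - 1) * ((j : ℤ) - 1)) := by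
    by_cases hb2 : 2 ≤ b
    · rw [Finset.sum_Icc_succ_top (by omega : 3 ≤ b + 1)]
      congr 1
      · apply Finset.sum_congr rfl
        intro k hk; rw [Finset.mem_Icc] at hk
        rw [ha'le k hk.2]
        congr 1
        apply Finset.sum_congr rfl
        intro j hj; rw [Finset.mem_Icc] at hj
        rw [ha'le j (by omega)]
      · rw [ha'b1, show b + 1 - 1 = b from by omega]
        have hpt : ∀ j ∈ Finset.Icc 2 b, ((a' j : ℤ) - 1) * ((j : ℤ) - 1)
            = ((a j : ℤ) - 1) * ((j : ℤ) - 1) := by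
          intro j hj; rw [Finset.mem_Icc] at hj; rw [ha'le j hj.2]
        rw [Finset.sum_congr rfl hpt]
        push_cast; ring
    · rw [Finset.Icc_eq_empty (by omega : ¬ (3:ℕ) ≤ b + 1),
        Finset.Icc_eq_empty (by omega : ¬ (3:ℕ) ≤ b),
        Finset.Icc_eq_empty (by omega : ¬ (2:ℕ) ≤ b)]
      simp
  have hmid' : ∑ k ∈ Finset.Icc (b+1+1) (p-1), (a' k : ℤ) *
        ((∑ j ∈ Finset.Icc 2 (b+1), ((a' j : ℤ) - 1) * ((j : ℤ) - 1)) +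
          ∑ j ∈ Finset.Icc (b+1+1) (k - 1), ((a' j : ℤ) - 1) * ((b+1 : ℕ) : ℤ))
      = 2*((c:ℤ)-(b:ℤ)-2)*((∑ j ∈ Finset.Icc 2 b, ((a j : ℤ) - 1) * ((j : ℤ) - 1)) + 2*(b:ℤ))
        + ((b:ℤ)+1)*((c:ℤ)-(b:ℤ)-2)*((c:ℤ)-(b:ℤ)-3) := by
    rw [hT']
    have hcongr : ∀ k ∈ Finset.Icc (b+1+1) (p-1), (a' k : ℤ) *
        (((∑ j ∈ Finset.Icc 2 b, ((a j : ℤ) - 1) * ((j : ℤ) - 1)) + 2*(b:ℤ)) +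
          ∑ j ∈ Finset.Icc (b+1+1) (k - 1), ((a' j : ℤ) - 1) * ((b+1 : ℕ) : ℤ))
        = 2*(((∑ j ∈ Finset.Icc 2 b, ((a j : ℤ) - 1) * ((j : ℤ) - 1)) + 2*(b:ℤ))
            + ((k:ℤ) - ((b+1 : ℕ):ℤ) - 1)*((b+1 : ℕ):ℤ)) := by
      intro k hk; rw [Finset.mem_Icc] at hk
      have hak : a' k = 2 := ha'mid k (by omega) hk.2
      have hin : ∑ j ∈ Finset.Icc (b+1+1) (k-1), ((a' j : ℤ) - 1) * ((b+1 : ℕ):ℤ)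
          = ((k:ℤ) - ((b+1 : ℕ):ℤ) - 1)*((b+1 : ℕ):ℤ) := by
        have h1 : ∀ j ∈ Finset.Icc (b+1+1) (k-1), ((a' j : ℤ) - 1) * ((b+1 : ℕ):ℤ)
            = ((b+1 : ℕ):ℤ) := by
          intro j hj; rw [Finset.mem_Icc] at hj
          rw [ha'mid j (by omega) (by omega)]; push_cast; ring
        rw [Finset.sum_congr rfl h1, Finset.sum_const, nsmul_eq_mul, Nat.card_Icc]
        have : ((k - 1 + 1 - (b+1+1) : ℕ) : ℤ) = (k:ℤ) - ((b+1 : ℕ):ℤ) - 1 := by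
          push_cast; omega
        rw [this]
      rw [hak, hin]; push_cast; ring
    rw [Finset.sum_congr rfl hcongr]
    have h := myGaussIcc (b+1) (p - 1 - (b+1))
      ((∑ j ∈ Finset.Icc 2 b, ((a j : ℤ) - 1) * ((j : ℤ) - 1)) + 2*(b:ℤ)) ((b+1 : ℕ):ℤ)
    rw [show (b+1) + (p - 1 - (b+1)) = p - 1 from by omega] at h
    rw [h]
    have h1 : ((p - 1 - (b+1) : ℕ) : ℤ) = (c:ℤ)-(b:ℤ)-2 := by omega
    rw [h1]
    push_cast
    have h2' : ((c:ℤ)-(b:ℤ)-2) - 1 = (c:ℤ)-(b:ℤ)-3 := by ring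
    ring
  have hthird' : ∑ _k ∈ Finset.Icc (p-1+1) p,
        ((∑ j ∈ Finset.Icc 2 (b+1), ((a' j : ℤ) - 1) * ((j : ℤ) - 1)) +
          ∑ j ∈ Finset.Icc (b+1+1) (p-1), ((a' j : ℤ) - 1) * ((b+1 : ℕ) : ℤ))
      = ((∑ j ∈ Finset.Icc 2 b, ((a j : ℤ) - 1) * ((j : ℤ) - 1)) + 2*(b:ℤ))
        + ((c:ℤ)-(b:ℤ)-2)*((b:ℤ)+1) := by
    rw [show p - 1 + 1 = p from by omega, Finset.Icc_self, Finset.sum_singleton, hT']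
    have hin : ∑ j ∈ Finset.Icc (b+1+1) (p-1), ((a' j : ℤ) - 1) * ((b+1 : ℕ):ℤ)
        = ((c:ℤ)-(b:ℤ)-2)*((b:ℤ)+1) := by
      have h1 : ∀ j ∈ Finset.Icc (b+1+1) (p-1), ((a' j : ℤ) - 1) * ((b+1 : ℕ):ℤ)
          = ((b+1 : ℕ):ℤ) := by
        intro j hj; rw [Finset.mem_Icc] at hj
        rw [ha'mid j (by omega) hj.2]; push_cast; ring
      rw [Finset.sum_congr rfl h1, Finset.sum_const, nsmul_eq_mul, Nat.card_Icc]
      have : ((p - 1 + 1 - (b+1+1) : ℕ) : ℤ) = (c:ℤ)-(b:ℤ)-2 := by omega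
      rw [this]; push_cast; ring
    rw [hin]
  have hS3a' : S3 p a' =
      ((∑ k ∈ Finset.Icc 3 b, (a k : ℤ) * ∑ j ∈ Finset.Icc 2 (k - 1),
          ((a j : ℤ) - 1) * ((j : ℤ) - 1))
        + 3*(∑ j ∈ Finset.Icc 2 b, ((a j : ℤ) - 1) * ((j : ℤ) - 1)))
      + (2*((c:ℤ)-(b:ℤ)-2)*((∑ j ∈ Finset.Icc 2 b, ((a j : ℤ) - 1) * ((j : ℤ) - 1)) + 2*(b:ℤ))
        + ((b:ℤ)+1)*((c:ℤ)-(b:ℤ)-2)*((c:ℤ)-(b:ℤ)-3))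
      + (((∑ j ∈ Finset.Icc 2 b, ((a j : ℤ) - 1) * ((j : ℤ) - 1)) + 2*(b:ℤ))
        + ((c:ℤ)-(b:ℤ)-2)*((b:ℤ)+1)) := by
    simp only [S3, hB', hC']
    rw [hfirst', hmid', hthird']
  -- final
  have hdiff : fval m p a' - fval m p a = (c:ℤ) * ((c:ℤ) - (b:ℤ) - 1) := by
    simp only [fval, S1, S2]
    rw [hS3a, hS3a']
    simp only [hA', hB', hC', ← hbdef, ← hcdef, ← hAdef]
    have hpc1 : ((p - 1 : ℕ) : ℤ) = (c:ℤ) - 1 := by omega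
    rw [hpc1]
    push_cast
    linear_combination hm
  refine ⟨hdiff, ?_⟩
  rw [hdiff]
  have h1 : (0:ℤ) ≤ (c:ℤ) := by positivity
  have h2' : (1:ℤ) ≤ (c:ℤ) - (b:ℤ) - 1 := by omega
  nlinarith
end
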